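/- arXiv:math-ph/0007030 — 7 statements merged into one kernel-verified Lean document; each statement's English description precedes it below -/
import Mathlib

section
/- Let k₁, k₂ : ℝ × ℝⁿ × ℝⁿ → ℂ be integrable, and let (s,x,y) be a point at which the iterated integrals ∫_{ℍⁿ} ∫_{t ≤ s} |k₁(h)| |k₂(h⁻¹·(t,x,y))| dt dh converge. Then (A (k₁ ⋆ k₂))(s,x,y) = ((A k₁) ⋆ k₂)(s,x,y) = (k₁ ⋆ (A k₂))(s,x,y), where A acts in the first variable s; that is, the antiderivative A commutes with the group convolution on the Heisenberg group. -/
open MeasureTheory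

noncomputable section

/-- The underlying space of the Heisenberg group `ℍⁿ = ℝ × ℝⁿ × ℝⁿ`. -/
abbrev Hn (n : ℕ) : Type := ℝ × (Fin n → ℝ) × (Fin n → ℝ)

/-- Euclidean inner product on ℝⁿ. -/
def dotR {n : ℕ} (x y : Fin n → ℝ) : ℝ := ∑ j, x j * y j

/-- Group convolution on the Heisenberg group:
`(k₁ ⋆ k₂)(s,x,y) = ∫ k₁(s',x',y') k₂(s − s' + (⟨x,y'⟩ − ⟨x',y⟩)/2, x − x', y − y')`. -/
def hconv {n : ℕ} (k₁ k₂ : Hn n → ℂ) : Hn n → ℂ := fun g =>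
  ∫ h : Hn n, k₁ h *
    k₂ (g.1 - h.1 + (dotR g.2.1 h.2.2 - dotR h.2.1 g.2.2) / 2,
        g.2.1 - h.2.1, g.2.2 - h.2.2)

/-- The antiderivative operator acting in the first variable `s`:
`(A k)(s,x,y) = ∫_{t ≤ s} k(t,x,y) dt`. -/
def AopH {n : ℕ} (k : Hn n → ℂ) : Hn n → ℂ := fun g =>
  ∫ t in Set.Iic g.1, k (t, g.2.1, g.2.2)

/-- The character `e^{i(⟨q,x⟩ + ⟨p,y⟩)}` of the one-dimensional representation `ρ_{(q,p)}`. -/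
def charQP {n : ℕ} (q p : Fin n → ℝ) (g : Hn n) : ℂ :=
  Complex.exp (Complex.I * ((dotR q g.2.1 + dotR p g.2.2 : ℝ) : ℂ))

/-- The one-dimensional representation `ρ_{(q,p)}` applied to an integrable kernel:
`k̂(q,p) = ∫ k(s,x,y) e^{i(⟨q,x⟩ + ⟨p,y⟩)} ds dx dy`. -/
def khat {n : ℕ} (k : Hn n → ℂ) : ((Fin n → ℝ) × (Fin n → ℝ)) → ℂ := fun qp =>
  ∫ g : Hn n, k g * charQP qp.1 qp.2 g

/-- The p-mechanical bracket `⟦k₁,k₂⟧ = A(k₁ ⋆ k₂ − k₂ ⋆ k₁)`. -/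
def pbracket {n : ℕ} (k₁ k₂ : Hn n → ℂ) : Hn n → ℂ :=
  AopH (fun g => hconv k₁ k₂ g - hconv k₂ k₁ g)

/-! ### Auxiliary lemmas -/

section Aux

/-- Translating a half-infinite integral. -/
lemma integral_Iic_shift (f : ℝ → ℂ) (a d : ℝ) :
    ∫ t in Set.Iic (a + d), f t = ∫ t in Set.Iic a, f (t + d) := by
  have h := (measurePreserving_add_right (volume : Measure ℝ) d).setIntegral_preimage_emb
    (measurableEmbedding_addRight d) f (Set.Iic (a + d))
  have hs : (fun t : ℝ => t + d) ⁻¹' Set.Iic (a + d) = Set.Iic a := by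
    ext t; simp
  rw [hs] at h
  exact h.symm

variable {n : ℕ} (x y : Fin n → ℝ) (s : ℝ)

/-- The scalar appearing in the convolution twist. -/
def ccH (x y : Fin n → ℝ) (v : (Fin n → ℝ) × (Fin n → ℝ)) : ℝ :=
  (dotR x v.2 - dotR v.1 y) / 2

lemma measurable_ccH : Measurable (ccH x y) := by
  apply Measurable.div_const
  apply Measurable.sub
  · unfold dotR
    exact Finset.measurable_sum _ fun j _ =>
      measurable_const.mul ((measurable_pi_apply j).comp measurable_snd)
  · unfold dotR
    exact Finset.measurable_sum _ fun j _ =>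
      ((measurable_pi_apply j).comp measurable_fst).mul measurable_const

/-- The rearrangement `((u,v),t) ↦ (v,(u,t))` is measure-preserving. -/
lemma mp_rearrange₁ :
    MeasurePreserving (fun p : Hn n × ℝ => (p.1.2, (p.1.1, p.2)))
      (((volume : Measure ℝ).prod
          (volume : Measure ((Fin n → ℝ) × (Fin n → ℝ)))).prod (volume : Measure ℝ))
      ((volume : Measure ((Fin n → ℝ) × (Fin n → ℝ))).prod
        ((volume : Measure ℝ).prod (volume : Measure ℝ))) :=
  (measurePreserving_prodAssoc _ _ _).comp
    (Measure.measurePreserving_swap.prod (MeasurePreserving.id _))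

/-- The rearrangement `(v,(a,b)) ↦ ((a,v),b)` is measure-preserving. -/
lemma mp_rearrange₂ :
    MeasurePreserving
      (fun p : ((Fin n → ℝ) × (Fin n → ℝ)) × (ℝ × ℝ) => (((p.2.1, p.1) : Hn n), p.2.2))
      ((volume : Measure ((Fin n → ℝ) × (Fin n → ℝ))).prod
        ((volume : Measure ℝ).prod (volume : Measure ℝ)))
      (((volume : Measure ℝ).prod
          (volume : Measure ((Fin n → ℝ) × (Fin n → ℝ)))).prod (volume : Measure ℝ)) :=
  (Measure.measurePreserving_swap.prod (MeasurePreserving.id _)).comp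
    ((measurePreserving_prodAssoc _ _ _).symm MeasurableEquiv.prodAssoc)

/-- The twisting map `e((u,v),t) = ((t - u + c(v), x - v₁, y - v₂), u)` is measure
preserving on `ℍⁿ × ℝ`. -/
lemma mp_twist :
    MeasurePreserving
      (fun p : Hn n × ℝ =>
        (((p.2 - p.1.1 + ccH x y p.1.2, x - p.1.2.1, y - p.1.2.2) : Hn n), p.1.1))
      (volume : Measure (Hn n × ℝ)) (volume : Measure (Hn n × ℝ)) := by
  have m2 : MeasurePreserving (fun q : ℝ × ℝ => (q.2 - q.1, q.1))
      ((volume : Measure ℝ).prod volume) ((volume : Measure ℝ).prod volume) :=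
    (measurePreserving_sub_prod volume volume).comp Measure.measurePreserving_swap
  have m4 : MeasurePreserving
      (fun p : ((Fin n → ℝ) × (Fin n → ℝ)) × (ℝ × ℝ) =>
        ((x - p.1.1, y - p.1.2), (p.2.2 - p.2.1 + ccH x y p.1, p.2.1)))
      ((volume : Measure ((Fin n → ℝ) × (Fin n → ℝ))).prod
        ((volume : Measure ℝ).prod (volume : Measure ℝ)))
      ((volume : Measure ((Fin n → ℝ) × (Fin n → ℝ))).prod
        ((volume : Measure ℝ).prod (volume : Measure ℝ))) := by
    have hf : MeasurePreserving
        (fun v : (Fin n → ℝ) × (Fin n → ℝ) => (x - v.1, y - v.2))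
        (volume : Measure ((Fin n → ℝ) × (Fin n → ℝ)))
        (volume : Measure ((Fin n → ℝ) × (Fin n → ℝ))) :=
      (Measure.measurePreserving_sub_left volume x).prod
        (Measure.measurePreserving_sub_left volume y)
    have hgm : Measurable (Function.uncurry
        (fun (v : (Fin n → ℝ) × (Fin n → ℝ)) (q : ℝ × ℝ) =>
          ((q.2 - q.1 + ccH x y v, q.1) : ℝ × ℝ))) :=
      ((measurable_snd.snd.sub measurable_snd.fst).add
          ((measurable_ccH x y).comp measurable_fst)).prodMk measurable_snd.fst
    have hg : ∀ᵐ v : (Fin n → ℝ) × (Fin n → ℝ)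
        ∂(volume : Measure ((Fin n → ℝ) × (Fin n → ℝ))),
        Measure.map (fun q : ℝ × ℝ => ((q.2 - q.1 + ccH x y v, q.1) : ℝ × ℝ))
          ((volume : Measure ℝ).prod (volume : Measure ℝ))
          = (volume : Measure ℝ).prod (volume : Measure ℝ) := by
      refine Filter.Eventually.of_forall fun v => ?_
      exact (((measurePreserving_add_right volume (ccH x y v)).prod
        (MeasurePreserving.id volume)).comp m2).map_eq
    exact MeasurePreserving.skew_product hf hgm hg
  exact (mp_rearrange₂.comp (m4.comp mp_rearrange₁) : _)

end Aux

/-- The antiderivative `A` (acting in the variable `s`) commutes with the group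
convolution on the Heisenberg group, at every point where the relevant iterated
integrals converge absolutely. -/
theorem antiderivative_commutes_with_heisenberg_convolution
    (n : ℕ) (hn : 1 ≤ n) (k₁ k₂ : Hn n → ℂ)
    (h₁ : Integrable k₁) (h₂ : Integrable k₂)
    (s : ℝ) (x y : Fin n → ℝ)
    (hiter₁ : ∀ᵐ h : Hn n, IntegrableOn
      (fun t : ℝ => ‖k₁ h‖ *
        ‖k₂ (t - h.1 + (dotR x h.2.2 - dotR h.2.1 y) / 2, x - h.2.1, y - h.2.2)‖)
      (Set.Iic s))
    (hiter₂ : Integrable (fun h : Hn n =>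
      ∫ t in Set.Iic s, ‖k₁ h‖ *
        ‖k₂ (t - h.1 + (dotR x h.2.2 - dotR h.2.1 y) / 2, x - h.2.1, y - h.2.2)‖)) :
    AopH (hconv k₁ k₂) (s, x, y) = hconv (AopH k₁) k₂ (s, x, y) ∧
      hconv (AopH k₁) k₂ (s, x, y) = hconv k₁ (AopH k₂) (s, x, y) := by
  classical
  -- the key kernel
  set F : Hn n → ℝ → ℂ := fun h t =>
    k₁ h * k₂ (t - h.1 + (dotR x h.2.2 - dotR h.2.1 y) / 2, x - h.2.1, y - h.2.2) with hF
  set μs : Measure ℝ := volume.restrict (Set.Iic s) with hμs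
  -- measurability of the uncurried kernel
  have qmp_m : Measure.QuasiMeasurePreserving
      (fun p : Hn n × ℝ =>
        ((p.2 - p.1.1 + ccH x y p.1.2, x - p.1.2.1, y - p.1.2.2) : Hn n))
      (volume : Measure (Hn n × ℝ)) (volume : Measure (Hn n)) :=
    Measure.quasiMeasurePreserving_fst.comp (mp_twist x y).quasiMeasurePreserving
  have hFaesm : AEStronglyMeasurable (fun p : Hn n × ℝ => F p.1 p.2)
      ((volume : Measure (Hn n)).prod (volume : Measure ℝ)) := by
    apply AEStronglyMeasurable.mul
    · exact h₁.1.comp_fst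
    · exact h₂.1.comp_quasiMeasurePreserving qmp_m
  have hprodμs : (volume : Measure (Hn n)).prod μs
      = ((volume : Measure (Hn n)).prod (volume : Measure ℝ)).restrict
          (Set.univ ×ˢ Set.Iic s) := by
    rw [← Measure.prod_restrict, Measure.restrict_univ]
  have hFsaesm : AEStronglyMeasurable (fun p : Hn n × ℝ => F p.1 p.2)
      ((volume : Measure (Hn n)).prod μs) := by
    rw [hprodμs]; exact hFaesm.restrict
  -- integrability on ℍⁿ × (−∞, s]
  have hFint : Integrable (fun p : Hn n × ℝ => F p.1 p.2)
      ((volume : Measure (Hn n)).prod μs) := by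
    refine (integrable_prod_iff hFsaesm).2 ⟨?_, ?_⟩
    · filter_upwards [hFsaesm.prodMk_left, hiter₁] with h hsm hint
      refine (integrable_norm_iff hsm).1 ?_
      have : (fun t => ‖F h t‖) = fun t : ℝ =>
          ‖k₁ h‖ * ‖k₂ (t - h.1 + (dotR x h.2.2 - dotR h.2.1 y) / 2,
            x - h.2.1, y - h.2.2)‖ := by
        funext t; simp [hF, norm_mul]
      rw [this]; exact hint
    · have : (fun h : Hn n => ∫ t, ‖F h t‖ ∂μs)
          = fun h : Hn n => ∫ t in Set.Iic s, ‖k₁ h‖ *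
              ‖k₂ (t - h.1 + (dotR x h.2.2 - dotR h.2.1 y) / 2,
                x - h.2.1, y - h.2.2)‖ := by
        funext h
        refine integral_congr_ae (Filter.Eventually.of_forall fun t => ?_)
        simp [hF, norm_mul]
      rw [this]; exact hiter₂
  -- the common value
  set I : ℂ := ∫ h : Hn n, ∫ t in Set.Iic s, F h t with hI
  -- first expression = I by Fubini
  have EA : AopH (hconv k₁ k₂) (s, x, y) = I := by
    have : AopH (hconv k₁ k₂) (s, x, y) = ∫ t in Set.Iic s, ∫ h : Hn n, F h t := rfl
    rw [this, hI]
    exact (integral_integral_swap hFint).symm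
  -- third expression = I by translating the inner integral
  have EC : hconv k₁ (AopH k₂) (s, x, y) = I := by
    have step : ∀ h : Hn n,
        k₁ h * (AopH k₂) (s - h.1 + (dotR x h.2.2 - dotR h.2.1 y) / 2,
          x - h.2.1, y - h.2.2) = ∫ t in Set.Iic s, F h t := by
      intro h
      have e1 : (AopH k₂) (s - h.1 + (dotR x h.2.2 - dotR h.2.1 y) / 2,
          x - h.2.1, y - h.2.2)
          = ∫ t in Set.Iic (s - h.1 + (dotR x h.2.2 - dotR h.2.1 y) / 2),
              k₂ (t, x - h.2.1, y - h.2.2) := rfl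
      have e2 : s - h.1 + (dotR x h.2.2 - dotR h.2.1 y) / 2
          = s + ((dotR x h.2.2 - dotR h.2.1 y) / 2 - h.1) := by ring
      rw [e1, e2, integral_Iic_shift]
      rw [← integral_const_mul]
      refine integral_congr_ae (Filter.Eventually.of_forall fun t => ?_)
      have e3 : t + ((dotR x h.2.2 - dotR h.2.1 y) / 2 - h.1)
          = t - h.1 + (dotR x h.2.2 - dotR h.2.1 y) / 2 := by ring
      rw [hF]; simp only []; rw [e3]
    have : hconv k₁ (AopH k₂) (s, x, y)
        = ∫ h : Hn n, k₁ h * (AopH k₂) (s - h.1 +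
            (dotR x h.2.2 - dotR h.2.1 y) / 2, x - h.2.1, y - h.2.2) := rfl
    rw [this, hI]
    exact integral_congr_ae (Filter.Eventually.of_forall step)
  -- second expression = I via the measure-preserving shear
  have EB : hconv (AopH k₁) k₂ (s, x, y) = I := by
    -- the shear as a measurable equivalence
    let Φe : (Hn n × ℝ) ≃ᵐ (Hn n × ℝ) :=
      { toFun := fun p => (((p.2, p.1.2) : Hn n), p.2 + (s - p.1.1)),
        invFun := fun p => (((p.1.1 + s - p.2, p.1.2) : Hn n), p.1.1),
        left_inv := by
          rintro ⟨⟨u, v⟩, t⟩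
          exact Prod.ext (Prod.ext (by ring) rfl) rfl,
        right_inv := by
          rintro ⟨⟨a, v⟩, b⟩
          exact Prod.ext (Prod.ext rfl rfl) (by ring),
        measurable_toFun := by
          apply Measurable.prodMk
          · exact measurable_snd.prodMk measurable_fst.snd
          · exact measurable_snd.add (measurable_const.sub measurable_fst.fst),
        measurable_invFun := by
          apply Measurable.prodMk
          · exact ((measurable_fst.fst.add_const s).sub measurable_snd).prodMk
              measurable_fst.snd
          · exact measurable_fst.fst }
    have mpΦ : MeasurePreserving (⇑Φe) (volume : Measure (Hn n × ℝ))
        (volume : Measure (Hn n × ℝ)) := by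
      have g_mp : MeasurePreserving (fun q : ℝ × ℝ => (q.2, q.2 + (s - q.1)))
          ((volume : Measure ℝ).prod volume) ((volume : Measure ℝ).prod volume) :=
        (measurePreserving_prod_add volume volume).comp
          (((MeasurePreserving.id volume).prod
              (Measure.measurePreserving_sub_left volume s)).comp
            Measure.measurePreserving_swap)
      exact ((mp_rearrange₂.comp
        (((MeasurePreserving.id (volume : Measure ((Fin n → ℝ) × (Fin n → ℝ)))).prod g_mp).comp mp_rearrange₁)) : _)
    -- the indicator functions
    set φ : Hn n × ℝ → ℂ :=
      (Set.univ ×ˢ Set.Iic s).indicator (fun p : Hn n × ℝ => F p.1 p.2) with hφ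
    have hφint : Integrable φ (volume : Measure (Hn n × ℝ)) := by
      rw [hφ, integrable_indicator_iff (MeasurableSet.univ.prod measurableSet_Iic)]
      have : (volume : Measure (Hn n × ℝ)).restrict (Set.univ ×ˢ Set.Iic s)
          = (volume : Measure (Hn n)).prod μs := by
        rw [hprodμs]; rfl
      unfold IntegrableOn
      rw [this]; exact hFint
    have hψφ : ∀ p : Hn n × ℝ,
        (Set.Iic p.1.1).indicator
          (fun t => k₁ (t, p.1.2.1, p.1.2.2) *
            k₂ (s - p.1.1 + (dotR x p.1.2.2 - dotR p.1.2.1 y) / 2,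
              x - p.1.2.1, y - p.1.2.2)) p.2
        = φ (Φe p) := by
      rintro ⟨⟨u, v⟩, t⟩
      show (Set.Iic u).indicator
          (fun t => k₁ (t, v.1, v.2) *
            k₂ (s - u + (dotR x v.2 - dotR v.1 y) / 2, x - v.1, y - v.2)) t
        = φ ((((t, v) : Hn n), t + (s - u)) : Hn n × ℝ)
      have hmem : ((((t, v) : Hn n), t + (s - u)) : Hn n × ℝ)
          ∈ Set.univ ×ˢ Set.Iic s ↔ t ≤ u := by
        simp only [Set.mem_prod, Set.mem_univ, true_and, Set.mem_Iic]
        constructor <;> intro hh <;> linarith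
      by_cases htu : t ≤ u
      · rw [Set.indicator_of_mem (Set.mem_Iic.2 htu)]
        rw [hφ, Set.indicator_of_mem (hmem.2 htu)]
        show k₁ (t, v.1, v.2) *
            k₂ (s - u + (dotR x v.2 - dotR v.1 y) / 2, x - v.1, y - v.2)
          = k₁ (t, v) *
            k₂ (t + (s - u) - t + (dotR x v.2 - dotR v.1 y) / 2, x - v.1, y - v.2)
        rw [show t + (s - u) - t + (dotR x v.2 - dotR v.1 y) / 2
            = s - u + (dotR x v.2 - dotR v.1 y) / 2 from by ring]
      · rw [Set.indicator_of_notMem (fun hc => htu (Set.mem_Iic.1 hc))]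
        rw [hφ, Set.indicator_of_notMem (fun hc => htu (hmem.1 hc))]
    have hψint : Integrable
        (fun p : Hn n × ℝ =>
          (Set.Iic p.1.1).indicator
            (fun t => k₁ (t, p.1.2.1, p.1.2.2) *
              k₂ (s - p.1.1 + (dotR x p.1.2.2 - dotR p.1.2.1 y) / 2,
                x - p.1.2.1, y - p.1.2.2)) p.2)
        (volume : Measure (Hn n × ℝ)) := by
      have : (fun p : Hn n × ℝ =>
          (Set.Iic p.1.1).indicator
            (fun t => k₁ (t, p.1.2.1, p.1.2.2) *
              k₂ (s - p.1.1 + (dotR x p.1.2.2 - dotR p.1.2.1 y) / 2,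
                x - p.1.2.1, y - p.1.2.2)) p.2) = φ ∘ ⇑Φe := by
        funext p; exact hψφ p
      rw [this]
      exact (mpΦ.integrable_comp_emb Φe.measurableEmbedding).2 hφint
    -- now the chain of equalities
    have st1 : hconv (AopH k₁) k₂ (s, x, y)
        = ∫ h : Hn n, ∫ t in Set.Iic h.1,
            k₁ (t, h.2.1, h.2.2) *
              k₂ (s - h.1 + (dotR x h.2.2 - dotR h.2.1 y) / 2,
                x - h.2.1, y - h.2.2) := by
      refine integral_congr_ae (Filter.Eventually.of_forall fun h => ?_)
      exact (integral_mul_const _ _).symm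
    have st2 : ∀ h : Hn n, (∫ t in Set.Iic h.1,
          k₁ (t, h.2.1, h.2.2) *
            k₂ (s - h.1 + (dotR x h.2.2 - dotR h.2.1 y) / 2,
              x - h.2.1, y - h.2.2))
        = ∫ t : ℝ, (Set.Iic h.1).indicator
            (fun t => k₁ (t, h.2.1, h.2.2) *
              k₂ (s - h.1 + (dotR x h.2.2 - dotR h.2.1 y) / 2,
                x - h.2.1, y - h.2.2)) t := fun h =>
      (integral_indicator measurableSet_Iic).symm
    rw [st1]
    simp_rw [st2]
    have st3 : (∫ h : Hn n, ∫ t : ℝ, (Set.Iic h.1).indicator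
          (fun t => k₁ (t, h.2.1, h.2.2) *
            k₂ (s - h.1 + (dotR x h.2.2 - dotR h.2.1 y) / 2,
              x - h.2.1, y - h.2.2)) t)
        = ∫ p : Hn n × ℝ, (Set.Iic p.1.1).indicator
            (fun t => k₁ (t, p.1.2.1, p.1.2.2) *
              k₂ (s - p.1.1 + (dotR x p.1.2.2 - dotR p.1.2.1 y) / 2,
                x - p.1.2.1, y - p.1.2.2)) p.2 :=
      (integral_prod _ hψint).symm
    rw [st3]
    have st4 : (∫ p : Hn n × ℝ, (Set.Iic p.1.1).indicator
          (fun t => k₁ (t, p.1.2.1, p.1.2.2) *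
            k₂ (s - p.1.1 + (dotR x p.1.2.2 - dotR p.1.2.1 y) / 2,
              x - p.1.2.1, y - p.1.2.2)) p.2)
        = ∫ p : Hn n × ℝ, φ (Φe p) := by
      refine integral_congr_ae (Filter.Eventually.of_forall fun p => ?_)
      exact hψφ p
    rw [st4]
    have st5 : (∫ p : Hn n × ℝ, φ (Φe p)) = ∫ p : Hn n × ℝ, φ p :=
      mpΦ.integral_comp Φe.measurableEmbedding φ
    rw [st5, hφ, integral_indicator (MeasurableSet.univ.prod measurableSet_Iic)]
    have st6 : ((volume : Measure (Hn n × ℝ)).restrict (Set.univ ×ˢ Set.Iic s))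
        = (volume : Measure (Hn n)).prod μs := by
      rw [hprodμs]; rfl
    rw [hI]
    calc ∫ p in Set.univ ×ˢ Set.Iic s, F p.1 p.2 ∂(volume : Measure (Hn n × ℝ))
        = ∫ p : Hn n × ℝ, F p.1 p.2 ∂((volume : Measure (Hn n)).prod μs) := by
          rw [st6]
      _ = ∫ h : Hn n, ∫ t, F h t ∂μs := integral_prod _ hFint
  exact ⟨EA.trans EB.symm, EB.trans EC.symm⟩
end
end

section
/- Let f : ℝ → ℂ be integrable and suppose that A f is also integrable on ℝ. Then for every real ℏ ≠ 0, ∫_ℝ (A f)(s) e^{−i s ℏ} ds = (1/(iℏ)) ∫_ℝ f(s) e^{−i s ℏ} ds; that is, the Fourier transform of the antiderivative A f at a nonzero frequency ℏ equals the Fourier transform of f at ℏ multiplied by 1/(iℏ). -/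
open MeasureTheory Set Filter
open scoped Topology

noncomputable section

/-- The antiderivative operator `(A f)(s) = ∫_{t ≤ s} f(t) dt`. -/
def Aop (f : ℝ → ℂ) : ℝ → ℂ := fun s => ∫ t in Set.Iic s, f t

/-- The Fourier transform of the antiderivative `A f` at a nonzero frequency `ℏ` equals
the Fourier transform of `f` at `ℏ` multiplied by `1/(iℏ)`. -/
theorem fourier_antiderivative_ne_zero
    (f : ℝ → ℂ) (hf : Integrable f) (hAf : Integrable (Aop f)) (ℏ : ℝ) (hℏ : ℏ ≠ 0) :
    (∫ s : ℝ, Aop f s * Complex.exp (-(Complex.I * s * ℏ))) =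
      (1 / (Complex.I * ℏ)) * ∫ s : ℝ, f s * Complex.exp (-(Complex.I * s * ℏ)) := by
  set c : ℂ := -(Complex.I * ℏ) with hc_def
  have hc : c ≠ 0 := by
    simp only [hc_def, neg_ne_zero]
    exact mul_ne_zero Complex.I_ne_zero (by exact_mod_cast hℏ)
  set E : ℝ → ℂ := fun s => Complex.exp (c * s) with hE_def
  have hEeq : ∀ s : ℝ, Complex.exp (-(Complex.I * s * ℏ)) = E s := by
    intro s; simp only [hE_def, hc_def]; congr 1; ring
  have hEcont : Continuous E :=
    Complex.continuous_exp.comp (continuous_const.mul Complex.continuous_ofReal)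
  have hE1 : ∀ s : ℝ, ‖E s‖ = 1 := by
    intro s
    rw [hE_def]
    simp only [Complex.norm_exp]
    have : (c * (s : ℂ)).re = 0 := by
      simp [hc_def, Complex.mul_re]
    rw [this, Real.exp_zero]
  -- integrability of `f * E` and `Aop f * E`
  have hmulE : ∀ g : ℝ → ℂ, Integrable g → Integrable (fun t => g t * E t) := by
    intro g hg
    refine hg.norm.mono' (hg.1.mul hEcont.aestronglyMeasurable) ?_
    filter_upwards with t
    rw [norm_mul, hE1, mul_one]
  have hfE : Integrable (fun t => f t * E t) := hmulE f hf
  have hAfE : Integrable (fun s => Aop f s * E s) := hmulE (Aop f) hAf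
  -- ∫ f = 0
  have htendAop : Tendsto (Aop f) atTop (𝓝 (∫ t, f t)) :=
    (aecover_Iic tendsto_id).integral_tendsto_of_countably_generated hf
  have hint0 : (∫ t, f t) = 0 := by
    by_contra h0
    have hε : 0 < ‖∫ t, f t‖ / 2 := half_pos (norm_pos_iff.mpr h0)
    have hev : ∀ᶠ s in atTop, ‖∫ t, f t‖ / 2 ≤ ‖Aop f s‖ := by
      filter_upwards [htendAop.eventually (Metric.ball_mem_nhds _ hε)] with s hs
      have h1 : ‖Aop f s - ∫ t, f t‖ < ‖∫ t, f t‖ / 2 := by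
        rw [← dist_eq_norm]; exact hs
      have h2 : ‖∫ t, f t‖ - ‖Aop f s‖ ≤ ‖Aop f s - ∫ t, f t‖ := by
        rw [norm_sub_rev]
        exact norm_sub_norm_le _ _
      linarith
    obtain ⟨N, hN⟩ := hev.exists_forall_of_atTop
    have hsub : Ici N ⊆ {s : ℝ | ‖∫ t, f t‖ / 2 ≤ ‖Aop f s‖} := fun s hs => hN s hs
    have hfin := hAf.norm.measure_ge_lt_top hε
    have : (volume : Measure ℝ) (Ici N) < ⊤ := lt_of_le_of_lt (measure_mono hsub) hfin
    simp [Real.volume_Ici] at this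
  -- limits of truncated integrals
  have hcover : AECover (volume : Measure ℝ) atTop (fun R : ℝ => Ioc (-R) R) :=
    aecover_Ioc tendsto_neg_atTop_atBot tendsto_id
  have L0 : Tendsto (fun R : ℝ => ∫ s in Ioc (-R) R, Aop f s * E s) atTop
      (𝓝 (∫ s, Aop f s * E s)) :=
    hcover.integral_tendsto_of_countably_generated hAfE
  have L1 : Tendsto (fun R : ℝ => ∫ t in Ioc (-R) R, f t * E t) atTop
      (𝓝 (∫ t, f t * E t)) :=
    hcover.integral_tendsto_of_countably_generated hfE
  have L2 : Tendsto (fun R : ℝ => ∫ t in Ioc (-R) R, f t) atTop (𝓝 0) := by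
    rw [← hint0]
    exact hcover.integral_tendsto_of_countably_generated hf
  have L3 : Tendsto (fun R : ℝ => ∫ t in Iic (-R), f t) atTop (𝓝 0) := by
    have h1 : Tendsto (fun r : ℝ => ∫ t in Ioi r, f t) atBot (𝓝 (∫ t, f t)) :=
      (aecover_Ioi tendsto_id).integral_tendsto_of_countably_generated hf
    have h2 : Tendsto (fun R : ℝ => ∫ t in Ioi (-R), f t) atTop (𝓝 (∫ t, f t)) :=
      h1.comp tendsto_neg_atTop_atBot
    have h3 : ∀ R : ℝ, (∫ t in Iic (-R), f t) = (∫ t, f t) - ∫ t in Ioi (-R), f t := by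
      intro R
      open intervalIntegral in
      rw [← integral_Iic_add_Ioi (b := -R) (hf.integrableOn) (hf.integrableOn)]
      ring
    simp only [h3]
    have := (tendsto_const_nhds (x := ∫ t, f t) (f := atTop)).sub h2
    simpa [hint0] using this
  -- the key identity for each R ≥ 0
  have key : ∀ R : ℝ, 0 ≤ R →
      (∫ s in Ioc (-R) R, Aop f s * E s) =
        (∫ t in Iic (-R), f t) * ((E R - E (-R)) / c)
          + ∫ t in Ioc (-R) R, f t * ((E R - E t) / c) := by
    intro R hR
    have hRR : (-R : ℝ) ≤ R := neg_le_self hR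
    -- Fubini
    have hF : Integrable (fun z : ℝ × ℝ => (Iic z.1).indicator f z.2 * E z.1)
        ((volume.restrict (Ioc (-R) R)).prod volume) := by
      have hG : Integrable (fun z : ℝ × ℝ => E z.1 * f z.2)
          ((volume.restrict (Ioc (-R) R)).prod volume) :=
        Integrable.mul_prod (hEcont.integrableOn_Ioc) hf
      refine hG.norm.mono' ?_ ?_
      · have hS : MeasurableSet {z : ℝ × ℝ | z.2 ≤ z.1} :=
          measurableSet_le measurable_snd measurable_fst
        have hfun : (fun z : ℝ × ℝ => (Iic z.1).indicator f z.2 * E z.1)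
            = {z : ℝ × ℝ | z.2 ≤ z.1}.indicator (fun z => f z.2 * E z.1) := by
          ext z
          by_cases h : z.2 ≤ z.1 <;>
            simp [Set.indicator, h, Set.mem_Iic]
        rw [hfun]
        exact ((hf.1.comp_quasiMeasurePreserving
          Measure.quasiMeasurePreserving_snd).mul
          ((hEcont.comp continuous_fst).aestronglyMeasurable)).indicator hS
      · filter_upwards with z
        rw [norm_mul, norm_mul, hE1, mul_one, one_mul]
        exact norm_indicator_le_norm_self f z.2
    have h2 : (∫ s in Ioc (-R) R, Aop f s * E s)
        = ∫ t : ℝ, ∫ s in Ioc (-R) R, (Iic s).indicator f t * E s := by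
      have h1 : ∀ s : ℝ, Aop f s * E s = ∫ t, (Iic s).indicator f t * E s := by
        intro s
        rw [integral_mul_const, integral_indicator measurableSet_Iic]
        rfl
      simp_rw [h1]
      exact integral_integral_swap hF
    have h3 : ∀ t : ℝ, (∫ s in Ioc (-R) R, (Iic s).indicator f t * E s)
        = f t * ∫ s in Ioc (-R) R ∩ Ici t, E s := by
      intro t
      have hind : ∀ s : ℝ, (Iic s).indicator f t * E s
          = (Ici t).indicator (fun s => f t * E s) s := by
        intro s
        by_cases h : t ≤ s <;> simp [Set.indicator, h, Set.mem_Iic, Set.mem_Ici]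
      simp_rw [hind]
      rw [setIntegral_indicator measurableSet_Ici, integral_const_mul]
    have h4 : ∀ t : ℝ, (∫ s in Ioc (-R) R ∩ Ici t, E s)
        = if t ≤ R then (E R - E (max t (-R))) / c else 0 := by
      intro t
      rcases le_or_gt t (-R) with h | h
      · have hset : Ioc (-R) R ∩ Ici t = Ioc (-R) R :=
          Set.inter_eq_self_of_subset_left fun s hs => le_trans h (le_of_lt hs.1)
        rw [hset, if_pos (h.trans hRR), ← intervalIntegral.integral_of_le hRR,
          max_eq_right h]
        simp only [hE_def]
        open intervalIntegral in
        rw [integral_exp_mul_complex hc]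
      · rcases le_or_gt t R with h2 | h2
        · have hset : Ioc (-R) R ∩ Ici t = Icc t R := by
            ext s
            simp only [Set.mem_inter_iff, Set.mem_Ioc, Set.mem_Ici, Set.mem_Icc]
            constructor
            · rintro ⟨⟨_, hsR⟩, hts⟩; exact ⟨hts, hsR⟩
            · rintro ⟨hts, hsR⟩; exact ⟨⟨lt_of_lt_of_le h hts, hsR⟩, hts⟩
          rw [hset, if_pos h2, integral_Icc_eq_integral_Ioc,
            ← intervalIntegral.integral_of_le h2, max_eq_left h.le]
          simp only [hE_def]
          open intervalIntegral in
          rw [integral_exp_mul_complex hc]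
        · have hset : Ioc (-R) R ∩ Ici t = ∅ := by
            apply Set.eq_empty_of_forall_notMem
            rintro s ⟨⟨_, hsR⟩, hts⟩
            exact (h2.not_ge (hts.trans hsR))
          rw [hset, if_neg (not_le.mpr h2)]
          simp
    -- put together
    have h5 : (∫ s in Ioc (-R) R, Aop f s * E s)
        = ∫ t in Iic R, f t * ((E R - E (max t (-R))) / c) := by
      rw [h2]
      have : ∀ t : ℝ, (∫ s in Ioc (-R) R, (Iic s).indicator f t * E s)
          = (Iic R).indicator (fun t => f t * ((E R - E (max t (-R))) / c)) t := by
        intro t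
        rw [h3, h4]
        by_cases h : t ≤ R <;> simp [Set.indicator, h, Set.mem_Iic]
      simp_rw [this]
      rw [integral_indicator measurableSet_Iic]
    -- integrability of the combined integrand
    have hgint : Integrable (fun t : ℝ => f t * ((E R - E (max t (-R))) / c)) := by
      have hb : Integrable (fun t : ℝ => ((E R - E (max t (-R))) / c) * f t) := by
        refine hf.bdd_mul (c := (1 + 1) / ‖c‖)
          (((continuous_const.sub
            (hEcont.comp (continuous_id.max continuous_const))).div_const
              c).aestronglyMeasurable) ?_
        filter_upwards with t
        rw [norm_div]
        gcongr
        calc ‖E R - E (max t (-R))‖ ≤ ‖E R‖ + ‖E (max t (-R))‖ := norm_sub_le _ _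
          _ = 1 + 1 := by rw [hE1, hE1]
      exact hb.congr (Filter.Eventually.of_forall fun t => mul_comm _ _)
    rw [h5, ← Set.Iic_union_Ioc_eq_Iic hRR,
      setIntegral_union (Set.Iic_disjoint_Ioc le_rfl) measurableSet_Ioc
        hgint.integrableOn hgint.integrableOn]
    congr 1
    · have : (∫ t in Iic (-R), f t * ((E R - E (max t (-R))) / c))
          = ∫ t in Iic (-R), f t * ((E R - E (-R)) / c) := by
        refine setIntegral_congr_fun measurableSet_Iic fun t ht => ?_
        simp only [Set.mem_Iic] at ht
        rw [max_eq_right ht]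
      rw [this, integral_mul_const]
    · refine setIntegral_congr_fun measurableSet_Ioc fun t ht => ?_
      rw [max_eq_left ht.1.le]
  -- pass to the limit
  have hRHSlim : Tendsto (fun R : ℝ =>
      (∫ t in Iic (-R), f t) * ((E R - E (-R)) / c)
        + ∫ t in Ioc (-R) R, f t * ((E R - E t) / c)) atTop
      (𝓝 (-(1 / c) * ∫ t, f t * E t)) := by
    have hterm1 : Tendsto (fun R : ℝ => (∫ t in Iic (-R), f t) * ((E R - E (-R)) / c))
        atTop (𝓝 0) := by
      apply squeeze_zero_norm (a := fun R => ‖∫ t in Iic (-R), f t‖ * (2 / ‖c‖))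
      · intro R
        rw [norm_mul]
        gcongr
        rw [norm_div]
        gcongr
        calc ‖E R - E (-R)‖ ≤ ‖E R‖ + ‖E (-R)‖ := norm_sub_le _ _
          _ = 2 := by rw [hE1, hE1]; norm_num
      · have := (L3.norm).mul_const (2 / ‖c‖)
        simpa using this
    have hterm2 : Tendsto (fun R : ℝ => ∫ t in Ioc (-R) R, f t * ((E R - E t) / c))
        atTop (𝓝 (-(1 / c) * ∫ t, f t * E t)) := by
      have heq : ∀ R : ℝ, (∫ t in Ioc (-R) R, f t * ((E R - E t) / c))
          = (∫ t in Ioc (-R) R, f t) * (E R / c)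
            - (1 / c) * ∫ t in Ioc (-R) R, f t * E t := by
        intro R
        rw [← integral_mul_const, ← integral_const_mul, ← integral_sub]
        · congr 1; ext t; ring
        · exact (hf.integrableOn.mul_const _)
        · exact ((hmulE f hf).integrableOn.const_mul _)
      simp_rw [heq]
      have ht2a : Tendsto (fun R : ℝ => (∫ t in Ioc (-R) R, f t) * (E R / c)) atTop (𝓝 0) := by
        apply squeeze_zero_norm (a := fun R => ‖∫ t in Ioc (-R) R, f t‖ * (1 / ‖c‖))
        · intro R
          rw [norm_mul, norm_div, hE1]
        · have := (L2.norm).mul_const (1 / ‖c‖)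
          simpa using this
      have ht2b : Tendsto (fun R : ℝ => (1 / c) * ∫ t in Ioc (-R) R, f t * E t) atTop
          (𝓝 ((1 / c) * ∫ t, f t * E t)) := L1.const_mul _
      have := ht2a.sub ht2b
      rw [zero_sub, ← neg_mul] at this
      exact this
    have := hterm1.add hterm2
    rw [zero_add] at this
    exact this
  have hL0' : Tendsto (fun R : ℝ => ∫ s in Ioc (-R) R, Aop f s * E s) atTop
      (𝓝 (-(1 / c) * ∫ t, f t * E t)) := by
    refine Tendsto.congr' ?_ hRHSlim
    filter_upwards [eventually_ge_atTop (0 : ℝ)] with R hR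
    exact (key R hR).symm
  have hfinal : (∫ s, Aop f s * E s) = -(1 / c) * ∫ t, f t * E t :=
    tendsto_nhds_unique L0 hL0'
  simp_rw [hEeq]
  rw [hfinal]
  congr 1
  rw [hc_def]
  field_simp
end
end

section
/- Let f : ℝ → ℂ be integrable, suppose that A f is integrable on ℝ, and suppose that s ↦ s·f(s) is integrable on ℝ. Then the Fourier transform of A f at frequency 0 is given by ∫_ℝ (A f)(s) ds = −∫_ℝ s f(s) ds. -/
open MeasureTheory

noncomputable section

open Set Filter Topology

lemma keyA (f : ℝ → ℂ) (hf : Integrable f) (hsf : Integrable (fun s : ℝ => (s : ℂ) * f s)) :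
    (∫ s in Iic (0:ℝ), ∫ t in Iic s, f t) = -∫ t in Iic (0:ℝ), (t : ℂ) * f t := by
  have hmeas : AEStronglyMeasurable
      (fun p : ℝ × ℝ => (Iic p.1).indicator f p.2)
      ((volume.restrict (Iic 0)).prod volume) := by
    have : (fun p : ℝ × ℝ => (Iic p.1).indicator f p.2)
        = {p : ℝ × ℝ | p.2 ≤ p.1}.indicator (fun p => f p.2) := by
      ext p
      by_cases h : p.2 ≤ p.1 <;> simp [Set.indicator, h]
    rw [this]
    exact (hf.1.comp_snd).indicator (measurableSet_le measurable_snd measurable_fst)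
  have hslice : ∀ t : ℝ, (fun s => (Iic s).indicator f t)
      = (Ici t).indicator (fun _ => f t) := by
    intro t; ext s; by_cases h : t ≤ s <;> simp [Set.indicator, h]
  have hres : ∀ t : ℝ, volume.restrict (Iic (0:ℝ)) (Ici t) = ENNReal.ofReal (0 - t) := by
    intro t
    rw [Measure.restrict_apply measurableSet_Ici, Ici_inter_Iic, Real.volume_Icc]
  have hmax : ∀ t : ℝ, max (0 - t) 0 ≤ |t| := fun t =>
    max_le (by simpa using neg_le_abs t) (abs_nonneg t)
  have hint : Integrable (fun p : ℝ × ℝ => (Iic p.1).indicator f p.2)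
      ((volume.restrict (Iic 0)).prod volume) := by
    rw [integrable_prod_iff' hmeas]
    constructor
    · refine ae_of_all _ fun t => ?_
      rw [hslice t]
      rw [integrable_indicator_iff measurableSet_Ici]
      refine (integrableOn_const_iff).mpr (Or.inr ?_)
      rw [hres t]; exact ENNReal.ofReal_lt_top
    · have heq : ∀ t : ℝ, (∫ s in Iic (0:ℝ), ‖(Iic s).indicator f t‖)
          = max (0 - t) 0 * ‖f t‖ := by
        intro t
        have : (fun s => ‖(Iic s).indicator f t‖)
            = (Ici t).indicator (fun _ => ‖f t‖) := by
          ext s; by_cases h : t ≤ s <;> simp [Set.indicator, h]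
        rw [this, integral_indicator_const _ measurableSet_Ici, measureReal_def, hres t,
          ENNReal.toReal_ofReal', smul_eq_mul]
      have hgood : Integrable (fun t : ℝ => max (0 - t) 0 * ‖f t‖) := by
        refine hsf.norm.mono' ?_ (ae_of_all _ fun t => ?_)
        · exact ((continuous_const.sub continuous_id).max
            continuous_const).aestronglyMeasurable.mul hf.1.norm
        · rw [Real.norm_eq_abs, abs_mul, abs_of_nonneg (le_max_right _ _), abs_norm,
            norm_mul, Complex.norm_real, Real.norm_eq_abs]
          exact mul_le_mul_of_nonneg_right (hmax t) (norm_nonneg _)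
      exact hgood.congr (ae_of_all _ fun t => (heq t).symm)
  have hswap := integral_integral_swap (f := fun s t => (Iic s).indicator f t) hint
  have hL : (∫ s in Iic (0:ℝ), ∫ t, (Iic s).indicator f t)
      = ∫ s in Iic (0:ℝ), ∫ t in Iic s, f t := by
    refine integral_congr_ae (ae_of_all _ fun s => ?_)
    dsimp only
    rw [integral_indicator measurableSet_Iic]
  have hR : (∫ t : ℝ, ∫ s in Iic (0:ℝ), (Iic s).indicator f t)
      = ∫ t : ℝ, (max (0 - t) 0 : ℝ) • f t := by
    refine integral_congr_ae (ae_of_all _ fun t => ?_)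
    dsimp only
    rw [hslice t, integral_indicator_const _ measurableSet_Ici, measureReal_def, hres t,
      ENNReal.toReal_ofReal']
  have hg : Integrable (fun t : ℝ => (max (0 - t) 0 : ℝ) • f t) := by
    refine hsf.norm.mono' ?_ (ae_of_all _ fun t => ?_)
    · exact (((continuous_const.sub continuous_id).max continuous_const).aestronglyMeasurable).smul
        hf.1
    · rw [norm_smul, Real.norm_eq_abs, abs_of_nonneg (le_max_right _ _), norm_mul,
        Complex.norm_real, Real.norm_eq_abs]
      exact mul_le_mul_of_nonneg_right (hmax t) (norm_nonneg _)
  rw [← hL, hswap, hR]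
  rw [← intervalIntegral.integral_Iic_add_Ioi (hg.integrableOn) (hg.integrableOn) (b := (0:ℝ))]
  have h1 : (∫ t in Iic (0:ℝ), (max (0 - t) 0 : ℝ) • f t)
      = ∫ t in Iic (0:ℝ), -((t:ℂ) * f t) := by
    refine setIntegral_congr_fun measurableSet_Iic fun t ht => ?_
    have : max (0 - t) 0 = -t := by
      simp only [zero_sub]; exact max_eq_left (by simpa using ht)
    rw [this, neg_smul, Complex.real_smul]
  have h2 : (∫ t in Ioi (0:ℝ), (max (0 - t) 0 : ℝ) • f t) = 0 := by
    rw [setIntegral_congr_fun measurableSet_Ioi (g := fun _ => (0:ℂ)) fun t ht => ?_]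
    · simp
    · have : max (0 - t) 0 = 0 := max_eq_right (by simp at ht ⊢; linarith)
      rw [this, zero_smul]
  rw [h1, h2, add_zero, integral_neg]

lemma keyB (f : ℝ → ℂ) (hf : Integrable f) (hsf : Integrable (fun s : ℝ => (s : ℂ) * f s)) :
    (∫ s in Ioi (0:ℝ), ∫ t in Ioi s, f t) = ∫ t in Ioi (0:ℝ), (t : ℂ) * f t := by
  have hmeas : AEStronglyMeasurable
      (fun p : ℝ × ℝ => (Ioi p.1).indicator f p.2)
      ((volume.restrict (Ioi 0)).prod volume) := by
    have : (fun p : ℝ × ℝ => (Ioi p.1).indicator f p.2)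
        = {p : ℝ × ℝ | p.1 < p.2}.indicator (fun p => f p.2) := by
      ext p
      by_cases h : p.1 < p.2 <;> simp [Set.indicator, h]
    rw [this]
    exact (hf.1.comp_snd).indicator (measurableSet_lt measurable_fst measurable_snd)
  have hslice : ∀ t : ℝ, (fun s => (Ioi s).indicator f t)
      = (Iio t).indicator (fun _ => f t) := by
    intro t; ext s; by_cases h : s < t <;> simp [Set.indicator, h]
  have hres : ∀ t : ℝ, volume.restrict (Ioi (0:ℝ)) (Iio t) = ENNReal.ofReal (t - 0) := by
    intro t
    rw [Measure.restrict_apply measurableSet_Iio, Iio_inter_Ioi, Real.volume_Ioo]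
  have hmax : ∀ t : ℝ, max (t - 0) 0 ≤ |t| := fun t =>
    max_le (by simpa using le_abs_self t) (abs_nonneg t)
  have hint : Integrable (fun p : ℝ × ℝ => (Ioi p.1).indicator f p.2)
      ((volume.restrict (Ioi 0)).prod volume) := by
    rw [integrable_prod_iff' hmeas]
    constructor
    · refine ae_of_all _ fun t => ?_
      rw [hslice t]
      rw [integrable_indicator_iff measurableSet_Iio]
      refine (integrableOn_const_iff).mpr (Or.inr ?_)
      rw [hres t]; exact ENNReal.ofReal_lt_top
    · have heq : ∀ t : ℝ, (∫ s in Ioi (0:ℝ), ‖(Ioi s).indicator f t‖)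
          = max (t - 0) 0 * ‖f t‖ := by
        intro t
        have : (fun s => ‖(Ioi s).indicator f t‖)
            = (Iio t).indicator (fun _ => ‖f t‖) := by
          ext s; by_cases h : s < t <;> simp [Set.indicator, h]
        rw [this, integral_indicator_const _ measurableSet_Iio, measureReal_def, hres t,
          ENNReal.toReal_ofReal', smul_eq_mul]
      have hgood : Integrable (fun t : ℝ => max (t - 0) 0 * ‖f t‖) := by
        refine hsf.norm.mono' ?_ (ae_of_all _ fun t => ?_)
        · exact ((continuous_id.sub continuous_const).max
            continuous_const).aestronglyMeasurable.mul hf.1.norm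
        · rw [Real.norm_eq_abs, abs_mul, abs_of_nonneg (le_max_right _ _), abs_norm,
            norm_mul, Complex.norm_real, Real.norm_eq_abs]
          exact mul_le_mul_of_nonneg_right (hmax t) (norm_nonneg _)
      exact hgood.congr (ae_of_all _ fun t => (heq t).symm)
  have hswap := integral_integral_swap (f := fun s t => (Ioi s).indicator f t) hint
  have hL : (∫ s in Ioi (0:ℝ), ∫ t, (Ioi s).indicator f t)
      = ∫ s in Ioi (0:ℝ), ∫ t in Ioi s, f t := by
    refine integral_congr_ae (ae_of_all _ fun s => ?_)
    dsimp only
    rw [integral_indicator measurableSet_Ioi]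
  have hR : (∫ t : ℝ, ∫ s in Ioi (0:ℝ), (Ioi s).indicator f t)
      = ∫ t : ℝ, (max (t - 0) 0 : ℝ) • f t := by
    refine integral_congr_ae (ae_of_all _ fun t => ?_)
    dsimp only
    rw [hslice t, integral_indicator_const _ measurableSet_Iio, measureReal_def, hres t,
      ENNReal.toReal_ofReal']
  have hg : Integrable (fun t : ℝ => (max (t - 0) 0 : ℝ) • f t) := by
    refine hsf.norm.mono' ?_ (ae_of_all _ fun t => ?_)
    · exact (((continuous_id.sub continuous_const).max continuous_const).aestronglyMeasurable).smul
        hf.1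
    · rw [norm_smul, Real.norm_eq_abs, abs_of_nonneg (le_max_right _ _), norm_mul,
        Complex.norm_real, Real.norm_eq_abs]
      exact mul_le_mul_of_nonneg_right (hmax t) (norm_nonneg _)
  rw [← hL, hswap, hR]
  rw [← intervalIntegral.integral_Iic_add_Ioi (hg.integrableOn) (hg.integrableOn) (b := (0:ℝ))]
  have h1 : (∫ t in Ioi (0:ℝ), (max (t - 0) 0 : ℝ) • f t)
      = ∫ t in Ioi (0:ℝ), (t:ℂ) * f t := by
    refine setIntegral_congr_fun measurableSet_Ioi fun t ht => ?_
    have : max (t - 0) 0 = t := by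
      simp only [sub_zero]; exact max_eq_left (le_of_lt (by simpa using ht))
    rw [this, Complex.real_smul]
  have h2 : (∫ t in Iic (0:ℝ), (max (t - 0) 0 : ℝ) • f t) = 0 := by
    rw [setIntegral_congr_fun measurableSet_Iic (g := fun _ => (0:ℂ)) fun t ht => ?_]
    · simp
    · have : max (t - 0) 0 = 0 := max_eq_right (by simp at ht ⊢; linarith)
      rw [this, zero_smul]
  rw [h1, h2, zero_add]

/-- The Fourier transform of the antiderivative `A f` at frequency `0`:
`∫_ℝ (A f)(s) ds = −∫_ℝ s f(s) ds`. -/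
theorem fourier_antiderivative_at_zero
    (f : ℝ → ℂ) (hf : Integrable f) (hAf : Integrable (Aop f))
    (hsf : Integrable (fun s : ℝ => (s : ℂ) * f s)) :
    (∫ s : ℝ, Aop f s) = -∫ s : ℝ, (s : ℂ) * f s := by
  have h0 : (∫ t : ℝ, f t) = 0 := by
    have h1 : Tendsto (fun s : ℝ => ∫ t in Iic s, f t) atTop (𝓝 (∫ t, f t)) :=
      (aecover_Iic tendsto_id).integral_tendsto_of_countably_generated hf
    refine IntegrableAtFilter.eq_zero_of_tendsto (hAf.integrableAtFilter atTop) ?_ h1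
    intro s hs
    obtain ⟨a, ha⟩ := mem_atTop_sets.mp hs
    refine top_le_iff.mp ?_
    calc (⊤ : ENNReal) = volume (Ici a) := (Real.volume_Ici).symm
      _ ≤ volume s := measure_mono fun x hx => ha x hx
  have hAeq : ∀ s : ℝ, Aop f s = -∫ t in Ioi s, f t := by
    intro s
    have := intervalIntegral.integral_Iic_add_Ioi (hf.integrableOn) (hf.integrableOn) (b := s)
    rw [h0] at this
    exact eq_neg_of_add_eq_zero_left this
  rw [← intervalIntegral.integral_Iic_add_Ioi (hAf.integrableOn) (hAf.integrableOn) (b := (0:ℝ))]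
  have e1 : (∫ s in Iic (0:ℝ), Aop f s) = -∫ t in Iic (0:ℝ), (t:ℂ) * f t :=
    keyA f hf hsf
  have e2 : (∫ s in Ioi (0:ℝ), Aop f s) = -∫ t in Ioi (0:ℝ), (t:ℂ) * f t := by
    have : (∫ s in Ioi (0:ℝ), Aop f s) = ∫ s in Ioi (0:ℝ), -∫ t in Ioi s, f t :=
      setIntegral_congr_fun measurableSet_Ioi fun s _ => hAeq s
    rw [this, integral_neg, keyB f hf hsf]
  rw [e1, e2, ← neg_add,
    intervalIntegral.integral_Iic_add_Ioi (hsf.integrableOn) (hsf.integrableOn)]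
end
end

section
/- Let f : ℝ → ℂ be integrable and suppose that its antiderivative A f is also integrable on ℝ. Then ∫_ℝ f(t) dt = 0; equivalently, the Fourier transform of f vanishes at the origin. -/
open MeasureTheory Filter

noncomputable section

lemma aux_limit_zero (g : ℝ → ℂ) (hg : Integrable g) (L : ℂ)
    (h : Tendsto g atTop (nhds L)) : L = 0 := by
  by_contra hL
  have hnorm : Tendsto (fun x => ‖g x‖) atTop (nhds ‖L‖) := h.norm
  have hLpos : 0 < ‖L‖ := norm_pos_iff.mpr hL
  have hpos : 0 < ‖L‖ / 2 := by linarith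
  have hev : ∀ᶠ x in atTop, ‖L‖ / 2 ≤ ‖g x‖ := by
    filter_upwards [hnorm.eventually (lt_mem_nhds (show ‖L‖/2 < ‖L‖ by linarith))] with x hx
    linarith
  obtain ⟨a, ha⟩ := eventually_atTop.mp hev
  have hc : IntegrableOn (fun _ : ℝ => (‖L‖/2 : ℝ)) (Set.Ici a) volume := by
    refine Integrable.mono hg.norm.integrableOn aestronglyMeasurable_const ?_
    refine (ae_restrict_iff' measurableSet_Ici).2 (Filter.Eventually.of_forall fun x hx => ?_)
    simpa [Real.norm_eq_abs, abs_of_pos hpos, abs_of_nonneg (norm_nonneg (g x))] using ha x hx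
  rw [integrableOn_const_iff] at hc
  rcases hc with h1 | h2
  · simp [hL] at h1
  · simp [Real.volume_Ici] at h2

/-- If `f` is integrable and its antiderivative `A f` is also integrable on ℝ, then
`∫_ℝ f(t) dt = 0`, i.e. the Fourier transform of `f` vanishes at the origin. -/
theorem integral_eq_zero_of_integrable_antiderivative
    (f : ℝ → ℂ) (hf : Integrable f) (hAf : Integrable (Aop f)) :
    (∫ t : ℝ, f t) = 0 := by
  have hcov : AECover (volume : Measure ℝ) atTop (fun s : ℝ => Set.Iic s) :=
    aecover_Iic tendsto_id
  have htend : Tendsto (Aop f) atTop (nhds (∫ t : ℝ, f t)) :=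
    hcov.integral_tendsto_of_countably_generated hf
  exact (aux_limit_zero (Aop f) hAf _ htend) ▸ rfl
end
end

section
/- Let k₁, k₂ : ℝ × ℝⁿ × ℝⁿ → ℂ be such that (s,x,y) ↦ (1 + |s| + ‖x‖ + ‖y‖) kᵢ(s,x,y) is integrable for i = 1,2. Then for all q, p ∈ ℝⁿ, ∫_{ℍⁿ} s · (k₁ ⋆ k₂ − k₂ ⋆ k₁)(s,x,y) e^{i(⟨q,x⟩ + ⟨p,y⟩)} ds dx dy = Σ_{j=1}^{n} [ (∫ x_j k₁(s,x,y) e^{i(⟨q,x⟩+⟨p,y⟩)} dg) (∫ y_j k₂(s,x,y) e^{i(⟨q,x⟩+⟨p,y⟩)} dg) − (∫ y_j k₁(s,x,y) e^{i(⟨q,x⟩+⟨p,y⟩)} dg) (∫ x_j k₂(s,x,y) e^{i(⟨q,x⟩+⟨p,y⟩)} dg) ], where dg = ds dx dy; the symmetric s-contributions cancel and only the twisting term of the group law survives. -/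
open MeasureTheory

noncomputable section

namespace SWCaux

variable {n : ℕ}

/-- weight -/
def wt (g : Hn n) : ℝ := 1 + |g.1| + ‖g.2.1‖ + ‖g.2.2‖

lemma one_le_wt (g : Hn n) : 1 ≤ wt g := by
  have h1 := abs_nonneg g.1
  have h2 := norm_nonneg g.2.1
  have h3 := norm_nonneg g.2.2
  unfold wt; linarith

lemma wt_pos (g : Hn n) : 0 < wt g := lt_of_lt_of_le one_pos (one_le_wt g)

lemma continuous_wt : Continuous (wt (n := n)) := by
  unfold wt; fun_prop

lemma continuous_dotR_comp {X : Type*} [TopologicalSpace X] {f g : X → Fin n → ℝ}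
    (hf : Continuous f) (hg : Continuous g) : Continuous fun a => dotR (f a) (g a) := by
  unfold dotR
  exact continuous_finset_sum _ fun j _ =>
    ((continuous_apply j).comp hf).mul ((continuous_apply j).comp hg)

lemma continuous_char (q p : Fin n → ℝ) : Continuous (charQP q p) := by
  unfold charQP
  exact Complex.continuous_exp.comp <| continuous_const.mul <|
    Complex.continuous_ofReal.comp <|
      (continuous_dotR_comp continuous_const (continuous_fst.comp continuous_snd)).add
        (continuous_dotR_comp continuous_const (continuous_snd.comp continuous_snd))

lemma norm_char (q p : Fin n → ℝ) (g : Hn n) : ‖charQP q p g‖ = 1 := by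
  unfold charQP
  rw [mul_comm]
  exact Complex.norm_exp_ofReal_mul_I _

lemma abs_dotR_le (x y : Fin n → ℝ) : |dotR x y| ≤ n * (‖x‖ * ‖y‖) := by
  unfold dotR
  calc |∑ j, x j * y j| ≤ ∑ j, |x j * y j| := Finset.abs_sum_le_sum_abs _ _
    _ ≤ ∑ _j : Fin n, ‖x‖ * ‖y‖ := by
        refine Finset.sum_le_sum fun j _ => ?_
        rw [abs_mul]
        have hx : |x j| ≤ ‖x‖ := by
          simpa [Real.norm_eq_abs] using norm_le_pi_norm x j
        have hy : |y j| ≤ ‖y‖ := by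
          simpa [Real.norm_eq_abs] using norm_le_pi_norm y j
        exact mul_le_mul hx hy (abs_nonneg _) (norm_nonneg _)
    _ = n * (‖x‖ * ‖y‖) := by simp [Finset.sum_const, Finset.card_univ]

def hmul (h u : Hn n) : Hn n :=
  (h.1 + u.1 + (dotR h.2.1 u.2.2 - dotR u.2.1 h.2.2) / 2, h.2.1 + u.2.1, h.2.2 + u.2.2)

def hinv (h g : Hn n) : Hn n :=
  (g.1 - h.1 + (dotR g.2.1 h.2.2 - dotR h.2.1 g.2.2) / 2, g.2.1 - h.2.1, g.2.2 - h.2.2)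

lemma dotR_add_left (x x' y : Fin n → ℝ) : dotR (x + x') y = dotR x y + dotR x' y := by
  unfold dotR; simp [add_mul, Finset.sum_add_distrib]

lemma dotR_add_right (x y y' : Fin n → ℝ) : dotR x (y + y') = dotR x y + dotR x y' := by
  unfold dotR; simp [mul_add, Finset.sum_add_distrib]

lemma dotR_sub_left (x x' y : Fin n → ℝ) : dotR (x - x') y = dotR x y - dotR x' y := by
  unfold dotR; simp [sub_mul, Finset.sum_sub_distrib]

lemma dotR_sub_right (x y y' : Fin n → ℝ) : dotR x (y - y') = dotR x y - dotR x y' := by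
  unfold dotR; simp [mul_sub, Finset.sum_sub_distrib]

lemma hinv_hmul (h u : Hn n) : hinv h (hmul h u) = u := by
  unfold hinv hmul
  refine Prod.ext ?_ (Prod.ext ?_ ?_)
  · simp only [dotR_add_left, dotR_add_right]
    ring
  · simp
  · simp

lemma hmul_hinv (h g : Hn n) : hmul h (hinv h g) = g := by
  unfold hinv hmul
  refine Prod.ext ?_ (Prod.ext ?_ ?_)
  · simp only [dotR_sub_left, dotR_sub_right]
    ring
  · simp
  · simp

lemma measurable_dotR_comp {α : Type*} [MeasurableSpace α] {f g : α → Fin n → ℝ}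
    (hf : Measurable f) (hg : Measurable g) : Measurable fun a => dotR (f a) (g a) := by
  unfold dotR
  exact Finset.measurable_sum _ fun j _ =>
    ((measurable_pi_apply j).comp hf).mul ((measurable_pi_apply j).comp hg)

lemma measurable_hmul_uncurry :
    Measurable fun z : Hn n × Hn n => hmul z.1 z.2 := by
  unfold hmul
  refine Measurable.prodMk ?_ (Measurable.prodMk ?_ ?_)
  · exact ((measurable_fst.fst.add measurable_snd.fst).add
      (((measurable_dotR_comp measurable_fst.snd.fst measurable_snd.snd.snd).sub
        (measurable_dotR_comp measurable_snd.snd.fst measurable_fst.snd.snd)).div_const 2))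
  · exact measurable_fst.snd.fst.add measurable_snd.snd.fst
  · exact measurable_fst.snd.snd.add measurable_snd.snd.snd

lemma measurable_hinv_uncurry :
    Measurable fun z : Hn n × Hn n => hinv z.1 z.2 := by
  unfold hinv
  refine Measurable.prodMk ?_ (Measurable.prodMk ?_ ?_)
  · exact ((measurable_snd.fst.sub measurable_fst.fst).add
      (((measurable_dotR_comp measurable_snd.snd.fst measurable_fst.snd.snd).sub
        (measurable_dotR_comp measurable_fst.snd.fst measurable_snd.snd.snd)).div_const 2))
  · exact measurable_snd.snd.fst.sub measurable_fst.snd.fst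
  · exact measurable_snd.snd.snd.sub measurable_fst.snd.snd

/-- shear is measure preserving -/
lemma mp_shear {W : Type*} [MeasureSpace W] [SigmaFinite (volume : Measure W)]
    {f : W → ℝ} (hf : Measurable f) :
    MeasurePreserving (fun z : ℝ × W => (z.1 + f z.2, z.2)) volume volume := by
  rw [show (volume : Measure (ℝ × W)) = (volume : Measure ℝ).prod volume from rfl]
  have h1 : MeasurePreserving (fun z : W × ℝ => (z.1, z.2 + f z.1))
      ((volume : Measure W).prod volume) ((volume : Measure W).prod volume) :=
    MeasurePreserving.skew_product (g := fun w s => s + f w) (MeasurePreserving.id volume)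
      (show Measurable (Function.uncurry fun (w : W) (s : ℝ) => s + f w) from
        measurable_snd.add (hf.comp measurable_fst))
      (Filter.Eventually.of_forall fun w => (measurePreserving_add_right volume (f w)).map_eq)
  have h2 := (Measure.measurePreserving_swap (μ := (volume : Measure W)) (ν := volume)).comp
    (h1.comp (Measure.measurePreserving_swap (μ := (volume : Measure ℝ)) (ν := volume)))
  exact h2

lemma mp_hmul (h : Hn n) : MeasurePreserving (hmul h) volume volume := by
  have hs : MeasurePreserving
      (fun z : ℝ × ((Fin n → ℝ) × (Fin n → ℝ)) =>
        (z.1 + (h.1 + (dotR h.2.1 z.2.2 - dotR z.2.1 h.2.2) / 2), z.2))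
      volume volume :=
    mp_shear (measurable_const.add
      (((measurable_dotR_comp measurable_const measurable_snd).sub
        (measurable_dotR_comp measurable_fst measurable_const)).div_const 2))
  have ht : MeasurePreserving
      (fun z : ℝ × ((Fin n → ℝ) × (Fin n → ℝ)) => (z.1, z.2 + h.2)) volume volume := by
    rw [show (volume : Measure (Hn n)) = (volume : Measure ℝ).prod volume from rfl]
    exact (MeasurePreserving.id volume).prod
      (measurePreserving_add_right ((volume : Measure (Fin n → ℝ)).prod volume) h.2)
  have hcomp := ht.comp hs
  have hfe : ((fun z : ℝ × ((Fin n → ℝ) × (Fin n → ℝ)) => (z.1, z.2 + h.2)) ∘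
      (fun z : ℝ × ((Fin n → ℝ) × (Fin n → ℝ)) =>
        (z.1 + (h.1 + (dotR h.2.1 z.2.2 - dotR z.2.1 h.2.2) / 2), z.2))) = hmul h := by
    funext u
    simp only [Function.comp_apply, hmul, Prod.mk.injEq, Prod.ext_iff, Prod.fst_add, Prod.snd_add]
    refine ⟨by ring, add_comm _ _, add_comm _ _⟩
  rw [← hfe]
  exact hcomp

def hmulEquiv (h : Hn n) : Hn n ≃ᵐ Hn n where
  toFun := hmul h
  invFun := hinv h
  left_inv := hinv_hmul h
  right_inv := hmul_hinv h
  measurable_toFun := measurable_hmul_uncurry.comp (measurable_const.prodMk measurable_id)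
  measurable_invFun := measurable_hinv_uncurry.comp (measurable_const.prodMk measurable_id)

def thetaEquiv : (Hn n × Hn n) ≃ᵐ (Hn n × Hn n) where
  toFun := fun z => (z.1, hmul z.1 z.2)
  invFun := fun z => (z.1, hinv z.1 z.2)
  left_inv := fun z => by simp [hinv_hmul]
  right_inv := fun z => by simp [hmul_hinv]
  measurable_toFun := measurable_fst.prodMk measurable_hmul_uncurry
  measurable_invFun := measurable_fst.prodMk measurable_hinv_uncurry

lemma mp_theta : MeasurePreserving (fun z : Hn n × Hn n => (z.1, hmul z.1 z.2))
    ((volume : Measure (Hn n)).prod volume) ((volume : Measure (Hn n)).prod volume) :=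
  MeasurePreserving.skew_product (MeasurePreserving.id volume) measurable_hmul_uncurry
    (Filter.Eventually.of_forall fun h => (mp_hmul h).map_eq)



section Integrability

variable {n : ℕ}

lemma aesm_of_wt {k : Hn n → ℂ}
    (hk : Integrable (fun g => ((wt g : ℝ) : ℂ) * k g) (volume : Measure (Hn n))) :
    AEStronglyMeasurable k (volume : Measure (Hn n)) := by
  have h1 : Continuous fun g : Hn n => (((wt g : ℝ) : ℂ))⁻¹ := by
    refine Continuous.inv₀ (Complex.continuous_ofReal.comp continuous_wt) fun g => ?_
    exact_mod_cast (wt_pos g).ne'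
  have h2 : k = fun g => (((wt g : ℝ) : ℂ))⁻¹ * (((wt g : ℝ) : ℂ) * k g) := by
    funext g
    rw [← mul_assoc, inv_mul_cancel₀ (by exact_mod_cast (wt_pos g).ne'), one_mul]
  rw [h2]
  exact h1.aestronglyMeasurable.mul hk.1

lemma integrable_mul_wt {k : Hn n → ℂ}
    (hk : Integrable (fun g => ((wt g : ℝ) : ℂ) * k g) (volume : Measure (Hn n)))
    {φ : Hn n → ℂ} (hφc : Continuous φ) (hφ : ∀ g, ‖φ g‖ ≤ wt g) :
    Integrable (fun g => φ g * k g) (volume : Measure (Hn n)) := by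
  refine hk.mono (hφc.aestronglyMeasurable.mul (aesm_of_wt hk))
    (Filter.Eventually.of_forall fun g => ?_)
  rw [norm_mul, norm_mul]
  have h1 : ‖((wt g : ℝ) : ℂ)‖ = wt g := by
    rw [Complex.norm_real, Real.norm_eq_abs, abs_of_pos (wt_pos g)]
  rw [h1]
  exact mul_le_mul_of_nonneg_right (hφ g) (norm_nonneg _)

variable (q p : Fin n → ℝ) {k : Hn n → ℂ}
  (hk : Integrable (fun g => ((wt g : ℝ) : ℂ) * k g) (volume : Measure (Hn n)))

include hk

lemma int_char : Integrable (fun g : Hn n => k g * charQP q p g) (volume : Measure (Hn n)) := by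
  have h := integrable_mul_wt hk (continuous_char q p) (fun g => by
    rw [norm_char]; exact one_le_wt g)
  exact h.congr (Filter.Eventually.of_forall fun g => by ring)

lemma int_s : Integrable (fun g : Hn n => (g.1 : ℂ) * k g * charQP q p g)
    (volume : Measure (Hn n)) := by
  have hc : Continuous fun g : Hn n => (g.1 : ℂ) * charQP q p g :=
    (Complex.continuous_ofReal.comp continuous_fst).mul (continuous_char q p)
  have h := integrable_mul_wt hk hc (fun g => by
    rw [norm_mul, norm_char, mul_one, Complex.norm_real, Real.norm_eq_abs]
    have h1 := norm_nonneg g.2.1; have h2 := norm_nonneg g.2.2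
    unfold wt; linarith)
  exact h.congr (Filter.Eventually.of_forall fun g => by ring)

lemma int_x (j : Fin n) : Integrable (fun g : Hn n => (g.2.1 j : ℂ) * k g * charQP q p g)
    (volume : Measure (Hn n)) := by
  have hc : Continuous fun g : Hn n => (g.2.1 j : ℂ) * charQP q p g :=
    (Complex.continuous_ofReal.comp ((continuous_apply j).comp
      (continuous_fst.comp continuous_snd))).mul (continuous_char q p)
  have h := integrable_mul_wt hk hc (fun g => by
    rw [norm_mul, norm_char, mul_one, Complex.norm_real, Real.norm_eq_abs]
    have h1 := abs_nonneg g.1; have h2 := norm_nonneg g.2.2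
    have h3 : |g.2.1 j| ≤ ‖g.2.1‖ := by
      simpa [Real.norm_eq_abs] using norm_le_pi_norm g.2.1 j
    unfold wt; linarith)
  exact h.congr (Filter.Eventually.of_forall fun g => by ring)

lemma int_y (j : Fin n) : Integrable (fun g : Hn n => (g.2.2 j : ℂ) * k g * charQP q p g)
    (volume : Measure (Hn n)) := by
  have hc : Continuous fun g : Hn n => (g.2.2 j : ℂ) * charQP q p g :=
    (Complex.continuous_ofReal.comp ((continuous_apply j).comp
      (continuous_snd.comp continuous_snd))).mul (continuous_char q p)
  have h := integrable_mul_wt hk hc (fun g => by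
    rw [norm_mul, norm_char, mul_one, Complex.norm_real, Real.norm_eq_abs]
    have h1 := abs_nonneg g.1; have h2 := norm_nonneg g.2.1
    have h3 : |g.2.2 j| ≤ ‖g.2.2‖ := by
      simpa [Real.norm_eq_abs] using norm_le_pi_norm g.2.2 j
    unfold wt; linarith)
  exact h.congr (Filter.Eventually.of_forall fun g => by ring)

end Integrability


section Core

variable {n : ℕ}

lemma continuous_hmul_uncurry :
    Continuous fun z : Hn n × Hn n => hmul z.1 z.2 := by
  unfold hmul
  refine Continuous.prodMk ?_ (Continuous.prodMk ?_ ?_)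
  · exact ((continuous_fst.fst.add continuous_snd.fst).add
      (((continuous_dotR_comp continuous_fst.snd.fst continuous_snd.snd.snd).sub
        (continuous_dotR_comp continuous_snd.snd.fst continuous_fst.snd.snd)).div_const 2))
  · exact continuous_fst.snd.fst.add continuous_snd.snd.fst
  · exact continuous_fst.snd.snd.add continuous_snd.snd.snd

lemma char_hmul (q p : Fin n → ℝ) (h u : Hn n) :
    charQP q p (hmul h u) = charQP q p h * charQP q p u := by
  unfold charQP hmul
  rw [← Complex.exp_add]
  congr 1
  simp only [dotR_add_right]
  push_cast
  ring

lemma abs_hmul_fst_le (h u : Hn n) : |(hmul h u).1| ≤ ((n : ℝ) + 1) * (wt h * wt u) := by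
  have d1 := abs_dotR_le h.2.1 u.2.2
  have d2 := abs_dotR_le u.2.1 h.2.2
  have t1 : |(hmul h u).1| ≤ |h.1| + |u.1| +
      (|dotR h.2.1 u.2.2| + |dotR u.2.1 h.2.2|) / 2 := by
    unfold hmul
    have e1 : |h.1 + u.1 + (dotR h.2.1 u.2.2 - dotR u.2.1 h.2.2) / 2| ≤
        |h.1 + u.1| + |(dotR h.2.1 u.2.2 - dotR u.2.1 h.2.2) / 2| := abs_add_le _ _
    have e2 : |h.1 + u.1| ≤ |h.1| + |u.1| := abs_add_le _ _
    have e3 : |(dotR h.2.1 u.2.2 - dotR u.2.1 h.2.2) / 2| ≤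
        (|dotR h.2.1 u.2.2| + |dotR u.2.1 h.2.2|) / 2 := by
      rw [abs_div, abs_two]
      have := abs_sub (dotR h.2.1 u.2.2) (dotR u.2.1 h.2.2)
      linarith
    calc |h.1 + u.1 + (dotR h.2.1 u.2.2 - dotR u.2.1 h.2.2) / 2| ≤ _ := e1
      _ ≤ _ := by linarith
  have hn0 : (0:ℝ) ≤ n := Nat.cast_nonneg n
  have a1 := abs_nonneg h.1; have a2 := abs_nonneg u.1
  have b1 := norm_nonneg h.2.1; have b2 := norm_nonneg h.2.2
  have c1 := norm_nonneg u.2.1; have c2 := norm_nonneg u.2.2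
  have hwh : wt h = 1 + |h.1| + ‖h.2.1‖ + ‖h.2.2‖ := rfl
  have hwu : wt u = 1 + |u.1| + ‖u.2.1‖ + ‖u.2.2‖ := rfl
  rw [hwh, hwu]
  have hW1 : |h.1| + |u.1| + (‖h.2.1‖ * ‖u.2.2‖ + ‖u.2.1‖ * ‖h.2.2‖) ≤
      (1 + |h.1| + ‖h.2.1‖ + ‖h.2.2‖) * (1 + |u.1| + ‖u.2.1‖ + ‖u.2.2‖) := by
    nlinarith [mul_nonneg a1 a2, mul_nonneg a1 c1, mul_nonneg a1 c2, mul_nonneg b1 a2,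
      mul_nonneg b1 c1, mul_nonneg b2 a2, mul_nonneg b2 c2]
  have hsub : ‖h.2.1‖ * ‖u.2.2‖ + ‖u.2.1‖ * ‖h.2.2‖ ≤
      (1 + |h.1| + ‖h.2.1‖ + ‖h.2.2‖) * (1 + |u.1| + ‖u.2.1‖ + ‖u.2.2‖) := by
    linarith
  have hW2 := mul_le_mul_of_nonneg_left hsub hn0
  have hnn1 : 0 ≤ (n : ℝ) * (‖h.2.1‖ * ‖u.2.2‖) := mul_nonneg hn0 (mul_nonneg b1 c2)
  have hnn2 : 0 ≤ (n : ℝ) * (‖u.2.1‖ * ‖h.2.2‖) := mul_nonneg hn0 (mul_nonneg c1 b2)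
  nlinarith [t1, d1, d2, hW1, hW2, hnn1, hnn2]

/-- the pulled-back integrand -/
def PsiF (q p : Fin n → ℝ) (k₁ k₂ : Hn n → ℂ) : Hn n × Hn n → ℂ := fun z =>
  ((hmul z.1 z.2).1 : ℂ) * charQP q p (hmul z.1 z.2) * (k₁ z.1 * k₂ z.2)

/-- the original double integrand, in (g, h) order swapped to (h, g)?  Here `z = (g, h)`. -/
def PhiF (q p : Fin n → ℝ) (k₁ k₂ : Hn n → ℂ) : Hn n × Hn n → ℂ := fun z =>
  (z.1.1 : ℂ) * charQP q p z.1 * (k₁ z.2 * k₂ (hinv z.2 z.1))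

def rhoEquiv : (Hn n × Hn n) ≃ᵐ (Hn n × Hn n) where
  toFun := fun z => (hmul z.1 z.2, z.1)
  invFun := fun z => (z.2, hinv z.2 z.1)
  left_inv := fun z => by simp [hinv_hmul]
  right_inv := fun z => by simp [hmul_hinv]
  measurable_toFun := measurable_hmul_uncurry.prodMk measurable_fst
  measurable_invFun := measurable_snd.prodMk
    (measurable_hinv_uncurry.comp (measurable_snd.prodMk measurable_fst))

lemma mp_rho : MeasurePreserving (fun z : Hn n × Hn n => (hmul z.1 z.2, z.1))
    ((volume : Measure (Hn n)).prod volume) ((volume : Measure (Hn n)).prod volume) := by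
  exact Measure.measurePreserving_swap.comp mp_theta

lemma phi_comp_rho (q p : Fin n → ℝ) (k₁ k₂ : Hn n → ℂ) (z : Hn n × Hn n) :
    PhiF q p k₁ k₂ (hmul z.1 z.2, z.1) = PsiF q p k₁ k₂ z := by
  simp only [PhiF, PsiF, hinv_hmul]

lemma integrable_Psi (q p : Fin n → ℝ) (k₁ k₂ : Hn n → ℂ)
    (hk₁ : Integrable (fun g => ((wt g : ℝ) : ℂ) * k₁ g) (volume : Measure (Hn n)))
    (hk₂ : Integrable (fun g => ((wt g : ℝ) : ℂ) * k₂ g) (volume : Measure (Hn n))) :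
    Integrable (PsiF q p k₁ k₂) ((volume : Measure (Hn n)).prod volume) := by
  have h0 : Continuous fun z : Hn n × Hn n => hmul z.1 z.2 := continuous_hmul_uncurry
  have hc : Continuous fun z : Hn n × Hn n =>
      ((hmul z.1 z.2).1 : ℂ) * charQP q p (hmul z.1 z.2) :=
    (Complex.continuous_ofReal.comp (continuous_fst.comp h0)).mul
      ((continuous_char q p).comp h0)
  have hmeas : AEStronglyMeasurable (PsiF q p k₁ k₂)
      ((volume : Measure (Hn n)).prod volume) :=
    hc.aestronglyMeasurable.mul ((aesm_of_wt hk₁).comp_fst.mul (aesm_of_wt hk₂).comp_snd)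
  refine Integrable.mono'
    (g := fun z => ((n : ℝ) + 1) *
      (‖((wt z.1 : ℝ) : ℂ) * k₁ z.1‖ * ‖((wt z.2 : ℝ) : ℂ) * k₂ z.2‖))
    ((hk₁.norm.mul_prod hk₂.norm).const_mul _) hmeas
    (Filter.Eventually.of_forall fun z => ?_)
  have e1 : ‖PsiF q p k₁ k₂ z‖ = |(hmul z.1 z.2).1| * (‖k₁ z.1‖ * ‖k₂ z.2‖) := by
    simp only [PsiF, norm_mul, norm_char, mul_one, Complex.norm_real, Real.norm_eq_abs]
  have e2 : ((n : ℝ) + 1) * (‖((wt z.1 : ℝ) : ℂ) * k₁ z.1‖ * ‖((wt z.2 : ℝ) : ℂ) * k₂ z.2‖)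
      = ((n : ℝ) + 1) * (wt z.1 * wt z.2) * (‖k₁ z.1‖ * ‖k₂ z.2‖) := by
    simp only [norm_mul, Complex.norm_real, Real.norm_eq_abs,
      abs_of_pos (wt_pos _)]
    ring
  show ‖PsiF q p k₁ k₂ z‖ ≤ ((n : ℝ) + 1) *
      (‖((wt z.1 : ℝ) : ℂ) * k₁ z.1‖ * ‖((wt z.2 : ℝ) : ℂ) * k₂ z.2‖)
  rw [e1, e2]
  exact mul_le_mul_of_nonneg_right (abs_hmul_fst_le z.1 z.2)
    (mul_nonneg (norm_nonneg _) (norm_nonneg _))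

lemma psi_decomp (q p : Fin n → ℝ) (k₁ k₂ : Hn n → ℂ) (z : Hn n × Hn n) :
    PsiF q p k₁ k₂ z =
      ((z.1.1 : ℂ) * k₁ z.1 * charQP q p z.1) * (k₂ z.2 * charQP q p z.2)
      + (k₁ z.1 * charQP q p z.1) * ((z.2.1 : ℂ) * k₂ z.2 * charQP q p z.2)
      + ∑ j : Fin n,
          ((2⁻¹ : ℂ) * (((z.1.2.1 j : ℂ) * k₁ z.1 * charQP q p z.1) *
            ((z.2.2.2 j : ℂ) * k₂ z.2 * charQP q p z.2))
          - (2⁻¹ : ℂ) * (((z.1.2.2 j : ℂ) * k₁ z.1 * charQP q p z.1) *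
            ((z.2.2.1 j : ℂ) * k₂ z.2 * charQP q p z.2))) := by
  obtain ⟨h, u⟩ := z
  have hsum : (∑ j : Fin n,
      ((2⁻¹ : ℂ) * (((h.2.1 j : ℂ) * k₁ h * charQP q p h) *
        ((u.2.2 j : ℂ) * k₂ u * charQP q p u))
      - (2⁻¹ : ℂ) * (((h.2.2 j : ℂ) * k₁ h * charQP q p h) *
        ((u.2.1 j : ℂ) * k₂ u * charQP q p u))))
      = ((∑ j : Fin n, (h.2.1 j : ℂ) * (u.2.2 j : ℂ))
          - (∑ j : Fin n, (u.2.1 j : ℂ) * (h.2.2 j : ℂ))) *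
        ((2⁻¹ : ℂ) * (k₁ h * charQP q p h * (k₂ u * charQP q p u))) := by
    rw [← Finset.sum_sub_distrib, Finset.sum_mul]
    exact Finset.sum_congr rfl fun j _ => by ring
  show ((hmul h u).1 : ℂ) * charQP q p (hmul h u) * (k₁ h * k₂ u) = _
  rw [hsum, char_hmul]
  show (((h.1 + u.1 + (dotR h.2.1 u.2.2 - dotR u.2.1 h.2.2) / 2 : ℝ)) : ℂ)
      * (charQP q p h * charQP q p u) * (k₁ h * k₂ u) = _
  simp only [dotR]
  push_cast
  ring

end Core


section KeyLemma

variable {n : ℕ}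

lemma key (q p : Fin n → ℝ) (k₁ k₂ : Hn n → ℂ)
    (hk₁ : Integrable (fun g => ((wt g : ℝ) : ℂ) * k₁ g) (volume : Measure (Hn n)))
    (hk₂ : Integrable (fun g => ((wt g : ℝ) : ℂ) * k₂ g) (volume : Measure (Hn n))) :
    Integrable (fun g : Hn n => (g.1 : ℂ) * hconv k₁ k₂ g * charQP q p g)
      (volume : Measure (Hn n)) ∧
    (∫ g : Hn n, (g.1 : ℂ) * hconv k₁ k₂ g * charQP q p g) =
      (∫ g : Hn n, (g.1 : ℂ) * k₁ g * charQP q p g) * (∫ g : Hn n, k₂ g * charQP q p g)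
      + (∫ g : Hn n, k₁ g * charQP q p g) * (∫ g : Hn n, (g.1 : ℂ) * k₂ g * charQP q p g)
      + (2⁻¹ : ℂ) * ∑ j : Fin n,
          ((∫ g : Hn n, (g.2.1 j : ℂ) * k₁ g * charQP q p g) *
              (∫ g : Hn n, (g.2.2 j : ℂ) * k₂ g * charQP q p g)
          - (∫ g : Hn n, (g.2.2 j : ℂ) * k₁ g * charQP q p g) *
              (∫ g : Hn n, (g.2.1 j : ℂ) * k₂ g * charQP q p g)) := by
  have hΨint := integrable_Psi q p k₁ k₂ hk₁ hk₂
  have hΦint : Integrable (PhiF q p k₁ k₂) ((volume : Measure (Hn n)).prod volume) := by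
    refine (mp_rho.integrable_comp_emb (rhoEquiv (n := n)).measurableEmbedding).mp ?_
    exact hΨint.congr (Filter.Eventually.of_forall fun z => (phi_comp_rho q p k₁ k₂ z).symm)
  have hpoint : ∀ g : Hn n, (g.1 : ℂ) * hconv k₁ k₂ g * charQP q p g
      = ∫ h : Hn n, PhiF q p k₁ k₂ (g, h) := by
    intro g
    have h0 : hconv k₁ k₂ g = ∫ h : Hn n, k₁ h * k₂ (hinv h g) := rfl
    rw [h0, show (g.1 : ℂ) * (∫ h : Hn n, k₁ h * k₂ (hinv h g)) * charQP q p g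
        = ((g.1 : ℂ) * charQP q p g) * ∫ h : Hn n, k₁ h * k₂ (hinv h g) from by ring,
      ← integral_const_mul]
    rfl
  have hint1 : Integrable (fun g : Hn n => (g.1 : ℂ) * hconv k₁ k₂ g * charQP q p g)
      (volume : Measure (Hn n)) :=
    hΦint.integral_prod_left.congr (Filter.Eventually.of_forall fun g => (hpoint g).symm)
  refine ⟨hint1, ?_⟩
  have step1 : (∫ g : Hn n, (g.1 : ℂ) * hconv k₁ k₂ g * charQP q p g)
      = ∫ g : Hn n, ∫ h : Hn n, PhiF q p k₁ k₂ (g, h) :=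
    integral_congr_ae (Filter.Eventually.of_forall hpoint)
  have step2 : (∫ g : Hn n, ∫ h : Hn n, PhiF q p k₁ k₂ (g, h))
      = ∫ z : Hn n × Hn n, PhiF q p k₁ k₂ z
          ∂((volume : Measure (Hn n)).prod volume) := by
    exact integral_integral (f := fun g h => PhiF q p k₁ k₂ (g, h)) (by exact hΦint)
  have step3 : (∫ z : Hn n × Hn n, PhiF q p k₁ k₂ z
          ∂((volume : Measure (Hn n)).prod volume))
      = ∫ z : Hn n × Hn n, PsiF q p k₁ k₂ z
          ∂((volume : Measure (Hn n)).prod volume) := by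
    rw [← mp_rho.integral_comp (rhoEquiv (n := n)).measurableEmbedding (PhiF q p k₁ k₂)]
    exact integral_congr_ae (Filter.Eventually.of_forall fun z => phi_comp_rho q p k₁ k₂ z)
  have hA : Integrable (fun z : Hn n × Hn n =>
      ((z.1.1 : ℂ) * k₁ z.1 * charQP q p z.1) * (k₂ z.2 * charQP q p z.2))
      ((volume : Measure (Hn n)).prod volume) :=
    (int_s q p hk₁).mul_prod (int_char q p hk₂)
  have hB : Integrable (fun z : Hn n × Hn n =>
      (k₁ z.1 * charQP q p z.1) * ((z.2.1 : ℂ) * k₂ z.2 * charQP q p z.2))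
      ((volume : Measure (Hn n)).prod volume) :=
    (int_char q p hk₁).mul_prod (int_s q p hk₂)
  have hC : ∀ j : Fin n, Integrable (fun z : Hn n × Hn n =>
      (2⁻¹ : ℂ) * (((z.1.2.1 j : ℂ) * k₁ z.1 * charQP q p z.1) *
        ((z.2.2.2 j : ℂ) * k₂ z.2 * charQP q p z.2)))
      ((volume : Measure (Hn n)).prod volume) := fun j =>
    ((int_x q p hk₁ j).mul_prod (int_y q p hk₂ j)).const_mul _
  have hD : ∀ j : Fin n, Integrable (fun z : Hn n × Hn n =>
      (2⁻¹ : ℂ) * (((z.1.2.2 j : ℂ) * k₁ z.1 * charQP q p z.1) *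
        ((z.2.2.1 j : ℂ) * k₂ z.2 * charQP q p z.2)))
      ((volume : Measure (Hn n)).prod volume) := fun j =>
    ((int_y q p hk₁ j).mul_prod (int_x q p hk₂ j)).const_mul _
  have step4 : (∫ z : Hn n × Hn n, PsiF q p k₁ k₂ z
          ∂((volume : Measure (Hn n)).prod volume))
      = (∫ g : Hn n, (g.1 : ℂ) * k₁ g * charQP q p g) * (∫ g : Hn n, k₂ g * charQP q p g)
      + (∫ g : Hn n, k₁ g * charQP q p g) * (∫ g : Hn n, (g.1 : ℂ) * k₂ g * charQP q p g)
      + ∑ j : Fin n,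
          ((2⁻¹ : ℂ) * ((∫ g : Hn n, (g.2.1 j : ℂ) * k₁ g * charQP q p g) *
              (∫ g : Hn n, (g.2.2 j : ℂ) * k₂ g * charQP q p g))
          - (2⁻¹ : ℂ) * ((∫ g : Hn n, (g.2.2 j : ℂ) * k₁ g * charQP q p g) *
              (∫ g : Hn n, (g.2.1 j : ℂ) * k₂ g * charQP q p g))) := by
    have e0 : (∫ z : Hn n × Hn n, PsiF q p k₁ k₂ z
          ∂((volume : Measure (Hn n)).prod volume))
        = ∫ z : Hn n × Hn n,
            (((z.1.1 : ℂ) * k₁ z.1 * charQP q p z.1) * (k₂ z.2 * charQP q p z.2)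
            + (k₁ z.1 * charQP q p z.1) * ((z.2.1 : ℂ) * k₂ z.2 * charQP q p z.2)
            + ∑ j : Fin n,
                ((2⁻¹ : ℂ) * (((z.1.2.1 j : ℂ) * k₁ z.1 * charQP q p z.1) *
                  ((z.2.2.2 j : ℂ) * k₂ z.2 * charQP q p z.2))
                - (2⁻¹ : ℂ) * (((z.1.2.2 j : ℂ) * k₁ z.1 * charQP q p z.1) *
                  ((z.2.2.1 j : ℂ) * k₂ z.2 * charQP q p z.2))))
            ∂((volume : Measure (Hn n)).prod volume) :=
      integral_congr_ae (Filter.Eventually.of_forall fun z => psi_decomp q p k₁ k₂ z)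
    rw [e0]
    have hAB : Integrable (fun z : Hn n × Hn n =>
        ((z.1.1 : ℂ) * k₁ z.1 * charQP q p z.1) * (k₂ z.2 * charQP q p z.2)
        + (k₁ z.1 * charQP q p z.1) * ((z.2.1 : ℂ) * k₂ z.2 * charQP q p z.2))
        ((volume : Measure (Hn n)).prod volume) := by exact hA.add hB
    have hCD : ∀ j : Fin n, Integrable (fun z : Hn n × Hn n =>
        (2⁻¹ : ℂ) * (((z.1.2.1 j : ℂ) * k₁ z.1 * charQP q p z.1) *
          ((z.2.2.2 j : ℂ) * k₂ z.2 * charQP q p z.2))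
        - (2⁻¹ : ℂ) * (((z.1.2.2 j : ℂ) * k₁ z.1 * charQP q p z.1) *
          ((z.2.2.1 j : ℂ) * k₂ z.2 * charQP q p z.2)))
        ((volume : Measure (Hn n)).prod volume) := fun j => by exact (hC j).sub (hD j)
    have hS : Integrable (fun z : Hn n × Hn n => ∑ j : Fin n,
        ((2⁻¹ : ℂ) * (((z.1.2.1 j : ℂ) * k₁ z.1 * charQP q p z.1) *
          ((z.2.2.2 j : ℂ) * k₂ z.2 * charQP q p z.2))
        - (2⁻¹ : ℂ) * (((z.1.2.2 j : ℂ) * k₁ z.1 * charQP q p z.1) *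
          ((z.2.2.1 j : ℂ) * k₂ z.2 * charQP q p z.2))))
        ((volume : Measure (Hn n)).prod volume) := by
      exact integrable_finset_sum _ fun j _ => hCD j
    have t1 : (∫ z : Hn n × Hn n,
        (((z.1.1 : ℂ) * k₁ z.1 * charQP q p z.1) * (k₂ z.2 * charQP q p z.2)
        + (k₁ z.1 * charQP q p z.1) * ((z.2.1 : ℂ) * k₂ z.2 * charQP q p z.2)
        + ∑ j : Fin n,
            ((2⁻¹ : ℂ) * (((z.1.2.1 j : ℂ) * k₁ z.1 * charQP q p z.1) *
              ((z.2.2.2 j : ℂ) * k₂ z.2 * charQP q p z.2))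
            - (2⁻¹ : ℂ) * (((z.1.2.2 j : ℂ) * k₁ z.1 * charQP q p z.1) *
              ((z.2.2.1 j : ℂ) * k₂ z.2 * charQP q p z.2))))
        ∂((volume : Measure (Hn n)).prod volume))
        = (∫ z : Hn n × Hn n,
            (((z.1.1 : ℂ) * k₁ z.1 * charQP q p z.1) * (k₂ z.2 * charQP q p z.2)
            + (k₁ z.1 * charQP q p z.1) * ((z.2.1 : ℂ) * k₂ z.2 * charQP q p z.2))
            ∂((volume : Measure (Hn n)).prod volume))
          + ∫ z : Hn n × Hn n, (∑ j : Fin n,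
              ((2⁻¹ : ℂ) * (((z.1.2.1 j : ℂ) * k₁ z.1 * charQP q p z.1) *
                ((z.2.2.2 j : ℂ) * k₂ z.2 * charQP q p z.2))
              - (2⁻¹ : ℂ) * (((z.1.2.2 j : ℂ) * k₁ z.1 * charQP q p z.1) *
                ((z.2.2.1 j : ℂ) * k₂ z.2 * charQP q p z.2))))
              ∂((volume : Measure (Hn n)).prod volume) := by
      exact integral_add hAB hS
    have t2 := integral_add (μ := (volume : Measure (Hn n)).prod volume) hA hB
    have t3 := integral_finset_sum (μ := (volume : Measure (Hn n)).prod volume)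
      Finset.univ (fun j _ => hCD j)
    have tA := integral_prod_mul (μ := (volume : Measure (Hn n))) (ν := volume)
      (fun g : Hn n => (g.1 : ℂ) * k₁ g * charQP q p g)
      (fun g : Hn n => k₂ g * charQP q p g)
    have tB := integral_prod_mul (μ := (volume : Measure (Hn n))) (ν := volume)
      (fun g : Hn n => k₁ g * charQP q p g)
      (fun g : Hn n => (g.1 : ℂ) * k₂ g * charQP q p g)
    have tCD : ∀ j : Fin n, (∫ z : Hn n × Hn n,
        ((2⁻¹ : ℂ) * (((z.1.2.1 j : ℂ) * k₁ z.1 * charQP q p z.1) *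
          ((z.2.2.2 j : ℂ) * k₂ z.2 * charQP q p z.2))
        - (2⁻¹ : ℂ) * (((z.1.2.2 j : ℂ) * k₁ z.1 * charQP q p z.1) *
          ((z.2.2.1 j : ℂ) * k₂ z.2 * charQP q p z.2)))
        ∂((volume : Measure (Hn n)).prod volume))
        = (2⁻¹ : ℂ) * ((∫ g : Hn n, (g.2.1 j : ℂ) * k₁ g * charQP q p g) *
            (∫ g : Hn n, (g.2.2 j : ℂ) * k₂ g * charQP q p g))
        - (2⁻¹ : ℂ) * ((∫ g : Hn n, (g.2.2 j : ℂ) * k₁ g * charQP q p g) *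
            (∫ g : Hn n, (g.2.1 j : ℂ) * k₂ g * charQP q p g)) := by
      intro j
      have u1 := integral_sub (hC j) (hD j)
      have u2 := integral_const_mul (μ := (volume : Measure (Hn n)).prod volume) (2⁻¹ : ℂ)
        (fun z : Hn n × Hn n => ((z.1.2.1 j : ℂ) * k₁ z.1 * charQP q p z.1) *
          ((z.2.2.2 j : ℂ) * k₂ z.2 * charQP q p z.2))
      have u3 := integral_const_mul (μ := (volume : Measure (Hn n)).prod volume) (2⁻¹ : ℂ)
        (fun z : Hn n × Hn n => ((z.1.2.2 j : ℂ) * k₁ z.1 * charQP q p z.1) *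
          ((z.2.2.1 j : ℂ) * k₂ z.2 * charQP q p z.2))
      have u4 := integral_prod_mul (μ := (volume : Measure (Hn n))) (ν := volume)
        (fun g : Hn n => (g.2.1 j : ℂ) * k₁ g * charQP q p g)
        (fun g : Hn n => (g.2.2 j : ℂ) * k₂ g * charQP q p g)
      have u5 := integral_prod_mul (μ := (volume : Measure (Hn n))) (ν := volume)
        (fun g : Hn n => (g.2.2 j : ℂ) * k₁ g * charQP q p g)
        (fun g : Hn n => (g.2.1 j : ℂ) * k₂ g * charQP q p g)
      rw [u1, u2, u3, u4, u5]
    rw [t1, t2, t3, tA, tB]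
    congr 1
    exact Finset.sum_congr rfl fun j _ => tCD j
  rw [step1, step2, step3, step4, Finset.mul_sum]
  congr 1
  exact Finset.sum_congr rfl fun j _ => by ring

end KeyLemma

end SWCaux

/-- For kernels with a first-order moment, the `s`-weighted integral of the convolution
commutator against the character `e^{i(⟨q,x⟩+⟨p,y⟩)}`: the symmetric `s`-contributions
cancel and only the twisting term of the group law survives. -/
theorem s_weighted_commutator_integral (n : ℕ) (hn : 1 ≤ n) (k₁ k₂ : Hn n → ℂ)
    (h₁ : Integrable (fun g : Hn n =>
      ((1 + |g.1| + ‖g.2.1‖ + ‖g.2.2‖ : ℝ) : ℂ) * k₁ g))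
    (h₂ : Integrable (fun g : Hn n =>
      ((1 + |g.1| + ‖g.2.1‖ + ‖g.2.2‖ : ℝ) : ℂ) * k₂ g))
    (q p : Fin n → ℝ) :
    (∫ g : Hn n, (g.1 : ℂ) * (hconv k₁ k₂ g - hconv k₂ k₁ g) * charQP q p g) =
      ∑ j : Fin n,
        ((∫ g : Hn n, (g.2.1 j : ℂ) * k₁ g * charQP q p g) *
            (∫ g : Hn n, (g.2.2 j : ℂ) * k₂ g * charQP q p g) -
          (∫ g : Hn n, (g.2.2 j : ℂ) * k₁ g * charQP q p g) *
            (∫ g : Hn n, (g.2.1 j : ℂ) * k₂ g * charQP q p g)) := by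
  have hk₁ : Integrable (fun g : Hn n => ((SWCaux.wt g : ℝ) : ℂ) * k₁ g)
      (volume : Measure (Hn n)) := h₁
  have hk₂ : Integrable (fun g : Hn n => ((SWCaux.wt g : ℝ) : ℂ) * k₂ g)
      (volume : Measure (Hn n)) := h₂
  obtain ⟨i12, e12⟩ := SWCaux.key q p k₁ k₂ hk₁ hk₂
  obtain ⟨i21, e21⟩ := SWCaux.key q p k₂ k₁ hk₂ hk₁
  have hsplit : (∫ g : Hn n, (g.1 : ℂ) * (hconv k₁ k₂ g - hconv k₂ k₁ g) * charQP q p g)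
      = (∫ g : Hn n, (g.1 : ℂ) * hconv k₁ k₂ g * charQP q p g)
        - ∫ g : Hn n, (g.1 : ℂ) * hconv k₂ k₁ g * charQP q p g := by
    rw [← integral_sub i12 i21]
    exact integral_congr_ae (Filter.Eventually.of_forall fun g => by ring)
  rw [hsplit, e12, e21]
  have hswap : ∀ j ∈ Finset.univ, (∫ g : Hn n, (g.2.1 j : ℂ) * k₂ g * charQP q p g) *
        (∫ g : Hn n, (g.2.2 j : ℂ) * k₁ g * charQP q p g) -
      (∫ g : Hn n, (g.2.2 j : ℂ) * k₂ g * charQP q p g) *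
        (∫ g : Hn n, (g.2.1 j : ℂ) * k₁ g * charQP q p g)
      = -((∫ g : Hn n, (g.2.1 j : ℂ) * k₁ g * charQP q p g) *
            (∫ g : Hn n, (g.2.2 j : ℂ) * k₂ g * charQP q p g) -
          (∫ g : Hn n, (g.2.2 j : ℂ) * k₁ g * charQP q p g) *
            (∫ g : Hn n, (g.2.1 j : ℂ) * k₂ g * charQP q p g)) := fun j _ => by ring
  rw [Finset.sum_congr rfl hswap, Finset.sum_neg_distrib]
  ring
end
end

section
/- Let k₁, k₂ : ℝ × ℝⁿ × ℝⁿ → ℂ be such that (s,x,y) ↦ (1 + |s| + ‖x‖ + ‖y‖) kᵢ(s,x,y) is integrable for i = 1,2, and assume that A(k₁ ⋆ k₂ − k₂ ⋆ k₁) is integrable on ℝ × ℝⁿ × ℝⁿ. Then for all q, p ∈ ℝⁿ the functions k̂₁ and k̂₂ are differentiable in (q,p) and ∫_{ℍⁿ} ⟦k₁,k₂⟧(s,x,y) e^{i(⟨q,x⟩ + ⟨p,y⟩)} ds dx dy = {k̂₁, k̂₂}(q,p) := Σ_{j=1}^{n} ( ∂k̂₁/∂q_j · ∂k̂₂/∂p_j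 − ∂k̂₁/∂p_j · ∂k̂₂/∂q_j )(q,p); that is, the image of the p-mechanical bracket under the one-dimensional representation ρ_{(q,p)} is the Poisson bracket of the corresponding classical observables. -/
set_option maxHeartbeats 1000000


open MeasureTheory

noncomputable section

namespace PB

open Complex Filter Set

variable {n : ℕ}

/-! ### dotR basics -/

lemma dotR_add_left (x x' y : Fin n → ℝ) : dotR (x + x') y = dotR x y + dotR x' y := by
  simp [dotR, add_mul, Finset.sum_add_distrib]

lemma dotR_add_right (x y y' : Fin n → ℝ) : dotR x (y + y') = dotR x y + dotR x y' := by
  simp [dotR, mul_add, Finset.sum_add_distrib]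

lemma dotR_zero_left (y : Fin n → ℝ) : dotR 0 y = 0 := by simp [dotR]

lemma dotR_single (j : Fin n) (x : Fin n → ℝ) : dotR (Pi.single j 1) x = x j := by
  simp [dotR, Pi.single_apply]

lemma continuous_dotR2 {α : Type*} [TopologicalSpace α] {f g : α → Fin n → ℝ}
    (hf : Continuous f) (hg : Continuous g) : Continuous fun a => dotR (f a) (g a) := by
  unfold dotR
  exact continuous_finset_sum _ fun j _ =>
    ((continuous_apply j).comp hf).mul ((continuous_apply j).comp hg)

lemma abs_dotR_le (x y : Fin n → ℝ) : |dotR x y| ≤ n * (‖x‖ * ‖y‖) := by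
  calc |dotR x y| ≤ ∑ j, |x j * y j| := Finset.abs_sum_le_sum_abs _ _
    _ ≤ ∑ _j : Fin n, ‖x‖ * ‖y‖ := by
        refine Finset.sum_le_sum fun j _ => ?_
        rw [abs_mul]
        have hx : |x j| ≤ ‖x‖ := by
          simpa [Real.norm_eq_abs] using norm_le_pi_norm x j
        have hy : |y j| ≤ ‖y‖ := by
          simpa [Real.norm_eq_abs] using norm_le_pi_norm y j
        exact mul_le_mul hx hy (abs_nonneg _) (norm_nonneg _)
    _ = n * (‖x‖ * ‖y‖) := by simp [mul_comm]

/-! ### group operations -/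

def hmul (h g : Hn n) : Hn n :=
  (h.1 + g.1 + (dotR h.2.1 g.2.2 - dotR g.2.1 h.2.2) / 2, h.2.1 + g.2.1, h.2.2 + g.2.2)

def hinvmul (h g : Hn n) : Hn n :=
  (g.1 - h.1 + (dotR g.2.1 h.2.2 - dotR h.2.1 g.2.2) / 2, g.2.1 - h.2.1, g.2.2 - h.2.2)

lemma hconv_def (k₁ k₂ : Hn n → ℂ) : hconv k₁ k₂ = fun g => ∫ h, k₁ h * k₂ (hinvmul h g) := rfl

lemma hinvmul_hmul (h g : Hn n) : hinvmul h (hmul h g) = g := by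
  unfold hinvmul hmul
  ext <;> simp [dotR_add_left, dotR_add_right] <;> ring

lemma hmul_hinvmul (h g : Hn n) : hmul h (hinvmul h g) = g := by
  unfold hinvmul hmul
  ext <;> simp [dotR_add_left, dotR_add_right, dotR] <;> ring_nf <;>
    simp [Finset.sum_sub_distrib, mul_comm, sub_mul, mul_sub] <;> ring

lemma continuous_hmul : Continuous (fun z : Hn n × Hn n => hmul z.1 z.2) := by
  unfold hmul
  have cd1 : Continuous fun z : Hn n × Hn n => dotR z.1.2.1 z.2.2.2 :=
    continuous_dotR2 (by fun_prop) (by fun_prop)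
  have cd2 : Continuous fun z : Hn n × Hn n => dotR z.2.2.1 z.1.2.2 :=
    continuous_dotR2 (by fun_prop) (by fun_prop)
  refine Continuous.prodMk ?_ (Continuous.prodMk (by fun_prop) (by fun_prop))
  exact ((continuous_fst.fst.add continuous_snd.fst).add ((cd1.sub cd2).div_const 2))

/-! ### weight -/

def wt (g : Hn n) : ℝ := 1 + |g.1| + ‖g.2.1‖ + ‖g.2.2‖

lemma one_le_wt (g : Hn n) : 1 ≤ wt g := by
  unfold wt
  have := abs_nonneg g.1; have := norm_nonneg g.2.1; have := norm_nonneg g.2.2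
  linarith

lemma wt_pos (g : Hn n) : 0 < wt g := lt_of_lt_of_le one_pos (one_le_wt g)

lemma continuous_wt : Continuous (wt (n := n)) := by
  unfold wt; fun_prop

lemma wt_mul_wt_nonneg (h g : Hn n) : 0 ≤ wt h * wt g :=
  mul_nonneg (wt_pos h).le (wt_pos g).le

lemma abs_fst_hmul_le (h g : Hn n) : |(hmul h g).1| ≤ (n + 2) * (wt h * wt g) := by
  have h1 : |h.1| ≤ wt h := by
    unfold wt; have := norm_nonneg h.2.1; have := norm_nonneg h.2.2; linarith
  have h2 : |g.1| ≤ wt g := by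
    unfold wt; have := norm_nonneg g.2.1; have := norm_nonneg g.2.2; linarith
  have hx1 : ‖h.2.1‖ ≤ wt h := by
    unfold wt; have := abs_nonneg h.1; have := norm_nonneg h.2.2; linarith
  have hy1 : ‖h.2.2‖ ≤ wt h := by
    unfold wt; have := abs_nonneg h.1; have := norm_nonneg h.2.1; linarith
  have hx2 : ‖g.2.1‖ ≤ wt g := by
    unfold wt; have := abs_nonneg g.1; have := norm_nonneg g.2.2; linarith
  have hy2 : ‖g.2.2‖ ≤ wt g := by
    unfold wt; have := abs_nonneg g.1; have := norm_nonneg g.2.1; linarith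
  have hw1 : 1 ≤ wt h := one_le_wt h
  have hw2 : 1 ≤ wt g := one_le_wt g
  have d1 : |dotR h.2.1 g.2.2| ≤ n * (wt h * wt g) := by
    refine (abs_dotR_le _ _).trans ?_
    have : ‖h.2.1‖ * ‖g.2.2‖ ≤ wt h * wt g :=
      mul_le_mul hx1 hy2 (norm_nonneg _) (wt_pos h).le
    nlinarith [Nat.cast_nonneg (α := ℝ) n]
  have d2 : |dotR g.2.1 h.2.2| ≤ n * (wt h * wt g) := by
    refine (abs_dotR_le _ _).trans ?_
    have : ‖g.2.1‖ * ‖h.2.2‖ ≤ wt g * wt h :=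
      mul_le_mul hx2 hy1 (norm_nonneg _) (wt_pos g).le
    nlinarith [Nat.cast_nonneg (α := ℝ) n]
  have e1 : |h.1| ≤ wt h * wt g := h1.trans (by nlinarith)
  have e2 : |g.1| ≤ wt h * wt g := h2.trans (by nlinarith)
  calc |(hmul h g).1| ≤ |h.1| + |g.1| + (|dotR h.2.1 g.2.2| + |dotR g.2.1 h.2.2|) / 2 := by
        unfold hmul
        simp only
        calc |h.1 + g.1 + (dotR h.2.1 g.2.2 - dotR g.2.1 h.2.2) / 2|
            ≤ |h.1 + g.1| + |(dotR h.2.1 g.2.2 - dotR g.2.1 h.2.2) / 2| := abs_add_le _ _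
          _ ≤ |h.1| + |g.1| + (|dotR h.2.1 g.2.2| + |dotR g.2.1 h.2.2|) / 2 := by
              have e := abs_add_le h.1 g.1
              have e2 := abs_sub (dotR h.2.1 g.2.2) (dotR g.2.1 h.2.2)
              have e3 : |(dotR h.2.1 g.2.2 - dotR g.2.1 h.2.2) / 2|
                  = |dotR h.2.1 g.2.2 - dotR g.2.1 h.2.2| / 2 := by
                rw [abs_div, (abs_two : |(2:ℝ)| = 2)]
              linarith
    _ ≤ (n + 2) * (wt h * wt g) := by nlinarith [wt_mul_wt_nonneg h g]

/-! ### measure preserving maps -/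

instance : (volume : Measure ((Fin n → ℝ) × (Fin n → ℝ))).IsAddLeftInvariant := by
  rw [Measure.volume_eq_prod]; infer_instance

instance : (volume : Measure ((Fin n → ℝ) × (Fin n → ℝ))).IsAddRightInvariant := by
  rw [Measure.volume_eq_prod]; infer_instance

instance : (volume : Measure (Hn n)).IsAddLeftInvariant := by
  rw [Measure.volume_eq_prod]; infer_instance


lemma measurePreserving_shear (L : ((Fin n → ℝ) × (Fin n → ℝ)) → ℝ) (hL : Measurable L) :
    MeasurePreserving (fun g : Hn n => (g.1 + L g.2, g.2)) volume volume := by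
  rw [Measure.volume_eq_prod]
  have h1 : MeasurePreserving
      (fun p : ((Fin n → ℝ) × (Fin n → ℝ)) × ℝ => (p.1, p.2 + L p.1))
      ((volume : Measure ((Fin n → ℝ) × (Fin n → ℝ))).prod (volume : Measure ℝ))
      ((volume : Measure ((Fin n → ℝ) × (Fin n → ℝ))).prod (volume : Measure ℝ)) :=
    (MeasurePreserving.id _).skew_product (g := fun w s => s + L w)
      (by exact measurable_snd.add (hL.comp measurable_fst))
      (Filter.Eventually.of_forall fun w => (measurePreserving_add_right volume (L w)).map_eq)
  have heq : (fun g : ℝ × ((Fin n → ℝ) × (Fin n → ℝ)) => (g.1 + L g.2, g.2))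
      = Prod.swap ∘ (fun p : ((Fin n → ℝ) × (Fin n → ℝ)) × ℝ => (p.1, p.2 + L p.1))
        ∘ Prod.swap := rfl
  rw [heq]
  exact Measure.measurePreserving_swap.comp (h1.comp Measure.measurePreserving_swap)

lemma measurePreserving_hmul_left (h : Hn n) :
    MeasurePreserving (fun g => hmul h g) (volume : Measure (Hn n)) volume := by
  have hL : Measurable (fun w : (Fin n → ℝ) × (Fin n → ℝ) =>
      (dotR h.2.1 w.2 - dotR w.1 h.2.2) / 2) :=
    (((continuous_dotR2 continuous_const continuous_snd).sub
      (continuous_dotR2 continuous_fst continuous_const)).div_const 2).measurable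
  have hshear := measurePreserving_shear _ hL
  have htrans : MeasurePreserving (fun g : Hn n => h + g) volume volume :=
    measurePreserving_add_left volume h
  have heq : (fun g : Hn n => hmul h g)
      = (fun g : Hn n => h + g) ∘
        (fun g : Hn n => (g.1 + (dotR h.2.1 g.2.2 - dotR g.2.1 h.2.2) / 2, g.2)) := by
    funext g
    unfold hmul
    simp only [Function.comp_apply]
    ext <;> simp [Prod.fst_add, Prod.snd_add, Pi.add_apply] <;> ring
  rw [heq]
  exact htrans.comp hshear

lemma continuous_hinvmul_swap : Continuous (fun w : Hn n × Hn n => hinvmul w.2 w.1) := by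
  unfold hinvmul
  have cd1 : Continuous fun w : Hn n × Hn n => dotR w.1.2.1 w.2.2.2 :=
    continuous_dotR2 (by fun_prop) (by fun_prop)
  have cd2 : Continuous fun w : Hn n × Hn n => dotR w.2.2.1 w.1.2.2 :=
    continuous_dotR2 (by fun_prop) (by fun_prop)
  refine Continuous.prodMk ?_ (Continuous.prodMk (by fun_prop) (by fun_prop))
  exact ((continuous_fst.fst.sub continuous_snd.fst).add ((cd1.sub cd2).div_const 2))

/-- The homeomorphism `(h, g) ↦ (h·g, h)` of `ℍⁿ × ℍⁿ`. -/
def psiE : (Hn n × Hn n) ≃ₜ (Hn n × Hn n) where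
  toFun := fun z => (hmul z.1 z.2, z.1)
  invFun := fun w => (w.2, hinvmul w.2 w.1)
  left_inv := fun z => by simp [hinvmul_hmul]
  right_inv := fun w => by simp [hmul_hinvmul]
  continuous_toFun := continuous_hmul.prodMk continuous_fst
  continuous_invFun := continuous_snd.prodMk continuous_hinvmul_swap

lemma measurePreserving_psi :
    MeasurePreserving (⇑(psiE (n := n))) volume volume := by
  have h2 : MeasurePreserving (fun z : Hn n × Hn n => (z.1, hmul z.1 z.2))
      ((volume : Measure (Hn n)).prod volume) ((volume : Measure (Hn n)).prod volume) :=
    (MeasurePreserving.id _).skew_product (g := fun h g => hmul h g)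
      (by exact continuous_hmul.measurable)
      (Filter.Eventually.of_forall fun h => (measurePreserving_hmul_left h).map_eq)
  rw [Measure.volume_eq_prod]
  have heq : ⇑(psiE (n := n)) = Prod.swap ∘ (fun z : Hn n × Hn n => (z.1, hmul z.1 z.2)) := rfl
  rw [heq]
  exact Measure.measurePreserving_swap.comp h2

lemma measurableEmbedding_psi : MeasurableEmbedding (⇑(psiE (n := n))) :=
  (psiE (n := n)).toMeasurableEquiv.measurableEmbedding

lemma integrable_comp_psi {F : Hn n × Hn n → ℂ} :
    Integrable (fun z : Hn n × Hn n => F (hmul z.1 z.2, z.1)) volume ↔ Integrable F volume :=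
  measurePreserving_psi.integrable_comp_emb measurableEmbedding_psi

lemma integral_comp_psi (F : Hn n × Hn n → ℂ) :
    ∫ z : Hn n × Hn n, F (hmul z.1 z.2, z.1) = ∫ z : Hn n × Hn n, F z :=
  measurePreserving_psi.integral_comp measurableEmbedding_psi F

/-! ### integrability from the weight -/

variable {k k₁ k₂ : Hn n → ℂ}

lemma aesm_of_wtd (hk : Integrable (fun g : Hn n => ((wt g : ℝ) : ℂ) * k g)) :
    AEStronglyMeasurable k (volume : Measure (Hn n)) := by
  have h0 : Continuous fun g : Hn n => ((wt g : ℝ) : ℂ) :=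
    Complex.continuous_ofReal.comp continuous_wt
  have h1 : Continuous fun g : Hn n => ((wt g : ℝ) : ℂ)⁻¹ :=
    h0.inv₀ fun g => Complex.ofReal_ne_zero.mpr (wt_pos g).ne' 
  have heq : k = fun g => ((wt g : ℝ) : ℂ)⁻¹ * (((wt g : ℝ) : ℂ) * k g) := by
    funext g
    rw [inv_mul_cancel_left₀ (by exact_mod_cast (wt_pos g).ne')]
  rw [heq]
  exact h1.aestronglyMeasurable.mul hk.aestronglyMeasurable

lemma norm_wtd (hk : Integrable (fun g : Hn n => ((wt g : ℝ) : ℂ) * k g)) :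
    Integrable (fun g : Hn n => wt g * ‖k g‖) := by
  refine hk.norm.congr (Filter.Eventually.of_forall fun g => ?_)
  simp [norm_mul, abs_of_pos (wt_pos g)]

lemma integrable_weighted (hk : Integrable (fun g : Hn n => ((wt g : ℝ) : ℂ) * k g))
    (u : Hn n → ℝ) (hu_cont : Continuous u) (hu : ∀ g, |u g| ≤ wt g)
    (χ : Hn n → ℂ) (hχ_cont : Continuous χ) (hχ : ∀ g, ‖χ g‖ ≤ 1) :
    Integrable (fun g : Hn n => (u g : ℂ) * k g * χ g) := by
  refine (norm_wtd hk).mono' ?_ (Filter.Eventually.of_forall fun g => ?_)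
  · exact (((Complex.continuous_ofReal.comp hu_cont).aestronglyMeasurable.mul
      (aesm_of_wtd hk)).mul hχ_cont.aestronglyMeasurable)
  · have : ‖(u g : ℂ) * k g * χ g‖ = |u g| * ‖k g‖ * ‖χ g‖ := by
      simp [norm_mul]
    rw [this]
    calc |u g| * ‖k g‖ * ‖χ g‖ ≤ wt g * ‖k g‖ * 1 := by
          refine mul_le_mul (mul_le_mul (hu g) le_rfl (norm_nonneg _) (wt_pos g).le)
            (hχ g) (norm_nonneg _) (mul_nonneg (wt_pos g).le (norm_nonneg _))
      _ = wt g * ‖k g‖ := mul_one _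

lemma wt_hmul_le (h g : Hn n) : wt (hmul h g) ≤ (n + 7) * (wt h * wt g) := by
  have h1 := abs_fst_hmul_le h g
  have hx1 : ‖h.2.1‖ ≤ wt h := by
    unfold wt; have := abs_nonneg h.1; have := norm_nonneg h.2.2; linarith
  have hy1 : ‖h.2.2‖ ≤ wt h := by
    unfold wt; have := abs_nonneg h.1; have := norm_nonneg h.2.1; linarith
  have hx2 : ‖g.2.1‖ ≤ wt g := by
    unfold wt; have := abs_nonneg g.1; have := norm_nonneg g.2.2; linarith
  have hy2 : ‖g.2.2‖ ≤ wt g := by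
    unfold wt; have := abs_nonneg g.1; have := norm_nonneg g.2.1; linarith
  have hw1 : 1 ≤ wt h := one_le_wt h
  have hw2 : 1 ≤ wt g := one_le_wt g
  have h2 : ‖(hmul h g).2.1‖ ≤ ‖h.2.1‖ + ‖g.2.1‖ := norm_add_le _ _
  have h3 : ‖(hmul h g).2.2‖ ≤ ‖h.2.2‖ + ‖g.2.2‖ := norm_add_le _ _
  have hw : wt (hmul h g) = 1 + |(hmul h g).1| + ‖(hmul h g).2.1‖ + ‖(hmul h g).2.2‖ := rfl
  rw [hw]
  nlinarith [Nat.cast_nonneg (α := ℝ) n]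

/-- The convolution kernel in the `(g, h)` variables, with an arbitrary weight `v`
in the external variable. -/
def Qker (k₁ k₂ : Hn n → ℂ) (v : Hn n → ℂ) : Hn n × Hn n → ℂ :=
  fun z => v z.1 * (k₁ z.2 * k₂ (hinvmul z.2 z.1))

lemma qker_comp_psi (k₁ k₂ v : Hn n → ℂ) :
    (fun z : Hn n × Hn n => Qker k₁ k₂ v (hmul z.1 z.2, z.1))
      = fun z : Hn n × Hn n => v (hmul z.1 z.2) * (k₁ z.1 * k₂ z.2) := by
  funext z; simp [Qker, hinvmul_hmul]

lemma integrable_P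
    (hk₁ : Integrable (fun g : Hn n => ((wt g : ℝ) : ℂ) * k₁ g))
    (hk₂ : Integrable (fun g : Hn n => ((wt g : ℝ) : ℂ) * k₂ g))
    (u : Hn n → ℝ) (hu_cont : Continuous u) (hu : ∀ g, |u g| ≤ wt g)
    (χ : Hn n → ℂ) (hχ_cont : Continuous χ) (hχ : ∀ g, ‖χ g‖ ≤ 1) :
    Integrable (fun z : Hn n × Hn n =>
      ((u (hmul z.1 z.2) : ℂ) * χ (hmul z.1 z.2)) * (k₁ z.1 * k₂ z.2)) volume := by
  rw [Measure.volume_eq_prod]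
  have hdom : Integrable (fun z : Hn n × Hn n =>
      ((n : ℝ) + 7) * ((wt z.1 * ‖k₁ z.1‖) * (wt z.2 * ‖k₂ z.2‖)))
      ((volume : Measure (Hn n)).prod volume) :=
    ((norm_wtd hk₁).mul_prod (norm_wtd hk₂)).const_mul _
  refine hdom.mono' ?_ (Filter.Eventually.of_forall fun z => ?_)
  · have hcont : Continuous (fun z : Hn n × Hn n =>
        ((u (hmul z.1 z.2) : ℝ) : ℂ) * χ (hmul z.1 z.2)) := by
      refine ((Complex.continuous_ofReal.comp (hu_cont.comp continuous_hmul)).mul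
        (hχ_cont.comp continuous_hmul))
    exact hcont.aestronglyMeasurable.mul
      (((aesm_of_wtd hk₁).comp_fst).mul ((aesm_of_wtd hk₂).comp_snd))
  · have hnorm : ‖((u (hmul z.1 z.2) : ℝ) : ℂ) * χ (hmul z.1 z.2) * (k₁ z.1 * k₂ z.2)‖
        = |u (hmul z.1 z.2)| * ‖χ (hmul z.1 z.2)‖ * (‖k₁ z.1‖ * ‖k₂ z.2‖) := by
      simp [norm_mul]
    rw [hnorm]
    have b1 : |u (hmul z.1 z.2)| ≤ ((n : ℝ) + 7) * (wt z.1 * wt z.2) :=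
      (hu _).trans (wt_hmul_le _ _)
    have b2 : ‖χ (hmul z.1 z.2)‖ ≤ 1 := hχ _
    have hk1n := norm_nonneg (k₁ z.1)
    have hk2n := norm_nonneg (k₂ z.2)
    have hwn := wt_mul_wt_nonneg z.1 z.2
    calc |u (hmul z.1 z.2)| * ‖χ (hmul z.1 z.2)‖ * (‖k₁ z.1‖ * ‖k₂ z.2‖)
        ≤ (((n : ℝ) + 7) * (wt z.1 * wt z.2)) * 1 * (‖k₁ z.1‖ * ‖k₂ z.2‖) := by
          refine mul_le_mul (mul_le_mul b1 b2 (norm_nonneg _) (by positivity)) le_rfl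
            (by positivity) (by positivity)
      _ = ((n : ℝ) + 7) * ((wt z.1 * ‖k₁ z.1‖) * (wt z.2 * ‖k₂ z.2‖)) := by ring

lemma integrable_Qker
    (hk₁ : Integrable (fun g : Hn n => ((wt g : ℝ) : ℂ) * k₁ g))
    (hk₂ : Integrable (fun g : Hn n => ((wt g : ℝ) : ℂ) * k₂ g))
    (u : Hn n → ℝ) (hu_cont : Continuous u) (hu : ∀ g, |u g| ≤ wt g)
    (χ : Hn n → ℂ) (hχ_cont : Continuous χ) (hχ : ∀ g, ‖χ g‖ ≤ 1) :
    Integrable (Qker k₁ k₂ (fun g => (u g : ℂ) * χ g)) volume := by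
  refine integrable_comp_psi.mp ?_
  rw [qker_comp_psi]
  exact integrable_P hk₁ hk₂ u hu_cont hu χ hχ_cont hχ

lemma integrable_weighted_hconv
    (hk₁ : Integrable (fun g : Hn n => ((wt g : ℝ) : ℂ) * k₁ g))
    (hk₂ : Integrable (fun g : Hn n => ((wt g : ℝ) : ℂ) * k₂ g))
    (u : Hn n → ℝ) (hu_cont : Continuous u) (hu : ∀ g, |u g| ≤ wt g)
    (χ : Hn n → ℂ) (hχ_cont : Continuous χ) (hχ : ∀ g, ‖χ g‖ ≤ 1) :
    Integrable (fun g : Hn n => ((u g : ℂ) * χ g) * hconv k₁ k₂ g) volume := by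
  have h := integrable_Qker hk₁ hk₂ u hu_cont hu χ hχ_cont hχ
  rw [Measure.volume_eq_prod] at h
  refine h.integral_prod_left.congr (Filter.Eventually.of_forall fun g => ?_)
  rw [hconv_def]
  exact integral_const_mul ((u g : ℂ) * χ g) _

lemma integral_weighted_hconv
    (hk₁ : Integrable (fun g : Hn n => ((wt g : ℝ) : ℂ) * k₁ g))
    (hk₂ : Integrable (fun g : Hn n => ((wt g : ℝ) : ℂ) * k₂ g))
    (u : Hn n → ℝ) (hu_cont : Continuous u) (hu : ∀ g, |u g| ≤ wt g)
    (χ : Hn n → ℂ) (hχ_cont : Continuous χ) (hχ : ∀ g, ‖χ g‖ ≤ 1) :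
    ∫ g : Hn n, ((u g : ℂ) * χ g) * hconv k₁ k₂ g
      = ∫ z : Hn n × Hn n,
          ((u (hmul z.1 z.2) : ℂ) * χ (hmul z.1 z.2)) * (k₁ z.1 * k₂ z.2) := by
  have h := integrable_Qker hk₁ hk₂ u hu_cont hu χ hχ_cont hχ
  rw [Measure.volume_eq_prod] at h
  have step1 : ∫ g : Hn n, ((u g : ℂ) * χ g) * hconv k₁ k₂ g
      = ∫ g : Hn n, ∫ h : Hn n, Qker k₁ k₂ (fun g' => (u g' : ℂ) * χ g') (g, h) := by
    refine integral_congr_ae (Filter.Eventually.of_forall fun g => ?_)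
    rw [hconv_def]
    exact (integral_const_mul ((u g : ℂ) * χ g) _).symm
  rw [step1]
  rw [← MeasureTheory.integral_prod _ h]
  rw [← Measure.volume_eq_prod]
  rw [← integral_comp_psi]
  rw [qker_comp_psi]

/-! ### the character -/

variable (q p : Fin n → ℝ)

lemma norm_charQP (g : Hn n) : ‖charQP q p g‖ = 1 := by
  unfold charQP
  rw [mul_comm, Complex.norm_exp_ofReal_mul_I]

lemma continuous_charQP : Continuous (charQP q p) := by
  unfold charQP
  refine Complex.continuous_exp.comp (continuous_const.mul
    (Complex.continuous_ofReal.comp ?_))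
  exact (continuous_dotR2 continuous_const (by fun_prop)).add
    (continuous_dotR2 continuous_const (by fun_prop))

lemma charQP_hmul (h g : Hn n) :
    charQP q p (hmul h g) = charQP q p h * charQP q p g := by
  unfold charQP hmul
  rw [← Complex.exp_add]
  congr 1
  simp only
  rw [dotR_add_right, dotR_add_right]
  push_cast
  ring

/-! ### the basic integrals -/

def KI (k : Hn n → ℂ) : ℂ := ∫ g : Hn n, k g * charQP q p g
def SI (k : Hn n → ℂ) : ℂ := ∫ g : Hn n, (g.1 : ℂ) * k g * charQP q p g
def XI (k : Hn n → ℂ) (j : Fin n) : ℂ :=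
  ∫ g : Hn n, ((g.2.1 j : ℝ) : ℂ) * k g * charQP q p g
def YI (k : Hn n → ℂ) (j : Fin n) : ℂ :=
  ∫ g : Hn n, ((g.2.2 j : ℝ) : ℂ) * k g * charQP q p g

lemma integral_prod_mul' (F G : Hn n → ℂ) :
    ∫ z : Hn n × Hn n, F z.1 * G z.2 = (∫ g : Hn n, F g) * ∫ g : Hn n, G g := by
  rw [Measure.volume_eq_prod]; exact integral_prod_mul F G

/-! pointwise weight bounds -/

lemma abs_fst_le_wt (g : Hn n) : |g.1| ≤ wt g := by
  unfold wt; have := norm_nonneg g.2.1; have := norm_nonneg g.2.2; linarith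

lemma abs_x_le_wt (j : Fin n) (g : Hn n) : |g.2.1 j| ≤ wt g := by
  have h1 : |g.2.1 j| ≤ ‖g.2.1‖ := by
    simpa [Real.norm_eq_abs] using norm_le_pi_norm g.2.1 j
  refine h1.trans ?_
  unfold wt; have := abs_nonneg g.1; have := norm_nonneg g.2.2; linarith

lemma abs_y_le_wt (j : Fin n) (g : Hn n) : |g.2.2 j| ≤ wt g := by
  have h1 : |g.2.2 j| ≤ ‖g.2.2‖ := by
    simpa [Real.norm_eq_abs] using norm_le_pi_norm g.2.2 j
  refine h1.trans ?_
  unfold wt; have := abs_nonneg g.1; have := norm_nonneg g.2.1; linarith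

lemma abs_one_le_wt (g : Hn n) : |(1 : ℝ)| ≤ wt g := by
  rw [abs_one]; exact one_le_wt g

/-! ### expansion of `∫ s · (k₁ ⋆ k₂) · char` -/

lemma integral_sconv
    (hk₁ : Integrable (fun g : Hn n => ((wt g : ℝ) : ℂ) * k₁ g))
    (hk₂ : Integrable (fun g : Hn n => ((wt g : ℝ) : ℂ) * k₂ g)) :
    ∫ g : Hn n, ((g.1 : ℂ) * charQP q p g) * hconv k₁ k₂ g
      = SI q p k₁ * KI q p k₂ + KI q p k₁ * SI q p k₂
        + (1 / 2) * ∑ j : Fin n, XI q p k₁ j * YI q p k₂ j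
        - (1 / 2) * ∑ j : Fin n, YI q p k₁ j * XI q p k₂ j := by
  have hcc := continuous_charQP q p
  have hcn : ∀ g : Hn n, ‖charQP q p g‖ ≤ 1 := fun g => (norm_charQP q p g).le
  rw [integral_weighted_hconv hk₁ hk₂ (fun g => g.1) continuous_fst abs_fst_le_wt
    (charQP q p) hcc hcn]
  set c := charQP q p with hc
  -- pointwise decomposition
  set T1 : Hn n × Hn n → ℂ := fun z => ((z.1.1 : ℂ) * k₁ z.1 * c z.1) * (k₂ z.2 * c z.2)
    with hT1
  set T2 : Hn n × Hn n → ℂ := fun z => (k₁ z.1 * c z.1) * ((z.2.1 : ℂ) * k₂ z.2 * c z.2)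
    with hT2
  set U : Fin n → Hn n × Hn n → ℂ := fun j z =>
    ((z.1.2.1 j : ℝ) : ℂ) * k₁ z.1 * c z.1 * (((z.2.2.2 j : ℝ) : ℂ) * k₂ z.2 * c z.2) with hU
  set V : Fin n → Hn n × Hn n → ℂ := fun j z =>
    ((z.1.2.2 j : ℝ) : ℂ) * k₁ z.1 * c z.1 * (((z.2.2.1 j : ℝ) : ℂ) * k₂ z.2 * c z.2) with hV
  have hpt : ∀ z : Hn n × Hn n,
      (((hmul z.1 z.2).1 : ℂ) * c (hmul z.1 z.2)) * (k₁ z.1 * k₂ z.2)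
        = T1 z + T2 z + (1 / 2) * ∑ j : Fin n, U j z - (1 / 2) * ∑ j : Fin n, V j z := by
    intro z
    have hsum1 : ∑ j : Fin n, U j z
        = ((dotR z.1.2.1 z.2.2.2 : ℝ) : ℂ) * (k₁ z.1 * c z.1 * (k₂ z.2 * c z.2)) := by
      unfold dotR
      push_cast
      rw [Finset.sum_mul]
      exact Finset.sum_congr rfl fun j _ => by rw [hU]; ring
    have hsum2 : ∑ j : Fin n, V j z
        = ((dotR z.2.2.1 z.1.2.2 : ℝ) : ℂ) * (k₁ z.1 * c z.1 * (k₂ z.2 * c z.2)) := by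
      unfold dotR
      push_cast
      rw [Finset.sum_mul]
      exact Finset.sum_congr rfl fun j _ => by rw [hV]; ring
    rw [hc, charQP_hmul]
    rw [← hc]
    have hfst : ((hmul z.1 z.2).1 : ℂ)
        = (z.1.1 : ℂ) + (z.2.1 : ℂ)
          + (((dotR z.1.2.1 z.2.2.2 : ℝ) : ℂ) - ((dotR z.2.2.1 z.1.2.2 : ℝ) : ℂ)) / 2 := by
      unfold hmul
      push_cast
      ring
    rw [hfst, hsum1, hsum2, hT1, hT2]
    ring
  rw [integral_congr_ae (Filter.Eventually.of_forall hpt)]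
  -- integrability of the pieces
  have int1 : ∀ (u₁ u₂ : Hn n → ℝ), Continuous u₁ → Continuous u₂ →
      (∀ g, |u₁ g| ≤ wt g) → (∀ g, |u₂ g| ≤ wt g) →
      Integrable (fun z : Hn n × Hn n =>
        ((u₁ z.1 : ℝ) : ℂ) * k₁ z.1 * c z.1 * (((u₂ z.2 : ℝ) : ℂ) * k₂ z.2 * c z.2))
        volume := by
    intro u₁ u₂ hu₁ hu₂ hb₁ hb₂
    rw [Measure.volume_eq_prod]
    exact (integrable_weighted hk₁ u₁ hu₁ hb₁ c hcc hcn).mul_prod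
      (integrable_weighted hk₂ u₂ hu₂ hb₂ c hcc hcn)
  have hT1i : Integrable T1 volume := by
    refine (int1 (fun g => g.1) (fun _ => 1) continuous_fst continuous_const
      abs_fst_le_wt abs_one_le_wt).congr
      (Filter.Eventually.of_forall fun z => ?_)
    rw [hT1]; push_cast; ring
  have hT2i : Integrable T2 volume := by
    refine (int1 (fun _ => 1) (fun g => g.1) continuous_const continuous_fst
      abs_one_le_wt abs_fst_le_wt).congr
      (Filter.Eventually.of_forall fun z => ?_)
    rw [hT2]; push_cast; ring
  have hUi : ∀ j, Integrable (U j) volume := fun j =>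
    int1 (fun g => g.2.1 j) (fun g => g.2.2 j)
      (by fun_prop) (by fun_prop) (abs_x_le_wt j) (abs_y_le_wt j)
  have hVi : ∀ j, Integrable (V j) volume := fun j =>
    int1 (fun g => g.2.2 j) (fun g => g.2.1 j)
      (by fun_prop) (by fun_prop) (abs_y_le_wt j) (abs_x_le_wt j)
  have hsUi : Integrable (fun z => ∑ j : Fin n, U j z) volume :=
    integrable_finset_sum _ fun j _ => hUi j
  have hsVi : Integrable (fun z => ∑ j : Fin n, V j z) volume :=
    integrable_finset_sum _ fun j _ => hVi j
  have hA : Integrable (fun z : Hn n × Hn n => T1 z + T2 z) volume := by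
    exact hT1i.add hT2i
  have hsum_int : Integrable
      (fun z : Hn n × Hn n => T1 z + T2 z + (1 / 2 : ℂ) * ∑ j : Fin n, U j z) volume := by
    exact hA.add (hsUi.const_mul _)
  have hV2 : Integrable (fun z : Hn n × Hn n => (1 / 2 : ℂ) * ∑ j : Fin n, V j z) volume :=
    hsVi.const_mul _
  rw [integral_sub hsum_int hV2, integral_add hA (hsUi.const_mul (1 / 2 : ℂ)),
    integral_add hT1i hT2i, integral_const_mul, integral_const_mul,
    integral_finset_sum _ fun j _ => hUi j, integral_finset_sum _ fun j _ => hVi j]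
  -- identify the pieces
  have eT1 : ∫ z : Hn n × Hn n, T1 z = SI q p k₁ * KI q p k₂ :=
    integral_prod_mul' (fun g => (g.1 : ℂ) * k₁ g * c g) (fun g => k₂ g * c g)
  have eT2 : ∫ z : Hn n × Hn n, T2 z = KI q p k₁ * SI q p k₂ :=
    integral_prod_mul' (fun g => k₁ g * c g) (fun g => (g.1 : ℂ) * k₂ g * c g)
  have eU : ∀ j, ∫ z : Hn n × Hn n, U j z = XI q p k₁ j * YI q p k₂ j := fun j =>
    integral_prod_mul' (fun g => ((g.2.1 j : ℝ) : ℂ) * k₁ g * c g)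
      (fun g => ((g.2.2 j : ℝ) : ℂ) * k₂ g * c g)
  have eV : ∀ j, ∫ z : Hn n × Hn n, V j z = YI q p k₁ j * XI q p k₂ j := fun j =>
    integral_prod_mul' (fun g => ((g.2.2 j : ℝ) : ℂ) * k₁ g * c g)
      (fun g => ((g.2.1 j : ℝ) : ℂ) * k₂ g * c g)
  rw [eT1, eT2]
  rw [Finset.sum_congr rfl fun j _ => eU j, Finset.sum_congr rfl fun j _ => eV j]

lemma integral_sconv_sub
    (hk₁ : Integrable (fun g : Hn n => ((wt g : ℝ) : ℂ) * k₁ g))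
    (hk₂ : Integrable (fun g : Hn n => ((wt g : ℝ) : ℂ) * k₂ g)) :
    (∫ g : Hn n, ((g.1 : ℂ) * charQP q p g) * hconv k₁ k₂ g)
      - (∫ g : Hn n, ((g.1 : ℂ) * charQP q p g) * hconv k₂ k₁ g)
      = ∑ j : Fin n, (XI q p k₁ j * YI q p k₂ j - YI q p k₁ j * XI q p k₂ j) := by
  rw [integral_sconv q p hk₁ hk₂, integral_sconv q p hk₂ hk₁]
  have e1 : ∑ j : Fin n, XI q p k₂ j * YI q p k₁ j
      = ∑ j : Fin n, YI q p k₁ j * XI q p k₂ j :=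
    Finset.sum_congr rfl fun j _ => mul_comm _ _
  have e2 : ∑ j : Fin n, YI q p k₂ j * XI q p k₁ j
      = ∑ j : Fin n, XI q p k₁ j * YI q p k₂ j :=
    Finset.sum_congr rfl fun j _ => mul_comm _ _
  rw [e1, e2, Finset.sum_sub_distrib]
  ring

/-! ### differentiating `khat` -/

/-- The linear functional `(dq, dp) ↦ ⟨dq, x⟩ + ⟨dp, y⟩` as a complex-valued CLM. -/
def MgCLM (x y : Fin n → ℝ) : ((Fin n → ℝ) × (Fin n → ℝ)) →L[ℝ] ℂ :=
  (∑ j, x j • (Complex.ofRealCLM.comp ((ContinuousLinearMap.proj j).comp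
      (ContinuousLinearMap.fst ℝ (Fin n → ℝ) (Fin n → ℝ)))))
  + (∑ j, y j • (Complex.ofRealCLM.comp ((ContinuousLinearMap.proj j).comp
      (ContinuousLinearMap.snd ℝ (Fin n → ℝ) (Fin n → ℝ)))))

lemma MgCLM_apply (x y v w : Fin n → ℝ) :
    MgCLM x y (v, w) = ((dotR v x + dotR w y : ℝ) : ℂ) := by
  simp only [MgCLM, ContinuousLinearMap.add_apply, ContinuousLinearMap.sum_apply,
    ContinuousLinearMap.smul_apply, ContinuousLinearMap.comp_apply,
    ContinuousLinearMap.coe_fst', ContinuousLinearMap.coe_snd',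
    ContinuousLinearMap.proj_apply, Complex.ofRealCLM_apply, Complex.real_smul, dotR]
  push_cast
  rw [Finset.sum_congr rfl fun j _ => mul_comm ((x j : ℂ)) ((v j : ℂ)),
    Finset.sum_congr rfl fun j _ => mul_comm ((y j : ℂ)) ((w j : ℂ))]

lemma norm_MgCLM_le (x y : Fin n → ℝ) :
    ‖MgCLM x y‖ ≤ (n : ℝ) * ‖x‖ + (n : ℝ) * ‖y‖ := by
  have haux : ∀ (j : Fin n) (L : ((Fin n → ℝ) × (Fin n → ℝ)) →L[ℝ] ℝ),
      (∀ u : (Fin n → ℝ) × (Fin n → ℝ), |L u| ≤ ‖u‖) →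
      ‖Complex.ofRealCLM.comp L‖ ≤ 1 := by
    intro j L hL
    refine ContinuousLinearMap.opNorm_le_bound _ zero_le_one fun u => ?_
    rw [ContinuousLinearMap.comp_apply, Complex.ofRealCLM_apply]
    simpa [Complex.norm_real, Real.norm_eq_abs, one_mul] using hL u
  have h1 : ‖∑ j, x j • (Complex.ofRealCLM.comp ((ContinuousLinearMap.proj j).comp
      (ContinuousLinearMap.fst ℝ (Fin n → ℝ) (Fin n → ℝ))))‖ ≤ (n : ℝ) * ‖x‖ := by
    refine (norm_sum_le _ _).trans ?_
    have : ∀ j : Fin n, ‖x j • (Complex.ofRealCLM.comp ((ContinuousLinearMap.proj j).comp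
        (ContinuousLinearMap.fst ℝ (Fin n → ℝ) (Fin n → ℝ))))‖ ≤ ‖x‖ := by
      intro j
      refine (ContinuousLinearMap.opNorm_smul_le _ _).trans ?_
      have hA : ‖Complex.ofRealCLM.comp ((ContinuousLinearMap.proj j).comp
          (ContinuousLinearMap.fst ℝ (Fin n → ℝ) (Fin n → ℝ)))‖ ≤ 1 := by
        refine haux j _ fun u => ?_
        simpa [Real.norm_eq_abs] using
          (le_trans (by simpa [Real.norm_eq_abs] using norm_le_pi_norm u.1 j)
            (norm_fst_le u))
      calc ‖x j‖ * _ ≤ ‖x‖ * 1 :=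
            mul_le_mul (norm_le_pi_norm x j) hA (norm_nonneg _) (norm_nonneg _)
        _ = ‖x‖ := mul_one _
    refine (Finset.sum_le_sum fun j _ => this j).trans ?_
    simp [Finset.sum_const, mul_comm]
  have h2 : ‖∑ j, y j • (Complex.ofRealCLM.comp ((ContinuousLinearMap.proj j).comp
      (ContinuousLinearMap.snd ℝ (Fin n → ℝ) (Fin n → ℝ))))‖ ≤ (n : ℝ) * ‖y‖ := by
    refine (norm_sum_le _ _).trans ?_
    have : ∀ j : Fin n, ‖y j • (Complex.ofRealCLM.comp ((ContinuousLinearMap.proj j).comp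
        (ContinuousLinearMap.snd ℝ (Fin n → ℝ) (Fin n → ℝ))))‖ ≤ ‖y‖ := by
      intro j
      refine (ContinuousLinearMap.opNorm_smul_le _ _).trans ?_
      have hA : ‖Complex.ofRealCLM.comp ((ContinuousLinearMap.proj j).comp
          (ContinuousLinearMap.snd ℝ (Fin n → ℝ) (Fin n → ℝ)))‖ ≤ 1 := by
        refine haux j _ fun u => ?_
        simpa [Real.norm_eq_abs] using
          (le_trans (by simpa [Real.norm_eq_abs] using norm_le_pi_norm u.2 j)
            (norm_snd_le u))
      calc ‖y j‖ * _ ≤ ‖y‖ * 1 :=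
            mul_le_mul (norm_le_pi_norm y j) hA (norm_nonneg _) (norm_nonneg _)
        _ = ‖y‖ := mul_one _
    refine (Finset.sum_le_sum fun j _ => this j).trans ?_
    simp [Finset.sum_const, mul_comm]
  exact (norm_add_le _ _).trans (add_le_add h1 h2)

lemma continuous_MgCLM : Continuous (fun g : Hn n => MgCLM g.2.1 g.2.2) := by
  unfold MgCLM
  refine Continuous.add ?_ ?_ <;>
    exact continuous_finset_sum _ fun j _ => by fun_prop

lemma integrable_Fprime (hk : Integrable (fun g : Hn n => ((wt g : ℝ) : ℂ) * k g)) :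
    Integrable (fun g : Hn n =>
      (k g * charQP q p g * Complex.I) • MgCLM g.2.1 g.2.2) volume := by
  refine ((norm_wtd hk).const_mul (n : ℝ)).mono' ?_
    (Filter.Eventually.of_forall fun g => ?_)
  · exact (((aesm_of_wtd hk).mul (continuous_charQP q p).aestronglyMeasurable).mul
      aestronglyMeasurable_const).smul continuous_MgCLM.aestronglyMeasurable
  · refine (ContinuousLinearMap.opNorm_smul_le _ _).trans ?_
    have hsc : ‖k g * charQP q p g * Complex.I‖ = ‖k g‖ := by
      rw [norm_mul, norm_mul, norm_charQP, Complex.norm_I, mul_one, mul_one]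
    rw [hsc]
    have hb := norm_MgCLM_le g.2.1 g.2.2
    have hwtb : (n : ℝ) * ‖g.2.1‖ + (n : ℝ) * ‖g.2.2‖ ≤ (n : ℝ) * wt g := by
      unfold wt
      have := abs_nonneg g.1
      have hn0 : (0:ℝ) ≤ (n : ℝ) := Nat.cast_nonneg n
      nlinarith [norm_nonneg g.2.1, norm_nonneg g.2.2]
    calc ‖k g‖ * ‖MgCLM g.2.1 g.2.2‖ ≤ ‖k g‖ * ((n : ℝ) * wt g) :=
          mul_le_mul le_rfl (hb.trans hwtb) (norm_nonneg _) (norm_nonneg _)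
      _ = (n : ℝ) * (wt g * ‖k g‖) := by ring

lemma khat_hasFDerivAt (hk : Integrable (fun g : Hn n => ((wt g : ℝ) : ℂ) * k g)) :
    HasFDerivAt (khat k)
      (∫ g : Hn n, (k g * charQP q p g * Complex.I) • MgCLM g.2.1 g.2.2) (q, p) := by
  have hk0 : Integrable k := by
    have := integrable_weighted hk (fun _ => 1) continuous_const abs_one_le_wt
      (fun _ => 1) continuous_const (fun _ => by norm_num)
    simpa using this
  have hM : ∀ (g : Hn n) (x : (Fin n → ℝ) × (Fin n → ℝ)),
      charQP x.1 x.2 g = Complex.exp (Complex.I * MgCLM g.2.1 g.2.2 x) := by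
    intro g x
    obtain ⟨a, b⟩ := x
    rw [MgCLM_apply]
    rfl
  unfold khat
  have H := hasFDerivAt_integral_of_dominated_of_fderiv_le (𝕜 := ℝ)
    (μ := (volume : Measure (Hn n))) (x₀ := ((q, p) : (Fin n → ℝ) × (Fin n → ℝ)))
    (F := fun x (g : Hn n) => k g * charQP x.1 x.2 g)
    (F' := fun x (g : Hn n) => (k g * charQP x.1 x.2 g * Complex.I) • MgCLM g.2.1 g.2.2)
    (bound := fun g => (n : ℝ) * (wt g * ‖k g‖)) 
    (Metric.ball_mem_nhds _ one_pos)
    (Filter.Eventually.of_forall fun x =>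
      hk0.aestronglyMeasurable.mul (continuous_charQP x.1 x.2).aestronglyMeasurable)
    (by
      have := integrable_weighted hk (fun _ => 1) continuous_const abs_one_le_wt
        (charQP q p) (continuous_charQP q p) (fun g => (norm_charQP q p g).le)
      refine this.congr (Filter.Eventually.of_forall fun g => ?_)
      push_cast; ring)
    ((((aesm_of_wtd hk).mul (continuous_charQP q p).aestronglyMeasurable).mul
      aestronglyMeasurable_const).smul continuous_MgCLM.aestronglyMeasurable)
    (Filter.Eventually.of_forall fun g => fun x _ => by
      refine (ContinuousLinearMap.opNorm_smul_le _ _).trans ?_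
      have hsc : ‖k g * charQP x.1 x.2 g * Complex.I‖ = ‖k g‖ := by
        rw [norm_mul, norm_mul, norm_charQP, Complex.norm_I, mul_one, mul_one]
      rw [hsc]
      have hb := norm_MgCLM_le g.2.1 g.2.2
      have hwtb : (n : ℝ) * ‖g.2.1‖ + (n : ℝ) * ‖g.2.2‖ ≤ (n : ℝ) * wt g := by
        unfold wt
        have := abs_nonneg g.1
        have hn0 : (0:ℝ) ≤ (n : ℝ) := Nat.cast_nonneg n
        nlinarith [norm_nonneg g.2.1, norm_nonneg g.2.2]
      calc ‖k g‖ * ‖MgCLM g.2.1 g.2.2‖ ≤ ‖k g‖ * ((n : ℝ) * wt g) :=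
            mul_le_mul le_rfl (hb.trans hwtb) (norm_nonneg _) (norm_nonneg _)
        _ = (n : ℝ) * (wt g * ‖k g‖) := by ring)
    ((norm_wtd hk).const_mul _)
    (Filter.Eventually.of_forall fun g => fun x _ => by
      have h1 : HasFDerivAt (fun x : (Fin n → ℝ) × (Fin n → ℝ) => MgCLM g.2.1 g.2.2 x)
          (MgCLM g.2.1 g.2.2) x := (MgCLM g.2.1 g.2.2).hasFDerivAt
      have h2 := h1.const_mul Complex.I
      have h3 := h2.cexp
      have h4 := h3.const_mul (k g)
      have heqf : (fun x : (Fin n → ℝ) × (Fin n → ℝ) => k g * charQP x.1 x.2 g)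
          = fun x => k g * Complex.exp (Complex.I * MgCLM g.2.1 g.2.2 x) := by
        funext x; rw [hM g x]
      rw [heqf]
      refine h4.congr_fderiv ?_
      rw [← hM g x]
      rw [smul_smul, smul_smul])
  exact H

lemma khat_differentiableAt (hk : Integrable (fun g : Hn n => ((wt g : ℝ) : ℂ) * k g)) :
    DifferentiableAt ℝ (khat k) (q, p) :=
  (khat_hasFDerivAt q p hk).differentiableAt

lemma khat_fderiv_q (hk : Integrable (fun g : Hn n => ((wt g : ℝ) : ℂ) * k g)) (j : Fin n) :
    fderiv ℝ (khat k) (q, p) (Pi.single j 1, 0) = Complex.I * XI q p k j := by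
  rw [(khat_hasFDerivAt q p hk).fderiv]
  rw [ContinuousLinearMap.integral_apply (integrable_Fprime q p hk)]
  unfold XI
  rw [← integral_const_mul]
  refine integral_congr_ae (Filter.Eventually.of_forall fun g => ?_)
  simp only [ContinuousLinearMap.smul_apply]
  rw [MgCLM_apply, dotR_single, dotR_zero_left]
  rw [smul_eq_mul]
  push_cast
  ring

lemma khat_fderiv_p (hk : Integrable (fun g : Hn n => ((wt g : ℝ) : ℂ) * k g)) (j : Fin n) :
    fderiv ℝ (khat k) (q, p) (0, Pi.single j 1) = Complex.I * YI q p k j := by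
  rw [(khat_hasFDerivAt q p hk).fderiv]
  rw [ContinuousLinearMap.integral_apply (integrable_Fprime q p hk)]
  unfold YI
  rw [← integral_const_mul]
  refine integral_congr_ae (Filter.Eventually.of_forall fun g => ?_)
  simp only [ContinuousLinearMap.smul_apply]
  rw [MgCLM_apply, dotR_single, dotR_zero_left]
  rw [smul_eq_mul]
  push_cast
  ring

/-! ### one-dimensional lemma -/

lemma integral_Iic_tendsto {E : Type*} [NormedAddCommGroup E] [NormedSpace ℝ E]
    {f : ℝ → E} (hf : Integrable f) :
    Filter.Tendsto (fun a : ℝ => ∫ t in Set.Iic a, f t) Filter.atTop (nhds (∫ t, f t)) := by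
  have h := tendsto_integral_filter_of_dominated_convergence (μ := volume)
    (F := fun (a : ℝ) t => (Set.Iic a).indicator f t) (f := f) (l := Filter.atTop)
    (bound := fun t => ‖f t‖)
    (Filter.Eventually.of_forall fun a =>
      hf.aestronglyMeasurable.indicator measurableSet_Iic)
    (Filter.Eventually.of_forall fun a => Filter.Eventually.of_forall fun t =>
      norm_indicator_le_norm_self f t)
    hf.norm
    (Filter.Eventually.of_forall fun t => by
      refine Filter.Tendsto.congr' ?_ tendsto_const_nhds
      filter_upwards [Filter.eventually_ge_atTop t] with a ha
      exact (Set.indicator_of_mem (Set.mem_Iic.mpr ha) f).symm)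
  refine h.congr fun a => ?_
  exact integral_indicator measurableSet_Iic

lemma tendsto_tail_zero {f : ℝ → ℝ} (hf : Integrable f) :
    Filter.Tendsto (fun a : ℝ => ∫ t in Set.Ioi a, f t) Filter.atTop (nhds 0) := by
  have h1 : ∀ a : ℝ, ∫ t in Set.Ioi a, f t = (∫ t, f t) - ∫ t in Set.Iic a, f t := by
    intro a
    have := integral_add_compl (measurableSet_Iic (a := a)) hf
    rw [Set.compl_Iic] at this
    linarith
  have h2 : Filter.Tendsto (fun a : ℝ => (∫ t, f t) - ∫ t in Set.Iic a, f t)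
      Filter.atTop (nhds ((∫ t, f t) - ∫ t, f t)) :=
    tendsto_const_nhds.sub (integral_Iic_tendsto hf)
  rw [sub_self] at h2
  exact h2.congr fun a => (h1 a).symm

lemma tendsto_max_integral {f : ℝ → ℂ} (hf : Integrable f)
    (hsf : Integrable (fun s : ℝ => (s : ℂ) * f s)) :
    Filter.Tendsto (fun a : ℝ => ∫ t in Set.Iic a, ((max t (-a) : ℝ) : ℂ) * f t)
      Filter.atTop (nhds (∫ t : ℝ, (t : ℂ) * f t)) := by
  have h := tendsto_integral_filter_of_dominated_convergence (μ := volume)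
    (F := fun (a : ℝ) t => (Set.Iic a).indicator
      (fun t => ((max t (-a) : ℝ) : ℂ) * f t) t)
    (f := fun t : ℝ => (t : ℂ) * f t) (l := Filter.atTop)
    (bound := fun t => ‖(t : ℂ) * f t‖)
    (Filter.Eventually.of_forall fun a =>
      (((Complex.continuous_ofReal.comp ((continuous_id.max continuous_const))).aestronglyMeasurable.mul
        hf.aestronglyMeasurable).indicator measurableSet_Iic))
    (by
      filter_upwards [Filter.eventually_ge_atTop (0:ℝ)] with a ha
      refine Filter.Eventually.of_forall fun t => ?_
      by_cases ht : t ≤ a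
      · rw [Set.indicator_of_mem (Set.mem_Iic.mpr ht)]
        have h1 : ‖((max t (-a) : ℝ) : ℂ) * f t‖ = |max t (-a)| * ‖f t‖ := by
          rw [norm_mul, Complex.norm_real, Real.norm_eq_abs]
        have h2 : ‖(t : ℂ) * f t‖ = |t| * ‖f t‖ := by
          rw [norm_mul, Complex.norm_real, Real.norm_eq_abs]
        rw [h1, h2]
        refine mul_le_mul ?_ le_rfl (norm_nonneg _) (abs_nonneg _)
        rcases le_or_gt (-a) t with h | h
        · rw [max_eq_left h]
        · rw [max_eq_right h.le, abs_neg, _root_.abs_of_nonneg ha, abs_of_nonpos (by linarith)]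
          linarith
      · rw [Set.indicator_of_notMem (fun hmem => ht (Set.mem_Iic.mp hmem))]
        simpa using norm_nonneg ((t:ℂ) * f t))
    hsf.norm
    (Filter.Eventually.of_forall fun t => by
      refine Filter.Tendsto.congr' ?_ tendsto_const_nhds
      filter_upwards [Filter.eventually_ge_atTop t, Filter.eventually_ge_atTop (-t)] with a ha ha'
      rw [Set.indicator_of_mem (Set.mem_Iic.mpr ha), max_eq_left (by linarith)])
  refine h.congr fun a => ?_
  exact integral_indicator measurableSet_Iic

lemma key_identity {f : ℝ → ℂ} (hf : Integrable f) {a : ℝ} (ha : 0 ≤ a) :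
    ∫ s in Set.Ioc (-a) a, (∫ t in Set.Iic s, f t)
      = (a : ℂ) * (∫ t in Set.Iic a, f t)
        - ∫ t in Set.Iic a, ((max t (-a) : ℝ) : ℂ) * f t := by
  have hfin : IsFiniteMeasure (volume.restrict (Set.Ioc (-a) a)) := by
    constructor
    rw [Measure.restrict_apply_univ]
    exact measure_Ioc_lt_top
  -- Fubini
  have hswap : ∫ s in Set.Ioc (-a) a, (∫ t in Set.Iic s, f t)
      = ∫ t : ℝ, ∫ s in Set.Ioc (-a) a, (Set.Iic s).indicator f t := by
    have hf2 : Integrable (Function.uncurry fun (s t : ℝ) => (Set.Iic s).indicator f t)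
        ((volume.restrict (Set.Ioc (-a) a)).prod volume) := by
      have hSm : MeasurableSet {z : ℝ × ℝ | z.2 ≤ z.1} :=
        measurableSet_le measurable_snd measurable_fst
      have heq : (Function.uncurry fun (s t : ℝ) => (Set.Iic s).indicator f t)
          = {z : ℝ × ℝ | z.2 ≤ z.1}.indicator (fun z => f z.2) := by
        funext z
        simp only [Function.uncurry, Set.indicator, Set.mem_Iic, Set.mem_setOf_eq]
      have hmeas : AEStronglyMeasurable
          (Function.uncurry fun (s t : ℝ) => (Set.Iic s).indicator f t)
          ((volume.restrict (Set.Ioc (-a) a)).prod volume) := by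
        rw [heq]
        exact (hf.aestronglyMeasurable.comp_snd (μ := volume.restrict (Set.Ioc (-a) a))).indicator hSm
      have hdom : Integrable (fun z : ℝ × ℝ => ‖f z.2‖)
          ((volume.restrict (Set.Ioc (-a) a)).prod volume) := by
        have h := (integrable_const (μ := volume.restrict (Set.Ioc (-a) a)) (1:ℝ)).mul_prod hf.norm
        simpa using h
      refine hdom.mono' hmeas (Filter.Eventually.of_forall fun z => ?_)
      exact norm_indicator_le_norm_self f z.2
    have h := integral_integral_swap hf2
    rw [← h]
    refine integral_congr_ae (Filter.Eventually.of_forall fun s => ?_)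
    exact (integral_indicator measurableSet_Iic).symm
  rw [hswap]
  -- compute the inner integral
  have hinner : ∀ t : ℝ, ∫ s in Set.Ioc (-a) a, (Set.Iic s).indicator f t
      = (Set.Iic a).indicator (fun t => ((a - max t (-a) : ℝ) : ℂ) * f t) t := by
    intro t
    have h1 : ∀ s : ℝ, (Set.Iic s).indicator f t = (Set.Ici t).indicator (fun _ => f t) s := by
      intro s
      rcases le_or_gt t s with h | h
      · rw [Set.indicator_of_mem (Set.mem_Iic.mpr h), Set.indicator_of_mem (Set.mem_Ici.mpr h)]
      · rw [Set.indicator_of_notMem (by simpa using h.not_ge),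
          Set.indicator_of_notMem (by simpa using h.not_ge)]
    rw [integral_congr_ae (Filter.Eventually.of_forall fun s => h1 s)]
    rw [setIntegral_indicator measurableSet_Ici]
    rw [setIntegral_const]
    rcases le_or_gt t (-a) with h | h
    · have hset : Set.Ioc (-a) a ∩ Set.Ici t = Set.Ioc (-a) a := by
        refine Set.inter_eq_left.mpr fun x hx => ?_
        exact Set.mem_Ici.mpr (le_trans h hx.1.le)
      rw [hset, Real.volume_real_Ioc_of_le (a := -a) (b := a) (by linarith),
        Set.indicator_of_mem (Set.mem_Iic.mpr (by linarith)), max_eq_right h]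
      rw [Complex.real_smul]
      try (push_cast; ring)
    · rcases le_or_gt t a with h2 | h2
      · have hset : Set.Ioc (-a) a ∩ Set.Ici t = Set.Icc t a := by
          ext x
          simp only [Set.mem_inter_iff, Set.mem_Ioc, Set.mem_Ici, Set.mem_Icc]
          constructor
          · rintro ⟨⟨_, hxa⟩, hxt⟩; exact ⟨hxt, hxa⟩
          · rintro ⟨hxt, hxa⟩; exact ⟨⟨lt_of_lt_of_le h hxt, hxa⟩, hxt⟩
        rw [hset, Real.volume_real_Icc_of_le (a := t) (b := a) h2,
          Set.indicator_of_mem (Set.mem_Iic.mpr h2), max_eq_left h.le]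
        rw [Complex.real_smul]
      · have hset : Set.Ioc (-a) a ∩ Set.Ici t = ∅ := by
          ext x
          simp only [Set.mem_inter_iff, Set.mem_Ioc, Set.mem_Ici, Set.mem_empty_iff_false,
            iff_false, not_and]
          rintro ⟨_, hxa⟩ hxt
          linarith
        rw [hset, Set.indicator_of_notMem (by simpa using h2.not_ge)]
        simp
  rw [integral_congr_ae (Filter.Eventually.of_forall hinner)]
  rw [integral_indicator measurableSet_Iic]
  -- split the integral
  have hint1 : Integrable (fun t => (a : ℂ) * f t) (volume.restrict (Set.Iic a)) :=
    (hf.const_mul _).restrict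
  have hint2 : Integrable (fun t => ((max t (-a) : ℝ) : ℂ) * f t)
      (volume.restrict (Set.Iic a)) := by
    refine ((hf.norm.const_mul a).restrict (s := Set.Iic a)).mono'
      ((Complex.continuous_ofReal.comp
        (continuous_id.max continuous_const)).aestronglyMeasurable.mul
        hf.aestronglyMeasurable.restrict)
      ?_
    rw [ae_restrict_iff' measurableSet_Iic]
    refine Filter.Eventually.of_forall fun t ht => ?_
    rw [norm_mul, Complex.norm_real, Real.norm_eq_abs]
    refine mul_le_mul ?_ le_rfl (norm_nonneg _) ha
    rw [abs_le]
    constructor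
    · have := le_max_right t (-a); linarith
    · exact max_le (Set.mem_Iic.mp ht) (by linarith)
  have hsplit : ∀ t : ℝ, ((a - max t (-a) : ℝ) : ℂ) * f t
      = (a : ℂ) * f t - ((max t (-a) : ℝ) : ℂ) * f t := by
    intro t; push_cast; ring
  rw [integral_congr_ae (Filter.Eventually.of_forall hsplit)]
  rw [integral_sub hint1 hint2]
  rw [integral_const_mul]

lemma oneD {f : ℝ → ℂ} (hf : Integrable f) (hsf : Integrable (fun s : ℝ => (s : ℂ) * f s))
    (hF : Integrable (fun s : ℝ => ∫ t in Set.Iic s, f t)) :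
    (∫ s : ℝ, ∫ t in Set.Iic s, f t) = -∫ s : ℝ, (s : ℂ) * f s := by
  have hB1 : Filter.Tendsto (fun a : ℝ => ∫ s in Set.Ioc (-a) a, (∫ t in Set.Iic s, f t))
      Filter.atTop (nhds (∫ s : ℝ, ∫ t in Set.Iic s, f t)) := by
    have h := intervalIntegral_tendsto_integral hF
      (tendsto_neg_atBot_iff.mpr Filter.tendsto_id) Filter.tendsto_id
    refine h.congr' ?_
    filter_upwards [Filter.eventually_ge_atTop (0:ℝ)] with a ha
    simp only [id_eq]
    rw [intervalIntegral.integral_of_le (by linarith)]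
  have hB2 := integral_Iic_tendsto hf
  have hB3 := tendsto_max_integral hf hsf
  have hmain : ∀ᶠ a : ℝ in Filter.atTop,
      (∫ s in Set.Ioc (-a) a, (∫ t in Set.Iic s, f t))
        + ∫ t in Set.Iic a, ((max t (-a) : ℝ) : ℂ) * f t
      = (a : ℂ) * ∫ t in Set.Iic a, f t := by
    filter_upwards [Filter.eventually_ge_atTop (0:ℝ)] with a ha
    rw [key_identity hf ha]
    ring
  have hB4 : Filter.Tendsto (fun a : ℝ => (a : ℂ) * ∫ t in Set.Iic a, f t)
      Filter.atTop (nhds ((∫ s : ℝ, ∫ t in Set.Iic s, f t) + ∫ t : ℝ, (t : ℂ) * f t)) :=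
    (hB1.add hB3).congr' hmain
  have hzero : (∫ t : ℝ, f t) = 0 := by
    have hinv : Filter.Tendsto (fun a : ℝ => ((a : ℂ))⁻¹) Filter.atTop (nhds 0) := by
      have h1 : Filter.Tendsto (fun a : ℝ => a⁻¹) Filter.atTop (nhds 0) :=
        tendsto_inv_atTop_zero
      have h2 := (Complex.continuous_ofReal.tendsto 0).comp h1
      refine h2.congr fun a => ?_
      simp [Complex.ofReal_inv]
    have hmul := hB4.mul hinv
    rw [mul_zero] at hmul
    have hcong : ∀ᶠ a : ℝ in Filter.atTop,
        ((a : ℂ) * ∫ t in Set.Iic a, f t) * ((a : ℂ))⁻¹ = ∫ t in Set.Iic a, f t := by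
      filter_upwards [Filter.eventually_ge_atTop (1:ℝ)] with a ha
      have : (a : ℂ) ≠ 0 := by
        simpa using (by linarith : a ≠ 0)
      field_simp
    have h0 : Filter.Tendsto (fun a : ℝ => ∫ t in Set.Iic a, f t) Filter.atTop (nhds 0) :=
      Filter.Tendsto.congr' hcong hmul
    exact tendsto_nhds_unique hB2 h0
  have htail : Filter.Tendsto (fun a : ℝ => ∫ t in Set.Ioi a, ‖(t : ℂ) * f t‖)
      Filter.atTop (nhds 0) := tendsto_tail_zero hsf.norm
  have hB5 : Filter.Tendsto (fun a : ℝ => (a : ℂ) * ∫ t in Set.Iic a, f t)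
      Filter.atTop (nhds 0) := by
    refine squeeze_zero_norm' ?_ htail
    filter_upwards [Filter.eventually_ge_atTop (0:ℝ)] with a ha
    have hcompl : (∫ t in Set.Iic a, f t) + ∫ t in Set.Ioi a, f t = 0 := by
      have := integral_add_compl (measurableSet_Iic (a := a)) hf
      rw [Set.compl_Iic, hzero] at this
      exact this
    have h1 : (a : ℂ) * ∫ t in Set.Iic a, f t = -∫ t in Set.Ioi a, (a : ℂ) * f t := by
      rw [integral_const_mul]
      have : (∫ t in Set.Iic a, f t) = -∫ t in Set.Ioi a, f t := by linear_combination hcompl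
      rw [this]
      ring
    rw [h1, norm_neg]
    refine (norm_integral_le_integral_norm _).trans ?_
    refine setIntegral_mono_on ((hf.const_mul _).restrict).norm
      (hsf.norm.restrict) measurableSet_Ioi fun t ht => ?_
    rw [norm_mul, norm_mul, Complex.norm_real, Complex.norm_real,
      Real.norm_eq_abs, Real.norm_eq_abs]
    refine mul_le_mul ?_ le_rfl (norm_nonneg _) (abs_nonneg _)
    rw [_root_.abs_of_nonneg ha, _root_.abs_of_nonneg (by linarith [Set.mem_Ioi.mp ht] : (0:ℝ) ≤ t)]
    exact (Set.mem_Ioi.mp ht).le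
  have := tendsto_nhds_unique hB4 hB5
  linear_combination this

end PB


open PB in
/-- The image of the p-mechanical bracket `⟦k₁,k₂⟧ = A(k₁ ⋆ k₂ − k₂ ⋆ k₁)` under the
one-dimensional representation `ρ_{(q,p)}` is the Poisson bracket of the classical
observables `k̂₁`, `k̂₂` (whose partial derivatives in `(q,p)` exist). -/
theorem pbracket_represents_poisson (n : ℕ) (hn : 1 ≤ n) (k₁ k₂ : Hn n → ℂ)
    (h₁ : Integrable (fun g : Hn n =>
      ((1 + |g.1| + ‖g.2.1‖ + ‖g.2.2‖ : ℝ) : ℂ) * k₁ g))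
    (h₂ : Integrable (fun g : Hn n =>
      ((1 + |g.1| + ‖g.2.1‖ + ‖g.2.2‖ : ℝ) : ℂ) * k₂ g))
    (hA : Integrable (AopH (fun g => hconv k₁ k₂ g - hconv k₂ k₁ g)))
    (q p : Fin n → ℝ) :
    DifferentiableAt ℝ (khat k₁) (q, p) ∧ DifferentiableAt ℝ (khat k₂) (q, p) ∧
      (∫ g : Hn n, pbracket k₁ k₂ g * charQP q p g) =
        ∑ j : Fin n,
          (fderiv ℝ (khat k₁) (q, p) (Pi.single j 1, 0) *
              fderiv ℝ (khat k₂) (q, p) (0, Pi.single j 1) -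
            fderiv ℝ (khat k₁) (q, p) (0, Pi.single j 1) *
              fderiv ℝ (khat k₂) (q, p) (Pi.single j 1, 0)) := by
  have hk₁ : Integrable (fun g : Hn n => ((wt g : ℝ) : ℂ) * k₁ g) := h₁
  have hk₂ : Integrable (fun g : Hn n => ((wt g : ℝ) : ℂ) * k₂ g) := h₂
  refine ⟨khat_differentiableAt q p hk₁, khat_differentiableAt q p hk₂, ?_⟩
  -- rewrite the right-hand side
  have hRHS : ∑ j : Fin n,
      (fderiv ℝ (khat k₁) (q, p) (Pi.single j 1, 0) *
          fderiv ℝ (khat k₂) (q, p) (0, Pi.single j 1) -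
        fderiv ℝ (khat k₁) (q, p) (0, Pi.single j 1) *
          fderiv ℝ (khat k₂) (q, p) (Pi.single j 1, 0))
      = -∑ j : Fin n, (XI q p k₁ j * YI q p k₂ j - YI q p k₁ j * XI q p k₂ j) := by
    rw [← Finset.sum_neg_distrib]
    refine Finset.sum_congr rfl fun j _ => ?_
    rw [khat_fderiv_q q p hk₁ j, khat_fderiv_p q p hk₂ j,
      khat_fderiv_p q p hk₁ j, khat_fderiv_q q p hk₂ j]
    linear_combination (XI q p k₁ j * YI q p k₂ j - YI q p k₁ j * XI q p k₂ j) *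
      Complex.I_mul_I
  rw [hRHS]
  -- the left-hand side
  set f : Hn n → ℂ := fun g => hconv k₁ k₂ g - hconv k₂ k₁ g with hfdef
  have hone : ∀ g : Hn n, ‖(1 : ℂ)‖ ≤ 1 := fun _ => by norm_num
  have hcn : ∀ g : Hn n, ‖charQP q p g‖ ≤ 1 := fun g => (norm_charQP q p g).le
  have hcc := continuous_charQP q p
  -- integrability of the convolutions with various weights
  have i1 : Integrable (fun g : Hn n => hconv k₁ k₂ g) := by
    have := integrable_weighted_hconv hk₁ hk₂ (fun _ => 1) continuous_const abs_one_le_wt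
      (fun _ => 1) continuous_const hone
    simpa using this
  have i2 : Integrable (fun g : Hn n => hconv k₂ k₁ g) := by
    have := integrable_weighted_hconv hk₂ hk₁ (fun _ => 1) continuous_const abs_one_le_wt
      (fun _ => 1) continuous_const hone
    simpa using this
  have i3 : Integrable (fun g : Hn n => (g.1 : ℂ) * hconv k₁ k₂ g) := by
    have := integrable_weighted_hconv hk₁ hk₂ (fun g => g.1) continuous_fst abs_fst_le_wt
      (fun _ => 1) continuous_const hone
    simpa using this
  have i4 : Integrable (fun g : Hn n => (g.1 : ℂ) * hconv k₂ k₁ g) := by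
    have := integrable_weighted_hconv hk₂ hk₁ (fun g => g.1) continuous_fst abs_fst_le_wt
      (fun _ => 1) continuous_const hone
    simpa using this
  have i5 : Integrable (fun g : Hn n => ((g.1 : ℂ) * charQP q p g) * hconv k₁ k₂ g) :=
    integrable_weighted_hconv hk₁ hk₂ (fun g => g.1) continuous_fst abs_fst_le_wt
      (charQP q p) hcc hcn
  have i6 : Integrable (fun g : Hn n => ((g.1 : ℂ) * charQP q p g) * hconv k₂ k₁ g) :=
    integrable_weighted_hconv hk₂ hk₁ (fun g => g.1) continuous_fst abs_fst_le_wt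
      (charQP q p) hcc hcn
  have h_f_int : Integrable f := by exact i1.sub i2
  have h_sf_int : Integrable (fun g : Hn n => (g.1 : ℂ) * f g) := by
    refine (i3.sub i4).congr (Filter.Eventually.of_forall fun g => ?_)
    simp only [Pi.sub_apply]
    rw [hfdef]
    ring
  have h_sfc_int : Integrable (fun g : Hn n => ((g.1 : ℂ) * charQP q p g) * f g) := by
    refine (i5.sub i6).congr (Filter.Eventually.of_forall fun g => ?_)
    simp only [Pi.sub_apply]
    rw [hfdef]
    ring
  have hint_lhs : Integrable (fun g : Hn n => AopH f g * charQP q p g) := by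
    have := hA.bdd_mul hcc.aestronglyMeasurable (ae_of_all _ hcn)
    refine this.congr (Filter.Eventually.of_forall fun g => ?_)
    exact mul_comm _ _
  -- sections
  have hprod_f : Integrable f ((volume : Measure ℝ).prod volume) := by
    rw [← Measure.volume_eq_prod]; exact h_f_int
  have hprod_sf : Integrable (fun g : Hn n => (g.1 : ℂ) * f g)
      ((volume : Measure ℝ).prod volume) := by
    rw [← Measure.volume_eq_prod]; exact h_sf_int
  have hprod_A : Integrable (AopH f) ((volume : Measure ℝ).prod volume) := by
    rw [← Measure.volume_eq_prod]; exact hA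
  have hprod_Ac : Integrable (fun g : Hn n => AopH f g * charQP q p g)
      ((volume : Measure ℝ).prod volume) := by
    rw [← Measure.volume_eq_prod]; exact hint_lhs
  have hprod_sfc : Integrable (fun g : Hn n => ((g.1 : ℂ) * charQP q p g) * f g)
      ((volume : Measure ℝ).prod volume) := by
    rw [← Measure.volume_eq_prod]; exact h_sfc_int
  have hae : ∀ᵐ w : (Fin n → ℝ) × (Fin n → ℝ) ∂volume,
      (∫ s : ℝ, AopH f (s, w)) = -∫ s : ℝ, (s : ℂ) * f (s, w) := by
    filter_upwards [hprod_f.prod_left_ae, hprod_sf.prod_left_ae, hprod_A.prod_left_ae]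
      with w hw1 hw2 hw3
    exact PB.oneD hw1 hw2 hw3
  -- main computation
  have step1 : (∫ g : Hn n, pbracket k₁ k₂ g * charQP q p g)
      = ∫ w : (Fin n → ℝ) × (Fin n → ℝ),
          ∫ s : ℝ, AopH f (s, w) * charQP q p (s, w) := by
    exact integral_prod_symm (fun z : Hn n => AopH f z * charQP q p z) hprod_Ac
  have step2 : (∫ w : (Fin n → ℝ) × (Fin n → ℝ), ∫ s : ℝ, AopH f (s, w) * charQP q p (s, w))
      = ∫ w : (Fin n → ℝ) × (Fin n → ℝ),
          (∫ s : ℝ, AopH f (s, w)) * charQP q p ((0 : ℝ), w) := by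
    refine integral_congr_ae (Filter.Eventually.of_forall fun w => ?_)
    exact integral_mul_const (charQP q p ((0 : ℝ), w)) (fun s : ℝ => AopH f (s, w))
  have step3 : (∫ w : (Fin n → ℝ) × (Fin n → ℝ),
        (∫ s : ℝ, AopH f (s, w)) * charQP q p ((0 : ℝ), w))
      = -∫ w : (Fin n → ℝ) × (Fin n → ℝ),
          ∫ s : ℝ, ((s : ℂ) * charQP q p (s, w)) * f (s, w) := by
    rw [← integral_neg]
    refine integral_congr_ae ?_
    filter_upwards [hae] with w hw
    rw [hw]
    have h1 : ∫ s : ℝ, ((s : ℂ) * charQP q p (s, w)) * f (s, w)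
        = (∫ s : ℝ, (s : ℂ) * f (s, w)) * charQP q p ((0 : ℝ), w) := by
      have h2 := integral_mul_const (μ := volume) (charQP q p ((0 : ℝ), w))
        (fun s : ℝ => (s : ℂ) * f (s, w))
      rw [← h2]
      refine integral_congr_ae (Filter.Eventually.of_forall fun s => ?_)
      have hch : charQP q p ((s : ℝ), w) = charQP q p ((0 : ℝ), w) := rfl
      show (s : ℂ) * charQP q p ((s : ℝ), w) * f (s, w)
        = (s : ℂ) * f (s, w) * charQP q p ((0 : ℝ), w)
      rw [hch]
      ring
    rw [h1]
    ring
  have step4 : (∫ w : (Fin n → ℝ) × (Fin n → ℝ),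
        ∫ s : ℝ, ((s : ℂ) * charQP q p (s, w)) * f (s, w))
      = ∫ g : Hn n, ((g.1 : ℂ) * charQP q p g) * f g :=
    (integral_prod_symm (fun z : Hn n => ((z.1 : ℂ) * charQP q p z) * f z) hprod_sfc).symm
  have step5 : (∫ g : Hn n, ((g.1 : ℂ) * charQP q p g) * f g)
      = ∑ j : Fin n, (XI q p k₁ j * YI q p k₂ j - YI q p k₁ j * XI q p k₂ j) := by
    have hsub : (∫ g : Hn n, ((g.1 : ℂ) * charQP q p g) * f g)
        = (∫ g : Hn n, ((g.1 : ℂ) * charQP q p g) * hconv k₁ k₂ g)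
          - ∫ g : Hn n, ((g.1 : ℂ) * charQP q p g) * hconv k₂ k₁ g := by
      rw [← integral_sub i5 i6]
      refine integral_congr_ae (Filter.Eventually.of_forall fun g => ?_)
      simp only [Pi.sub_apply]
      rw [hfdef]
      ring
    rw [hsub]
    exact integral_sconv_sub q p hk₁ hk₂
  calc (∫ g : Hn n, pbracket k₁ k₂ g * charQP q p g)
      = -∫ w : (Fin n → ℝ) × (Fin n → ℝ),
          ∫ s : ℝ, ((s : ℂ) * charQP q p (s, w)) * f (s, w) := by
        rw [step1, step2, step3]
    _ = -∑ j : Fin n, (XI q p k₁ j * YI q p k₂ j - YI q p k₁ j * XI q p k₂ j) := by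
        rw [step4, step5]
end
end

section
/- Let ℏ > 0, let k₁, k₂ : ℝ × ℝⁿ × ℝⁿ → ℂ be integrable, assume that the commutator c = k₁ ⋆ k₂ − k₂ ⋆ k₁ and its antiderivative A c (taken in the variable s) are integrable on ℝ × ℝⁿ × ℝⁿ, and let u : ℝⁿ → ℂ be bounded and measurable. Then for every v ∈ ℝⁿ, (ρ_ℏ(⟦k₁,k₂⟧)u)(v) = (1/(iℏ)) [ (ρ_ℏ(k₁)(ρ_ℏ(k₂)u))(v) − (ρ_ℏ(k₂)(ρ_ℏ(k₁)u))(v) ]; that is, the image of the p-mechanical bracket under the Schrödinger representation ρ_ℏ is 1/(iℏ) times the operator commutator of the images of k₁ and k₂. -/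
open MeasureTheory

noncomputable section

/-- The Schrödinger representation of the Heisenberg group on functions `u : ℝⁿ → ℂ`:
`(ρ_ℏ(s,x,y)u)(v) = e^{i(ℏ(s + ⟨x,y⟩/2) + ℏ^{1/2}⟨x,v⟩)} u(v + ℏ^{1/2} y)`. -/
def rhoPoint {n : ℕ} (ℏ : ℝ) (g : Hn n) (u : (Fin n → ℝ) → ℂ) :
    (Fin n → ℝ) → ℂ := fun v =>
  Complex.exp (Complex.I *
      ((ℏ * (g.1 + dotR g.2.1 g.2.2 / 2) + Real.sqrt ℏ * dotR g.2.1 v : ℝ) : ℂ)) *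
    u (v + Real.sqrt ℏ • g.2.2)

/-- The integrated Schrödinger representation:
`(ρ_ℏ(k)u)(v) = ∫ k(s,x,y) (ρ_ℏ(s,x,y)u)(v) ds dx dy`. -/
def rhoOp {n : ℕ} (ℏ : ℝ) (k : Hn n → ℂ) (u : (Fin n → ℝ) → ℂ) :
    (Fin n → ℝ) → ℂ := fun v =>
  ∫ g : Hn n, k g * rhoPoint ℏ g u v


/-! ### Auxiliary infrastructure -/

section Aux

open Complex MeasureTheory Set

variable {n : ℕ}

-- dotR algebra
lemma dotR_add_left {x x' y : Fin n → ℝ} : dotR (x + x') y = dotR x y + dotR x' y := by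
  simp [dotR, add_mul, Finset.sum_add_distrib]

lemma dotR_add_right {x y y' : Fin n → ℝ} : dotR x (y + y') = dotR x y + dotR x y' := by
  simp [dotR, mul_add, Finset.sum_add_distrib]

lemma dotR_sub_left {x x' y : Fin n → ℝ} : dotR (x - x') y = dotR x y - dotR x' y := by
  simp [dotR, sub_mul, Finset.sum_sub_distrib]

lemma dotR_sub_right {x y y' : Fin n → ℝ} : dotR x (y - y') = dotR x y - dotR x y' := by
  simp [dotR, mul_sub, Finset.sum_sub_distrib]

lemma continuous_dotR : Continuous (fun p : (Fin n → ℝ) × (Fin n → ℝ) => dotR p.1 p.2) := by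
  unfold dotR
  exact continuous_finset_sum _ fun j _ =>
    ((continuous_apply j).comp continuous_fst).mul ((continuous_apply j).comp continuous_snd)

-- instances
instance (n : ℕ) :
    Measure.IsAddRightInvariant (volume : Measure ((Fin n → ℝ) × (Fin n → ℝ))) :=
  Measure.prod.instIsAddRightInvariant

instance (n : ℕ) : Measure.IsAddRightInvariant (volume : Measure (Hn n)) :=
  Measure.prod.instIsAddRightInvariant

-- group operations
/-- Product `h · g` in the Heisenberg group. -/
def hmul (h g : Hn n) : Hn n :=
  (h.1 + g.1 + (dotR h.2.1 g.2.2 - dotR g.2.1 h.2.2) / 2, h.2.1 + g.2.1, h.2.2 + g.2.2)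

/-- Product `h⁻¹ · g` in the Heisenberg group. -/
def hinvmul (h g : Hn n) : Hn n :=
  (g.1 - h.1 + (dotR g.2.1 h.2.2 - dotR h.2.1 g.2.2) / 2, g.2.1 - h.2.1, g.2.2 - h.2.2)

lemma hinvmul_hmul (h g : Hn n) : hinvmul h (hmul h g) = g := by
  simp only [hmul, hinvmul, dotR_add_left, dotR_add_right]
  refine Prod.ext ?_ (Prod.ext ?_ ?_) <;> simp <;> ring

lemma hmul_hinvmul (h g : Hn n) : hmul h (hinvmul h g) = g := by
  simp only [hmul, hinvmul, dotR_sub_left, dotR_sub_right]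
  refine Prod.ext ?_ (Prod.ext ?_ ?_) <;> simp <;> ring

lemma measurable_hmul : Measurable (Function.uncurry (hmul (n := n))) := by
  apply Measurable.prod
  · exact ((measurable_fst.comp measurable_fst).add (measurable_fst.comp measurable_snd)).add
      (((continuous_dotR.measurable.comp
          ((measurable_fst.comp (measurable_snd.comp measurable_fst)).prodMk
           (measurable_snd.comp (measurable_snd.comp measurable_snd)))).sub
        (continuous_dotR.measurable.comp
          ((measurable_fst.comp (measurable_snd.comp measurable_snd)).prodMk
           (measurable_snd.comp (measurable_snd.comp measurable_fst))))).div_const 2)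
  · exact ((measurable_fst.comp (measurable_snd.comp measurable_fst)).add
      (measurable_fst.comp (measurable_snd.comp measurable_snd))).prodMk
      ((measurable_snd.comp (measurable_snd.comp measurable_fst)).add
       (measurable_snd.comp (measurable_snd.comp measurable_snd)))

lemma measurable_hinvmul : Measurable (Function.uncurry (hinvmul (n := n))) := by
  apply Measurable.prod
  · exact ((measurable_fst.comp measurable_snd).sub (measurable_fst.comp measurable_fst)).add
      (((continuous_dotR.measurable.comp
          ((measurable_fst.comp (measurable_snd.comp measurable_snd)).prodMk
           (measurable_snd.comp (measurable_snd.comp measurable_fst)))).sub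
        (continuous_dotR.measurable.comp
          ((measurable_fst.comp (measurable_snd.comp measurable_fst)).prodMk
           (measurable_snd.comp (measurable_snd.comp measurable_snd))))).div_const 2)
  · exact ((measurable_fst.comp (measurable_snd.comp measurable_snd)).sub
      (measurable_fst.comp (measurable_snd.comp measurable_fst))).prodMk
      ((measurable_snd.comp (measurable_snd.comp measurable_snd)).sub
       (measurable_snd.comp (measurable_snd.comp measurable_fst)))

end Aux

section MP

open Complex MeasureTheory Set

variable {n : ℕ}

/-- The shear `(s, w) ↦ (s + q w, w)` on `ℝ × V` preserves volume. -/
lemma measurePreserving_shear {V : Type*} [MeasureSpace V] [SFinite (volume : Measure V)]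
    {q : V → ℝ} (hq : Measurable q) :
    MeasurePreserving (fun p : ℝ × V => (p.1 + q p.2, p.2)) volume volume := by
  have h1 : MeasurePreserving (fun p : V × ℝ => (p.1, p.2 + q p.1))
      ((volume : Measure V).prod (volume : Measure ℝ))
      ((volume : Measure V).prod (volume : Measure ℝ)) :=
    MeasurePreserving.skew_product (g := fun w s => s + q w) (MeasurePreserving.id _)
      (by exact measurable_snd.add (hq.comp measurable_fst))
      (Filter.Eventually.of_forall fun w => map_add_right_eq_self volume (q w))
  have h2 : MeasurePreserving (Prod.swap : ℝ × V → V × ℝ)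
      ((volume : Measure ℝ).prod (volume : Measure V))
      ((volume : Measure V).prod (volume : Measure ℝ)) := Measure.measurePreserving_swap
  have h3 : MeasurePreserving (Prod.swap : V × ℝ → ℝ × V)
      ((volume : Measure V).prod (volume : Measure ℝ))
      ((volume : Measure ℝ).prod (volume : Measure V)) := Measure.measurePreserving_swap
  have h4 := (h3.comp (h1.comp h2))
  have : (fun p : ℝ × V => (p.1 + q p.2, p.2)) = Prod.swap ∘ (fun p : V × ℝ =>
      (p.1, p.2 + q p.1)) ∘ Prod.swap := by
    funext p; rfl
  rw [this]
  exact h4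

/-- For each `h`, left translation-type map `g ↦ h⁻¹ · g` preserves volume on `Hn n`. -/
lemma measurePreserving_hinvmul (h : Hn n) :
    MeasurePreserving (hinvmul h) (volume : Measure (Hn n)) volume := by
  have hq : Measurable (fun w : (Fin n → ℝ) × (Fin n → ℝ) =>
      (dotR w.1 h.2.2 - dotR h.2.1 w.2) / 2) := by
    exact ((continuous_dotR.measurable.comp (measurable_fst.prodMk measurable_const)).sub
      (continuous_dotR.measurable.comp (measurable_const.prodMk measurable_snd))).div_const 2
  have hshear := measurePreserving_shear (V := (Fin n → ℝ) × (Fin n → ℝ)) hq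
  have htrans : MeasurePreserving
      (fun g : Hn n => g + (-h.1, -h.2.1, -h.2.2)) volume volume :=
    measurePreserving_add_right volume _
  have : hinvmul h = (fun g : Hn n => g + (-h.1, -h.2.1, -h.2.2)) ∘
      (fun p : ℝ × ((Fin n → ℝ) × (Fin n → ℝ)) =>
        (p.1 + (dotR p.2.1 h.2.2 - dotR h.2.1 p.2.2) / 2, p.2)) := by
    funext g
    simp only [hinvmul, Function.comp_apply, Prod.mk_add_mk, Prod.ext_iff]
    refine ⟨by ring, ?_, ?_⟩ <;> · simp [Prod.add_def, sub_eq_add_neg]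
  rw [this]
  exact htrans.comp hshear

/-- `(h, g) ↦ (h, h⁻¹ · g)` as a measurable equivalence of `Hn n × Hn n`. -/
def tauEquiv (n : ℕ) : (Hn n × Hn n) ≃ᵐ (Hn n × Hn n) where
  toFun p := (p.1, hinvmul p.1 p.2)
  invFun p := (p.1, hmul p.1 p.2)
  left_inv p := by simp [hmul_hinvmul]
  right_inv p := by simp [hinvmul_hmul]
  measurable_toFun := measurable_fst.prodMk measurable_hinvmul
  measurable_invFun := measurable_fst.prodMk measurable_hmul

lemma measurePreserving_tau (n : ℕ) :
    MeasurePreserving (tauEquiv n) (volume : Measure (Hn n × Hn n)) volume := by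
  rw [Measure.volume_eq_prod]
  exact MeasurePreserving.skew_product (MeasurePreserving.id _) measurable_hinvmul
    (Filter.Eventually.of_forall fun h => (measurePreserving_hinvmul h).map_eq)

/-- `(a, b) ↦ (a - b, a)` as a measurable equivalence of `ℝ × ℝ`. -/
def T2Equiv : (ℝ × ℝ) ≃ᵐ (ℝ × ℝ) where
  toFun p := (p.1 - p.2, p.1)
  invFun p := (p.2, p.2 - p.1)
  left_inv p := by simp
  right_inv p := by simp
  measurable_toFun := (measurable_fst.sub measurable_snd).prodMk measurable_fst
  measurable_invFun := measurable_snd.prodMk (measurable_snd.sub measurable_fst)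

lemma measurePreserving_T2 :
    MeasurePreserving (T2Equiv) (volume : Measure (ℝ × ℝ)) volume := by
  have h1 := measurePreserving_sub_prod (volume : Measure ℝ) (volume : Measure ℝ)
  have h2 := measurePreserving_prod_add_right (volume : Measure ℝ) (volume : Measure ℝ)
  have h3 := h2.comp h1
  have : ⇑T2Equiv = (fun z : ℝ × ℝ => (z.1, z.2 + z.1)) ∘ fun z : ℝ × ℝ => (z.1 - z.2, z.2) := by
    funext p
    show (p.1 - p.2, p.1) = (p.1 - p.2, p.2 + (p.1 - p.2))
    simp
  rw [this]
  exact h3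

end MP

section OneD

open Complex MeasureTheory Set

/-- Key 1-D fact: if `f` and its antiderivative are integrable, then the Fourier
coefficient of the antiderivative at `ℏ` is `-1/(iℏ)` times that of `f`. -/
lemma antideriv_fourier (ℏ : ℝ) (hℏ : 0 < ℏ) (f : ℝ → ℂ) (hf : Integrable f)
    (hAf : Integrable (fun s => ∫ t in Set.Iic s, f t)) :
    ∫ s, (∫ t in Set.Iic s, f t) * Complex.exp (Complex.I * ℏ * s)
      = -(1 / (Complex.I * ℏ)) * ∫ s, f s * Complex.exp (Complex.I * ℏ * s) := by
  set E : ℝ → ℂ := fun s => Complex.exp (Complex.I * ℏ * s) with hE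
  set Af : ℝ → ℂ := fun s => ∫ t in Set.Iic s, f t with hAfdef
  set h : ℝ := Real.pi / ℏ with hh
  have hπ : ℏ * h = Real.pi := by rw [hh]; field_simp
  have hhpos : 0 < h := by rw [hh]; positivity
  have hiℏ : (Complex.I * (ℏ : ℂ)) ≠ 0 := by simp [Complex.ext_iff, hℏ.ne']
  have hEadd : ∀ a b : ℝ, E (a + b) = E a * E b := by
    intro a b
    rw [hE]; simp only; rw [← Complex.exp_add]; congr 1; push_cast; ring
  have hEh : E h = -1 := by
    rw [hE]; simp only
    have : Complex.I * (ℏ : ℂ) * (h : ℂ) = (Real.pi : ℂ) * Complex.I := by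
      have : ((ℏ : ℂ) * (h : ℂ)) = ((Real.pi : ℝ) : ℂ) := by push_cast [← hπ]; ring
      rw [mul_assoc, this]; ring
    rw [this, Complex.exp_pi_mul_I]
  have hEnorm : ∀ s, ‖E s‖ = 1 := by
    intro s
    rw [hE]; simp only
    have : Complex.I * (ℏ : ℂ) * (s : ℂ) = ((ℏ * s : ℝ) : ℂ) * Complex.I := by push_cast; ring
    rw [this, Complex.norm_exp_ofReal_mul_I]
  have hEcont : Continuous E :=
    Complex.continuous_exp.comp (continuous_const.mul Complex.continuous_ofReal)
  have hEmeas : AEStronglyMeasurable E volume := hEcont.aestronglyMeasurable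
  -- integrability
  have intAfE : Integrable (fun s => Af s * E s) := by
    simpa [mul_comm] using hAf.bdd_mul hEmeas (Filter.Eventually.of_forall fun s => (hEnorm s).le)
  have intAfhE : Integrable (fun s => Af (s + h) * E s) := by
    simpa [mul_comm] using (hAf.comp_add_right h).bdd_mul hEmeas (Filter.Eventually.of_forall fun s => (hEnorm s).le)
  have intfE : Integrable (fun s => f s * E s) := by
    simpa [mul_comm] using hf.bdd_mul hEmeas (Filter.Eventually.of_forall fun s => (hEnorm s).le)
  -- Step 1: shift identity
  have step1 : ∫ s, Af (s + h) * E s = -∫ s, Af s * E s := by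
    calc ∫ s, Af (s + h) * E s = ∫ s, -(Af (s + h) * E (s + h)) := by
          refine integral_congr_ae (Filter.Eventually.of_forall fun s => ?_)
          show Af (s + h) * E s = -(Af (s + h) * E (s + h))
          rw [hEadd s h, hEh]; ring
      _ = -∫ s, (fun r => Af r * E r) (s + h) := by rw [integral_neg]
      _ = -∫ s, Af s * E s := by rw [integral_add_right_eq_self (fun r => Af r * E r) h]
  -- Step 2
  have step2 : ∀ s : ℝ, Af (s + h) - Af s = ∫ t, (Set.Ioc s (s + h)).indicator f t := by
    intro s
    rw [integral_indicator measurableSet_Ioc]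
    have hu : Set.Iic s ∪ Set.Ioc s (s + h) = Set.Iic (s + h) :=
      Set.Iic_union_Ioc_eq_Iic (by linarith)
    have : ∫ t in Set.Iic s ∪ Set.Ioc s (s + h), f t
        = (∫ t in Set.Iic s, f t) + ∫ t in Set.Ioc s (s + h), f t :=
      MeasureTheory.setIntegral_union (Set.Iic_disjoint_Ioc le_rfl)
        measurableSet_Ioc hf.integrableOn hf.integrableOn
    rw [hu] at this
    rw [hAfdef]; simp only
    rw [this]; ring
  -- Step 4 : the joint function and the change of variables
  set Q : ℝ × ℝ → ℂ := fun p => (Set.Ioc p.1 (p.1 + h)).indicator f p.2 * E p.1 with hQ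
  set W : ℝ → ℂ := (Set.Ioc (0:ℝ) h).indicator (fun b => Complex.exp (-(Complex.I * ℏ * b)))
    with hW
  set R : ℝ × ℝ → ℂ := fun p => (f p.1 * E p.1) * W p.2 with hR
  have hQT : ∀ p : ℝ × ℝ, Q (T2Equiv p) = R p := by
    rintro ⟨a, b⟩
    show (Set.Ioc (a - b) (a - b + h)).indicator f a * E (a - b) = (f a * E a) * W b
    by_cases hb : b ∈ Set.Ioc (0:ℝ) h
    · have ha : a ∈ Set.Ioc (a - b) (a - b + h) := by
        simp only [Set.mem_Ioc] at hb ⊢; constructor <;> linarith [hb.1, hb.2]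
      rw [Set.indicator_of_mem ha, hW, Set.indicator_of_mem hb]
      have : E (a - b) = E a * Complex.exp (-(Complex.I * ℏ * b)) := by
        rw [hE]; simp only; rw [← Complex.exp_add]; congr 1; push_cast; ring
      rw [this]; ring
    · have ha : a ∉ Set.Ioc (a - b) (a - b + h) := by
        simp only [Set.mem_Ioc, not_and_or] at hb ⊢
        rcases hb with hb | hb
        · left; intro hcon; linarith
        · right; intro hcon; linarith
      rw [Set.indicator_of_notMem ha, hW, Set.indicator_of_notMem hb]
      ring_nf
  have intW : Integrable W := by
    rw [hW]
    refine IntegrableOn.integrable_indicator ?_ measurableSet_Ioc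
    exact (Complex.continuous_exp.comp
      ((continuous_const.mul Complex.continuous_ofReal).neg)).integrableOn_Ioc
  have intR : Integrable R := intfE.mul_prod intW
  have intQ : Integrable Q := by
    rw [← (measurePreserving_T2).integrable_comp_emb T2Equiv.measurableEmbedding]
    exact (integrable_congr (Filter.Eventually.of_forall fun p => hQT p)).mpr intR
  have intQval : ∫ p : ℝ × ℝ, Q p = (∫ s, f s * E s) * ∫ b, W b := by
    rw [← (measurePreserving_T2).integral_comp T2Equiv.measurableEmbedding Q]
    calc ∫ p : ℝ × ℝ, Q (T2Equiv p) = ∫ p : ℝ × ℝ, R p :=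
          integral_congr_ae (Filter.Eventually.of_forall fun p => hQT p)
      _ = (∫ s, f s * E s) * ∫ b, W b := by
          rw [Measure.volume_eq_prod]
          exact integral_prod_mul (fun s => f s * E s) W
  have intWval : ∫ b, W b = 2 / (Complex.I * ℏ) := by
    rw [hW, integral_indicator measurableSet_Ioc, ← intervalIntegral.integral_of_le hhpos.le]
    have hc : (-(Complex.I * (ℏ:ℂ))) ≠ 0 := by simpa using hiℏ
    have := integral_exp_mul_complex (a := 0) (b := h) hc
    simp only [neg_mul, mul_assoc] at this ⊢
    rw [this]
    have h1 : Complex.exp (-(Complex.I * ((ℏ:ℂ) * (h:ℂ)))) = -1 := by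
      rw [Complex.exp_neg]
      have : Complex.exp (Complex.I * ((ℏ:ℂ) * (h:ℂ))) = -1 := by
        rw [← mul_assoc]; exact hEh
      rw [this]; norm_num
    rw [h1]
    simp only [Complex.ofReal_zero, mul_zero, neg_zero, Complex.exp_zero]
    field_simp
    ring
  -- Step 5: combine
  have lhs_eq : ∫ s, (Af (s + h) - Af s) * E s = -(2:ℂ) * ∫ s, Af s * E s := by
    simp only [sub_mul]
    rw [integral_sub intAfhE intAfE, step1]
    ring
  have rhs_eq : ∫ s, (Af (s + h) - Af s) * E s
      = (∫ s, f s * E s) * (2 / (Complex.I * ℏ)) := by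
    have e1 : ∀ s, (Af (s + h) - Af s) * E s = ∫ t, Q (s, t) := by
      intro s
      rw [step2 s, ← integral_mul_const]
    calc ∫ s, (Af (s + h) - Af s) * E s = ∫ s, ∫ t, Q (s, t) :=
          integral_congr_ae (Filter.Eventually.of_forall fun s => e1 s)
      _ = ∫ p : ℝ × ℝ, Q p := by
          rw [Measure.volume_eq_prod]
          exact integral_integral (f := fun s t => Q (s, t)) (by exact intQ)
      _ = (∫ s, f s * E s) * (2 / (Complex.I * ℏ)) := by rw [intQval, intWval]
  have key : -(2:ℂ) * ∫ s, Af s * E s = (∫ s, f s * E s) * (2 / (Complex.I * ℏ)) := by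
    rw [← lhs_eq, rhs_eq]
  have : ∫ s, Af s * E s = -(1 / (Complex.I * ℏ)) * ∫ s, f s * E s := by
    field_simp at key ⊢
    linear_combination -key
  exact this

end OneD

section LemA

open Complex MeasureTheory Set

lemma norm_exp_I_mul_real (r : ℝ) : ‖Complex.exp (Complex.I * r)‖ = 1 := by
  rw [mul_comm, Complex.norm_exp_ofReal_mul_I]

variable {n : ℕ}

lemma rhoOp_AopH (ℏ : ℝ) (hℏ : 0 < ℏ) (c : Hn n → ℂ) (hc : Integrable c)
    (hAc : Integrable (AopH c)) (u : (Fin n → ℝ) → ℂ) (hu : Measurable u) (C : ℝ)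
    (hu_bd : ∀ w, ‖u w‖ ≤ C) (v : Fin n → ℝ) :
    rhoOp ℏ (AopH c) u v = -(1 / (Complex.I * ℏ)) * rhoOp ℏ c u v := by
  set E : ℝ → ℂ := fun s => Complex.exp (Complex.I * ℏ * s) with hEdef
  set ψ : (Fin n → ℝ) × (Fin n → ℝ) → ℂ := fun w =>
    Complex.exp (Complex.I * ((ℏ * (dotR w.1 w.2 / 2) + Real.sqrt ℏ * dotR w.1 v : ℝ) : ℂ)) *
      u (v + Real.sqrt ℏ • w.2) with hψdef
  have hfac : ∀ g : Hn n, rhoPoint ℏ g u v = E g.1 * ψ g.2 := by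
    intro g
    rw [rhoPoint, hEdef, hψdef]
    simp only
    rw [← mul_assoc, ← Complex.exp_add]
    congr 2
    push_cast
    ring
  have hψmeas : Measurable ψ := by
    apply Measurable.mul
    · apply (Complex.continuous_exp.comp ?_).measurable
      apply continuous_const.mul
      apply Complex.continuous_ofReal.comp
      exact ((continuous_const.mul (continuous_dotR.div_const 2)).add
        (continuous_const.mul (continuous_dotR.comp
          (continuous_fst.prodMk continuous_const))))
    · exact hu.comp ((measurable_snd.const_smul (Real.sqrt ℏ)).const_add v)
  have hEnorm : ∀ s, ‖E s‖ = 1 := by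
    intro s
    rw [hEdef]
    simp only
    rw [mul_assoc, ← Complex.ofReal_mul]
    exact norm_exp_I_mul_real _
  have hψbd : ∀ w, ‖ψ w‖ ≤ C := by
    intro w
    rw [hψdef]
    simp only [norm_mul, norm_exp_I_mul_real]
    simpa using hu_bd _
  have hΦmeas : AEStronglyMeasurable (fun g : Hn n => E g.1 * ψ g.2) volume := by
    apply Measurable.aestronglyMeasurable
    exact ((Complex.continuous_exp.comp
      (continuous_const.mul Complex.continuous_ofReal)).measurable.comp measurable_fst).mul
      (hψmeas.comp measurable_snd)
  have hΦbd : ∀ g : Hn n, ‖E g.1 * ψ g.2‖ ≤ C := by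
    intro g
    rw [norm_mul, hEnorm, one_mul]
    exact hψbd _
  have intA : Integrable (fun g : Hn n => AopH c g * (E g.1 * ψ g.2)) := by
    simpa [mul_comm] using hAc.bdd_mul hΦmeas (Filter.Eventually.of_forall hΦbd)
  have intC : Integrable (fun g : Hn n => c g * (E g.1 * ψ g.2)) := by
    simpa [mul_comm] using hc.bdd_mul hΦmeas (Filter.Eventually.of_forall hΦbd)
  have hvol : (volume : Measure (Hn n))
      = (volume : Measure ℝ).prod (volume : Measure ((Fin n → ℝ) × (Fin n → ℝ))) :=
    Measure.volume_eq_prod _ _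
  have hc' : Integrable c
      ((volume : Measure ℝ).prod (volume : Measure ((Fin n → ℝ) × (Fin n → ℝ)))) := by
    rw [← hvol]; exact hc
  have hAc' : Integrable (AopH c)
      ((volume : Measure ℝ).prod (volume : Measure ((Fin n → ℝ) × (Fin n → ℝ)))) := by
    rw [← hvol]; exact hAc
  have slice_c := hc'.prod_left_ae
  have slice_Ac := hAc'.prod_left_ae
  calc rhoOp ℏ (AopH c) u v = ∫ g : Hn n, AopH c g * (E g.1 * ψ g.2) := by
        rw [rhoOp]
        refine integral_congr_ae (Filter.Eventually.of_forall fun g => ?_)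
        show AopH c g * rhoPoint ℏ g u v = AopH c g * (E g.1 * ψ g.2)
        rw [hfac g]
    _ = ∫ w, ∫ s, AopH c (s, w) * (E s * ψ w) := by
        rw [hvol]
        exact integral_prod_symm _ (by exact intA)
    _ = ∫ w, -(1 / (Complex.I * ℏ)) * ∫ s, c (s, w) * (E s * ψ w) := by
        refine integral_congr_ae ?_
        filter_upwards [slice_c, slice_Ac] with w hw1 hw2
        have hw2' : Integrable (fun s => ∫ t in Set.Iic s, c (t, w)) := by exact hw2
        calc ∫ s, AopH c (s, w) * (E s * ψ w)
            = (∫ s, (∫ t in Set.Iic s, c (t, w)) * E s) * ψ w := by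
              rw [← integral_mul_const]
              refine integral_congr_ae (Filter.Eventually.of_forall fun s => ?_)
              show AopH c (s, w) * (E s * ψ w) = (∫ t in Set.Iic s, c (t, w)) * E s * ψ w
              have : AopH c (s, w) = ∫ t in Set.Iic s, c (t, w) := rfl
              rw [this]; ring
          _ = (-(1 / (Complex.I * ℏ)) * ∫ s, c (s, w) * E s) * ψ w := by
              rw [antideriv_fourier ℏ hℏ (fun t => c (t, w)) hw1 hw2']
          _ = -(1 / (Complex.I * ℏ)) * ∫ s, c (s, w) * (E s * ψ w) := by
              have : ∫ s, c (s, w) * (E s * ψ w) = (∫ s, c (s, w) * E s) * ψ w := by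
                rw [← integral_mul_const]
                exact integral_congr_ae (Filter.Eventually.of_forall fun s => by ring)
              rw [this]; ring
    _ = -(1 / (Complex.I * ℏ)) * ∫ w, ∫ s, c (s, w) * (E s * ψ w) := integral_const_mul _ _
    _ = -(1 / (Complex.I * ℏ)) * rhoOp ℏ c u v := by
        congr 1
        rw [rhoOp]
        have h2 : ∫ g : Hn n, c g * rhoPoint ℏ g u v = ∫ g : Hn n, c g * (E g.1 * ψ g.2) := by
          refine integral_congr_ae (Filter.Eventually.of_forall fun g => ?_)
          show c g * rhoPoint ℏ g u v = c g * (E g.1 * ψ g.2)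
          rw [hfac g]
        rw [h2, hvol]
        exact (integral_prod_symm _ (by exact intC)).symm

end LemA

section LemB

open Complex MeasureTheory Set

variable {n : ℕ}

lemma dotR_smul_right {x y : Fin n → ℝ} {r : ℝ} : dotR x (r • y) = r * dotR x y := by
  simp [dotR, Finset.mul_sum, mul_comm, mul_assoc, mul_left_comm]

/-- The Schrödinger representation is an anti-homomorphism:
`ρ(a·b) = ρ(b) ∘ ρ(a)`. -/
lemma rhoPoint_hmul (ℏ : ℝ) (hℏ : 0 < ℏ) (a b : Hn n) (u : (Fin n → ℝ) → ℂ)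
    (v : Fin n → ℝ) :
    rhoPoint ℏ (hmul a b) u v = rhoPoint ℏ b (rhoPoint ℏ a u) v := by
  have hsq : Real.sqrt ℏ * Real.sqrt ℏ = ℏ := Real.mul_self_sqrt hℏ.le
  simp only [rhoPoint, hmul]
  rw [← mul_assoc, ← Complex.exp_add]
  congr 1
  · congr 1
    rw [← mul_add, ← Complex.ofReal_add]
    congr 1
    refine Complex.ofReal_inj.mpr ?_
    simp only [dotR_add_left, dotR_add_right, dotR_smul_right]
    linear_combination -(dotR a.2.1 b.2.2) * hsq
  · congr 1
    rw [smul_add]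
    abel

lemma measurable_rhoPoint_g (ℏ : ℝ) (u : (Fin n → ℝ) → ℂ) (hu : Measurable u)
    (v : Fin n → ℝ) : Measurable (fun g : Hn n => rhoPoint ℏ g u v) := by
  apply Measurable.mul
  · apply (Complex.continuous_exp.comp ?_).measurable
    apply continuous_const.mul
    apply Complex.continuous_ofReal.comp
    exact (continuous_const.mul (continuous_fst.add
        ((continuous_dotR.comp continuous_snd).div_const 2))).add
      (continuous_const.mul (continuous_dotR.comp
        ((continuous_fst.comp continuous_snd).prodMk continuous_const)))
  · exact hu.comp (((measurable_snd.comp measurable_snd).const_smul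
      (Real.sqrt ℏ)).const_add v)

lemma norm_rhoPoint_le (ℏ : ℝ) (u : (Fin n → ℝ) → ℂ) (C : ℝ) (hu_bd : ∀ w, ‖u w‖ ≤ C)
    (g : Hn n) (v : Fin n → ℝ) : ‖rhoPoint ℏ g u v‖ ≤ C := by
  rw [rhoPoint]
  simp only [norm_mul, norm_exp_I_mul_real, one_mul]
  exact hu_bd _

/-- Main convolution lemma: integrability of the integrand and the
anti-homomorphism property of the integrated representation. -/
lemma rhoOp_hconv_aux (ℏ : ℝ) (hℏ : 0 < ℏ) (k₁ k₂ : Hn n → ℂ)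
    (h₁ : Integrable k₁) (h₂ : Integrable k₂) (u : (Fin n → ℝ) → ℂ)
    (hu : Measurable u) (C : ℝ) (hu_bd : ∀ w, ‖u w‖ ≤ C) (v : Fin n → ℝ) :
    Integrable (fun g : Hn n => hconv k₁ k₂ g * rhoPoint ℏ g u v) ∧
      rhoOp ℏ (hconv k₁ k₂) u v = rhoOp ℏ k₂ (rhoOp ℏ k₁ u) v := by
  set Φ : Hn n → ℂ := fun g => rhoPoint ℏ g u v with hΦdef
  have hΦmeas : Measurable Φ := measurable_rhoPoint_g ℏ u hu v
  have hΦbd : ∀ g, ‖Φ g‖ ≤ C := fun g => norm_rhoPoint_le ℏ u C hu_bd g v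
  have hC0 : 0 ≤ C := le_trans (norm_nonneg _) (hu_bd v)
  set K : Hn n × Hn n → ℂ := fun p => k₁ p.1 * k₂ p.2 * Φ (hmul p.1 p.2) with hKdef
  have hvol2 : (volume : Measure (Hn n × Hn n))
      = (volume : Measure (Hn n)).prod (volume : Measure (Hn n)) :=
    Measure.volume_eq_prod _ _
  have h₁' : Integrable k₁ ((volume : Measure (Hn n)).prod (volume : Measure (Hn n))
      |> fun _ => (volume : Measure (Hn n))) := h₁
  -- integrability of K
  have hKaesm : AEStronglyMeasurable K
      ((volume : Measure (Hn n)).prod (volume : Measure (Hn n))) := by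
    apply AEStronglyMeasurable.mul
    · exact AEStronglyMeasurable.mul
        (h₁.aestronglyMeasurable.comp_quasiMeasurePreserving
          Measure.quasiMeasurePreserving_fst)
        (h₂.aestronglyMeasurable.comp_quasiMeasurePreserving
          Measure.quasiMeasurePreserving_snd)
    · exact (hΦmeas.comp measurable_hmul).aestronglyMeasurable
  have intK : Integrable K ((volume : Measure (Hn n)).prod (volume : Measure (Hn n))) := by
    refine Integrable.mono' ((h₁.norm.mul_prod h₂.norm).mul_const C) hKaesm ?_
    refine Filter.Eventually.of_forall fun p => ?_
    rw [hKdef]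
    simp only [norm_mul]
    exact mul_le_mul_of_nonneg_left (hΦbd _) (by positivity)
  have intK' : Integrable K (volume : Measure (Hn n × Hn n)) := by
    rw [hvol2]; exact intK
  -- transfer through the change of variables τ
  set F : Hn n × Hn n → ℂ := fun p => k₁ p.1 * k₂ (hinvmul p.1 p.2) * Φ p.2 with hFdef
  have hFK : ∀ p : Hn n × Hn n, K (tauEquiv n p) = F p := by
    intro p
    show k₁ p.1 * k₂ (hinvmul p.1 p.2) * Φ (hmul p.1 (hinvmul p.1 p.2)) = _
    rw [hmul_hinvmul]
  have intF : Integrable F (volume : Measure (Hn n × Hn n)) := by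
    have := ((measurePreserving_tau n).integrable_comp_emb
      (tauEquiv n).measurableEmbedding).mpr intK'
    exact (integrable_congr (Filter.Eventually.of_forall hFK)).mp this
  have intF' : Integrable F ((volume : Measure (Hn n)).prod (volume : Measure (Hn n))) := by
    rw [← hvol2]; exact intF
  -- the convolution-integrand identity
  have e1 : ∀ g : Hn n, hconv k₁ k₂ g * Φ g = ∫ h : Hn n, F (h, g) := by
    intro g
    show (∫ h : Hn n, k₁ h * k₂ (hinvmul h g)) * Φ g
      = ∫ h : Hn n, k₁ h * k₂ (hinvmul h g) * Φ g
    exact (integral_mul_const _ _).symm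
  constructor
  · refine (integrable_congr (Filter.Eventually.of_forall fun g => (e1 g).symm)).mp ?_
    exact intF'.integral_prod_right
  -- the main equality
  have hπh : ∀ g' : Hn n, (∫ h : Hn n, K (h, g'))
      = k₂ g' * rhoPoint ℏ g' (rhoOp ℏ k₁ u) v := by
    intro g'
    set X : ℂ := Complex.exp (Complex.I *
      ((ℏ * (g'.1 + dotR g'.2.1 g'.2.2 / 2) + Real.sqrt ℏ * dotR g'.2.1 v : ℝ) : ℂ)) with hX
    set w' : Fin n → ℝ := v + Real.sqrt ℏ • g'.2.2 with hw'
    have e2 : ∀ h : Hn n, K (h, g')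
        = (k₂ g' * X) * (k₁ h * rhoPoint ℏ h u w') := by
      intro h
      rw [hKdef]
      show k₁ h * k₂ g' * Φ (hmul h g') = _
      have : Φ (hmul h g') = rhoPoint ℏ g' (rhoPoint ℏ h u) v := by
        rw [hΦdef]
        exact rhoPoint_hmul ℏ hℏ h g' u v
      rw [this]
      show k₁ h * k₂ g' * (X * rhoPoint ℏ h u w') = _
      ring
    calc ∫ h : Hn n, K (h, g') = ∫ h : Hn n, (k₂ g' * X) * (k₁ h * rhoPoint ℏ h u w') :=
          integral_congr_ae (Filter.Eventually.of_forall e2)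
      _ = (k₂ g' * X) * ∫ h : Hn n, k₁ h * rhoPoint ℏ h u w' := integral_const_mul _ _
      _ = k₂ g' * rhoPoint ℏ g' (rhoOp ℏ k₁ u) v := by
          show _ = k₂ g' * (X * rhoOp ℏ k₁ u w')
          rw [rhoOp]
          ring
  calc rhoOp ℏ (hconv k₁ k₂) u v = ∫ g : Hn n, ∫ h : Hn n, F (h, g) :=
        integral_congr_ae (Filter.Eventually.of_forall fun g => e1 g)
    _ = ∫ p : Hn n × Hn n, F p := by
        rw [hvol2]
        exact (integral_prod_symm _ intF').symm
    _ = ∫ p : Hn n × Hn n, K (tauEquiv n p) :=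
        (integral_congr_ae (Filter.Eventually.of_forall fun p => hFK p)).symm
    _ = ∫ p : Hn n × Hn n, K p :=
        (measurePreserving_tau n).integral_comp (tauEquiv n).measurableEmbedding K
    _ = ∫ g' : Hn n, ∫ h : Hn n, K (h, g') := by
        rw [hvol2]
        exact integral_prod_symm _ intK
    _ = ∫ g' : Hn n, k₂ g' * rhoPoint ℏ g' (rhoOp ℏ k₁ u) v :=
        integral_congr_ae (Filter.Eventually.of_forall fun g' => hπh g')
    _ = rhoOp ℏ k₂ (rhoOp ℏ k₁ u) v := rfl

end LemB
/-- The image of the p-mechanical bracket `⟦k₁,k₂⟧ = A(k₁ ⋆ k₂ − k₂ ⋆ k₁)` under the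
Schrödinger representation `ρ_ℏ` is `1/(iℏ)` times the operator commutator of the
images of `k₁` and `k₂`. -/
theorem rhoOp_pbracket (n : ℕ) (hn : 1 ≤ n) (ℏ : ℝ) (hℏ : 0 < ℏ)
    (k₁ k₂ : Hn n → ℂ) (h₁ : Integrable k₁) (h₂ : Integrable k₂)
    (hc : Integrable (fun g : Hn n => hconv k₁ k₂ g - hconv k₂ k₁ g))
    (hAc : Integrable (AopH (fun g : Hn n => hconv k₁ k₂ g - hconv k₂ k₁ g)))
    (u : (Fin n → ℝ) → ℂ) (hu_meas : Measurable u) (C : ℝ)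
    (hu_bd : ∀ v, ‖u v‖ ≤ C) (v : Fin n → ℝ) :
    rhoOp ℏ (pbracket k₁ k₂) u v =
      (1 / (Complex.I * ℏ)) *
        (rhoOp ℏ k₁ (rhoOp ℏ k₂ u) v - rhoOp ℏ k₂ (rhoOp ℏ k₁ u) v) := by
  have key := rhoOp_AopH ℏ hℏ (fun g => hconv k₁ k₂ g - hconv k₂ k₁ g) hc hAc
    u hu_meas C hu_bd v
  have hB1 := rhoOp_hconv_aux ℏ hℏ k₁ k₂ h₁ h₂ u hu_meas C hu_bd v
  have hB2 := rhoOp_hconv_aux ℏ hℏ k₂ k₁ h₂ h₁ u hu_meas C hu_bd v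
  have hsub : rhoOp ℏ (fun g => hconv k₁ k₂ g - hconv k₂ k₁ g) u v
      = rhoOp ℏ (hconv k₁ k₂) u v - rhoOp ℏ (hconv k₂ k₁) u v := by
    show ∫ g : Hn n, (hconv k₁ k₂ g - hconv k₂ k₁ g) * rhoPoint ℏ g u v
      = (∫ g : Hn n, hconv k₁ k₂ g * rhoPoint ℏ g u v)
        - ∫ g : Hn n, hconv k₂ k₁ g * rhoPoint ℏ g u v
    rw [← integral_sub hB1.1 hB2.1]
    refine integral_congr_ae (Filter.Eventually.of_forall fun g => ?_)
    ring
  have main : rhoOp ℏ (pbracket k₁ k₂) u v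
      = -(1 / (Complex.I * ℏ)) *
          (rhoOp ℏ k₂ (rhoOp ℏ k₁ u) v - rhoOp ℏ k₁ (rhoOp ℏ k₂ u) v) := by
    show rhoOp ℏ (AopH (fun g => hconv k₁ k₂ g - hconv k₂ k₁ g)) u v = _
    rw [key, hsub, hB1.2, hB2.2]
  rw [main]
  ring
end
end
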